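/- arXiv:2401.11962 — 9 statements merged into one kernel-verified Lean document; each statement's English description precedes it below -/
import Mathlib

section
/- Let H > 0, set R := π/(2√H), and let K : (0, R) → [−H, H] be a continuous function. Then: (i) any two differentiable functions h₁, h₂ : (0, R) → ℝ satisfying h_i′(x) + h_i(x)² + K(x) = 0 and h_i(x) = 1/x + O(x) as x → 0⁺ coincide on (0, R); and (ii) any two C² functions G₁, G₂ : (0, R) → ℝ satisfying G_i″(x) + K(x)·G_i(x) = 0 with G_i(x) → 0 and G_i(x)/x → 1 as x → 0⁺ coincide on (0, R). -/
/-!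
For (i), the difference `w = h₁ - h₂` of two Riccati solutions satisfies
`(w²)' = -2 (h₁ + h₂) w²`. Both `hᵢ` behave like `1/x` near `0`, so `h₁ + h₂` is bounded below on
every `(0, x]`, and Grönwall's inequality started from `w² → 0` at `0⁺` forces `w² = 0`.

For (ii), the difference `u = G₁ - G₂` solves `u'' + K u = 0` with `u(x)/x → 0`. As `u''` is bounded
near `0`, comparing `u'(t)` with the slope of `u` on `[t, 2t]` gives `u' → 0`; then Grönwall applied
to the energy `u² + u'²`, whose derivative is at most `1 + H` times itself, forces `u = 0`.
-/

open Set Filter Topology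

theorem le_zero_of_deriv_le_mul_of_tendsto_nhdsGT {E E' : ℝ → ℝ} {a b C : ℝ} (hab : a < b)
    (hE : ∀ y ∈ Ioc a b, HasDerivAt E (E' y) y) (hE' : ∀ y ∈ Ioc a b, E' y ≤ C * E y)
    (hlim : Tendsto E (𝓝[>] a) (𝓝 0)) : E b ≤ 0 := by
  have hbound : ∀ y ∈ Ioo a b, E b ≤ E y * Real.exp (C * (b - y)) := by
    intro y hy
    have hsub : Icc y b ⊆ Ioc a b := Icc_subset_Ioc hy.1 le_rfl
    rw [← gronwallBound_ε0]
    refine le_gronwallBound_of_liminf_deriv_right_le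
      (fun x hx => (hE x (hsub hx)).continuousAt.continuousWithinAt)
      (fun x hx r hr =>
        (hE x (hsub (Ico_subset_Icc_self hx))).hasDerivWithinAt.liminf_right_slope_le hr)
      le_rfl (fun x hx => by simpa using hE' x (hsub (Ico_subset_Icc_self hx)))
      b ⟨hy.2.le, le_rfl⟩
  have hlim' : Tendsto (fun y => E y * Real.exp (C * (b - y))) (𝓝[>] a) (𝓝 0) := by
    simpa using hlim.mul ((Continuous.tendsto (by fun_prop) a).mono_left nhdsWithin_le_nhds)
  exact ge_of_tendsto hlim' (eventually_of_mem (Ioo_mem_nhdsGT hab) hbound)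

theorem ContinuousOn.bddBelow_image_Ioc {f : ℝ → ℝ} {a b c : ℝ} (hf : ContinuousOn f (Ioc a b))
    (hc : ∀ᶠ y in 𝓝[>] a, c ≤ f y) : BddBelow (f '' Ioc a b) := by
  obtain ⟨a', ha', hfa'⟩ := mem_nhdsGT_iff_exists_Ioo_subset.1 hc
  have hnear : BddBelow (f '' Ioo a a') := ⟨c, by rintro _ ⟨y, hy, rfl⟩; exact hfa' hy⟩
  have hfar : BddBelow (f '' Icc a' b) :=
    isCompact_Icc.bddBelow_image (hf.mono (Icc_subset_Ioc ha' le_rfl))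
  refine (hnear.union hfar).mono ?_
  rw [← image_union]
  refine image_mono fun y hy => ?_
  rcases lt_or_ge y a' with h | h
  exacts [Or.inl ⟨hy.1, h⟩, Or.inr ⟨h, hy.2⟩]

theorem tendsto_sub_inv_of_abs_sub_inv_le {h : ℝ → ℝ} {M δ : ℝ} (hδ : 0 < δ)
    (hh : ∀ x : ℝ, 0 < x → x ≤ δ → |h x - 1 / x| ≤ M * x) :
    Tendsto (fun x => h x - 1 / x) (𝓝[>] 0) (𝓝 0) := by
  have hMx : Tendsto (fun x : ℝ => M * x) (𝓝[>] 0) (𝓝 0) := by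
    simpa using ((continuous_const_mul M).tendsto 0).mono_left nhdsWithin_le_nhds
  exact squeeze_zero_norm' (eventually_of_mem (Ioc_mem_nhdsGT hδ) fun x hx => hh x hx.1 hx.2) hMx

theorem tendsto_atTop_of_tendsto_sub_inv {h : ℝ → ℝ} {c : ℝ}
    (hh : Tendsto (fun x => h x - 1 / x) (𝓝[>] 0) (𝓝 c)) : Tendsto h (𝓝[>] 0) atTop := by
  refine (hh.add_atTop tendsto_inv_nhdsGT_zero).congr fun x => ?_
  rw [one_div, sub_add_cancel]

theorem riccati_eqOn {K h₁ h₂ h₁' h₂' : ℝ → ℝ} {a b c : ℝ}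
    (hd₁ : ∀ x ∈ Ioo a b, HasDerivAt h₁ (h₁' x) x) (hd₂ : ∀ x ∈ Ioo a b, HasDerivAt h₂ (h₂' x) x)
    (he₁ : ∀ x ∈ Ioo a b, h₁' x + h₁ x ^ 2 + K x = 0)
    (he₂ : ∀ x ∈ Ioo a b, h₂' x + h₂ x ^ 2 + K x = 0)
    (hsum : ∀ᶠ x in 𝓝[>] a, c ≤ h₁ x + h₂ x)
    (hlim : Tendsto (fun x => h₁ x - h₂ x) (𝓝[>] a) (𝓝 0)) : EqOn h₁ h₂ (Ioo a b) := by
  intro x hx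
  have hsub : Ioc a x ⊆ Ioo a b := Ioc_subset_Ioo_right hx.2
  obtain ⟨C, hC⟩ := ContinuousOn.bddBelow_image_Ioc (f := fun y => h₁ y + h₂ y)
    (fun y hy => ((hd₁ y (hsub hy)).add (hd₂ y (hsub hy))).continuousAt.continuousWithinAt) hsum
  have hE : (h₁ x - h₂ x) ^ 2 ≤ 0 := by
    refine le_zero_of_deriv_le_mul_of_tendsto_nhdsGT (E := fun y => (h₁ y - h₂ y) ^ 2)
      (E' := fun y => -2 * (h₁ y + h₂ y) * (h₁ y - h₂ y) ^ 2) (C := -2 * C) hx.1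
      (fun y hy => ?_) (fun y hy => ?_) (by simpa using hlim.pow 2)
    · refine (((hd₁ y (hsub hy)).sub (hd₂ y (hsub hy))).pow 2).congr_deriv ?_
      simp only [Pi.sub_apply]
      linear_combination (2 * (h₁ y - h₂ y)) * (he₁ y (hsub hy) - he₂ y (hsub hy))
    · have : C ≤ h₁ y + h₂ y := hC (mem_image_of_mem _ hy)
      nlinarith [sq_nonneg (h₁ y - h₂ y)]
  exact sub_eq_zero.1 (pow_eq_zero_iff two_ne_zero |>.1 (le_antisymm hE (sq_nonneg _)))

theorem abs_deriv_le_abs_slope_add {u u' u'' : ℝ → ℝ} {x h B : ℝ} (hh : 0 < h)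
    (hu : ∀ t ∈ Icc x (x + h), HasDerivAt u (u' t) t)
    (hu' : ∀ t ∈ Icc x (x + h), HasDerivAt u' (u'' t) t)
    (hB : ∀ t ∈ Icc x (x + h), |u'' t| ≤ B) :
    |u' x| ≤ |(u (x + h) - u x) / h| + B * h := by
  have hx : x ∈ Icc x (x + h) := left_mem_Icc.2 (by linarith)
  obtain ⟨ξ, hξ, hslope⟩ := exists_hasDerivAt_eq_slope u u' (by linarith : x < x + h)
    (fun t ht => (hu t ht).continuousAt.continuousWithinAt)
    (fun t ht => hu t (Ioo_subset_Icc_self ht))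
  rw [add_sub_cancel_left] at hslope
  have hlip : |u' ξ - u' x| ≤ B * |ξ - x| :=
    (convex_Icc x (x + h)).norm_image_sub_le_of_norm_hasDerivWithin_le
      (fun t ht => (hu' t ht).hasDerivWithinAt) hB hx (Ioo_subset_Icc_self hξ)
  have hB0 : 0 ≤ B := (abs_nonneg _).trans (hB x hx)
  have hξx : |ξ - x| ≤ h := by rw [abs_of_pos (by linarith [hξ.1])]; linarith [hξ.2]
  rw [← hslope]
  linarith [abs_sub_abs_le_abs_sub (u' x) (u' ξ), abs_sub_comm (u' x) (u' ξ),
    mul_le_mul_of_nonneg_left hξx hB0]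

theorem tendsto_deriv_nhdsGT_zero_of_tendsto_div {u u' u'' : ℝ → ℝ} {B : ℝ}
    (hu : ∀ᶠ t in 𝓝[>] 0, HasDerivAt u (u' t) t)
    (hu' : ∀ᶠ t in 𝓝[>] 0, HasDerivAt u' (u'' t) t)
    (hB : ∀ᶠ t in 𝓝[>] 0, |u'' t| ≤ B)
    (hlim : Tendsto (fun t => u t / t) (𝓝[>] 0) (𝓝 0)) : Tendsto u' (𝓝[>] 0) (𝓝 0) := by
  obtain ⟨r, hr, hsub⟩ := mem_nhdsGT_iff_exists_Ioo_subset.1 ((hu.and hu').and hB)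
  have hdouble : Tendsto (fun t : ℝ => 2 * t) (𝓝[>] 0) (𝓝[>] 0) :=
    tendsto_comap.mono_left (comap_mulLeft_nhdsGT_zero two_pos).ge
  have hslope : Tendsto (fun t => |(u (t + t) - u t) / t| + B * t) (𝓝[>] 0) (𝓝 0) := by
    have h2 := (((hlim.comp hdouble).const_mul 2).sub hlim).abs.add
      ((((continuous_const_mul B).tendsto 0).mono_left nhdsWithin_le_nhds))
    simp only [mul_zero, sub_zero, abs_zero, add_zero] at h2
    refine h2.congr' (eventually_of_mem self_mem_nhdsWithin fun t (ht : 0 < t) => ?_)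
    simp only [Function.comp_apply, two_mul]
    congr 2
    field_simp
  refine squeeze_zero_norm' ?_ hslope
  filter_upwards [Ioo_mem_nhdsGT (half_pos hr)] with t ht
  have hIcc : Icc t (t + t) ⊆ Ioo 0 r := fun s hs =>
    ⟨ht.1.trans_le hs.1, by linarith [hs.2, ht.2]⟩
  exact abs_deriv_le_abs_slope_add ht.1 (fun s hs => (hsub (hIcc hs)).1.1)
    (fun s hs => (hsub (hIcc hs)).1.2) (fun s hs => (hsub (hIcc hs)).2)

theorem jacobi_eqOn_zero {K u u' u'' : ℝ → ℝ} {a b H : ℝ}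
    (hu : ∀ x ∈ Ioo a b, HasDerivAt u (u' x) x) (hu' : ∀ x ∈ Ioo a b, HasDerivAt u' (u'' x) x)
    (he : ∀ x ∈ Ioo a b, u'' x + K x * u x = 0) (hK : ∀ x ∈ Ioo a b, |K x| ≤ H)
    (hlim : Tendsto u (𝓝[>] a) (𝓝 0)) (hlim' : Tendsto u' (𝓝[>] a) (𝓝 0)) :
    EqOn u 0 (Ioo a b) := by
  intro x hx
  have hsub : Ioc a x ⊆ Ioo a b := Ioc_subset_Ioo_right hx.2
  have hE : u x ^ 2 + u' x ^ 2 ≤ 0 := by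
    refine le_zero_of_deriv_le_mul_of_tendsto_nhdsGT (E := fun y => u y ^ 2 + u' y ^ 2)
      (E' := fun y => 2 * u y * u' y * (1 - K y)) (C := 1 + H) hx.1
      (fun y hy => ?_) (fun y hy => ?_) (by simpa using (hlim.pow 2).add (hlim'.pow 2))
    · refine (((hu y (hsub hy)).pow 2).add ((hu' y (hsub hy)).pow 2)).congr_deriv ?_
      linear_combination (2 * u' y) * he y (hsub hy)
    · -- `(1 + H) (u² + u'²) - 2uu'(1 - K) = ((H + K)(u + u')² + (2 + H - K)(u - u')²) / 2`
      obtain ⟨hK₁, hK₂⟩ := abs_le.1 (hK y (hsub hy))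
      nlinarith [mul_nonneg (neg_le_iff_add_nonneg.1 hK₁) (sq_nonneg (u y + u' y)),
        mul_nonneg (by linarith : 0 ≤ 2 + H - K y) (sq_nonneg (u y - u' y))]
  exact pow_eq_zero_iff two_ne_zero |>.1 (by nlinarith [sq_nonneg (u x), sq_nonneg (u' x)])

theorem jacobi_eqOn_zero_of_tendsto_div {K u u' u'' : ℝ → ℝ} {b H : ℝ}
    (hu : ∀ x ∈ Ioo 0 b, HasDerivAt u (u' x) x) (hu' : ∀ x ∈ Ioo 0 b, HasDerivAt u' (u'' x) x)
    (he : ∀ x ∈ Ioo 0 b, u'' x + K x * u x = 0) (hK : ∀ x ∈ Ioo 0 b, |K x| ≤ H)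
    (hlim : Tendsto (fun x => u x / x) (𝓝[>] 0) (𝓝 0)) : EqOn u 0 (Ioo 0 b) := by
  intro x hx
  have hb : Ioo 0 b ∈ 𝓝[>] (0 : ℝ) := Ioo_mem_nhdsGT (hx.1.trans hx.2)
  have hu0 : Tendsto u (𝓝[>] 0) (𝓝 0) := by
    have := ((continuous_id.tendsto 0).mono_left nhdsWithin_le_nhds).mul hlim
    simp only [id, mul_zero] at this
    refine this.congr' (eventually_of_mem self_mem_nhdsWithin fun t (ht : 0 < t) => ?_)
    field_simp
  have hbound : ∀ᶠ t in 𝓝[>] 0, |u'' t| ≤ H := by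
    filter_upwards [hb, hu0.abs.eventually (ge_mem_nhds (abs_zero.trans_lt one_pos))]
      with t ht hut
    rw [show u'' t = -(K t * u t) by linear_combination he t ht, abs_neg, abs_mul]
    nlinarith [hK t ht, abs_nonneg (K t), abs_nonneg (u t)]
  have hu'0 := tendsto_deriv_nhdsGT_zero_of_tendsto_div (eventually_of_mem hb hu)
    (eventually_of_mem hb hu') hbound hlim
  exact jacobi_eqOn_zero hu hu' he hK hu0 hu'0 hx

theorem riccati_jacobi_uniqueness_general (H : ℝ) (R : ℝ)
    (K : ℝ → ℝ)
    (hKbound : ∀ x ∈ Ioo (0:ℝ) R, |K x| ≤ H) :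
    (∀ h₁ h₂ h₁' h₂' : ℝ → ℝ,
      (∀ x ∈ Ioo (0:ℝ) R, HasDerivWithinAt h₁ (h₁' x) (Ioo 0 R) x) →
      (∀ x ∈ Ioo (0:ℝ) R, HasDerivWithinAt h₂ (h₂' x) (Ioo 0 R) x) →
      (∀ x ∈ Ioo (0:ℝ) R, h₁' x + h₁ x ^ 2 + K x = 0) →
      (∀ x ∈ Ioo (0:ℝ) R, h₂' x + h₂ x ^ 2 + K x = 0) →
      (∃ M δ : ℝ, 0 < M ∧ 0 < δ ∧ ∀ x : ℝ, 0 < x → x ≤ δ → |h₁ x - 1 / x| ≤ M * x) →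
      (∃ M δ : ℝ, 0 < M ∧ 0 < δ ∧ ∀ x : ℝ, 0 < x → x ≤ δ → |h₂ x - 1 / x| ≤ M * x) →
      ∀ x ∈ Ioo (0:ℝ) R, h₁ x = h₂ x) ∧
    (∀ G₁ G₂ G₁' G₂' G₁'' G₂'' : ℝ → ℝ,
      (∀ x ∈ Ioo (0:ℝ) R, HasDerivWithinAt G₁ (G₁' x) (Ioo 0 R) x) →
      (∀ x ∈ Ioo (0:ℝ) R, HasDerivWithinAt G₂ (G₂' x) (Ioo 0 R) x) →
      (∀ x ∈ Ioo (0:ℝ) R, HasDerivWithinAt G₁' (G₁'' x) (Ioo 0 R) x) →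
      (∀ x ∈ Ioo (0:ℝ) R, HasDerivWithinAt G₂' (G₂'' x) (Ioo 0 R) x) →
      ContinuousOn G₁'' (Ioo 0 R) → ContinuousOn G₂'' (Ioo 0 R) →
      (∀ x ∈ Ioo (0:ℝ) R, G₁'' x + K x * G₁ x = 0) →
      (∀ x ∈ Ioo (0:ℝ) R, G₂'' x + K x * G₂ x = 0) →
      Filter.Tendsto G₁ (nhdsWithin 0 (Ioi 0)) (nhds 0) →
      Filter.Tendsto G₂ (nhdsWithin 0 (Ioi 0)) (nhds 0) →
      Filter.Tendsto (fun x => G₁ x / x) (nhdsWithin 0 (Ioi 0)) (nhds 1) →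
      Filter.Tendsto (fun x => G₂ x / x) (nhdsWithin 0 (Ioi 0)) (nhds 1) →
      ∀ x ∈ Ioo (0:ℝ) R, G₁ x = G₂ x) := by
  have hasDerivAt_of_within : ∀ {f f' : ℝ → ℝ},
      (∀ x ∈ Ioo (0:ℝ) R, HasDerivWithinAt f (f' x) (Ioo 0 R) x) →
      ∀ x ∈ Ioo (0:ℝ) R, HasDerivAt f (f' x) x :=
    fun hf x hx => (hf x hx).hasDerivAt (Ioo_mem_nhds hx.1 hx.2)
  refine ⟨?_, ?_⟩
  · rintro h₁ h₂ h₁' h₂' hd₁ hd₂ he₁ he₂ ⟨M₁, δ₁, -, hδ₁, hb₁⟩ ⟨M₂, δ₂, -, hδ₂, hb₂⟩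
    have hlim₁ := tendsto_sub_inv_of_abs_sub_inv_le hδ₁ hb₁
    have hlim₂ := tendsto_sub_inv_of_abs_sub_inv_le hδ₂ hb₂
    refine riccati_eqOn (hasDerivAt_of_within hd₁) (hasDerivAt_of_within hd₂) he₁ he₂
      ((tendsto_atTop_of_tendsto_sub_inv hlim₁).atTop_add_atTop
        (tendsto_atTop_of_tendsto_sub_inv hlim₂) |>.eventually_ge_atTop 0) ?_
    simpa using hlim₁.sub hlim₂
  · intro G₁ G₂ G₁' G₂' G₁'' G₂'' hd₁ hd₂ hd₁' hd₂' _ _ he₁ he₂ _ _ hs₁ hs₂ x hx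
    have hu := jacobi_eqOn_zero_of_tendsto_div (u := G₁ - G₂) (u' := G₁' - G₂')
      (fun y hy => (hasDerivAt_of_within hd₁ y hy).sub (hasDerivAt_of_within hd₂ y hy))
      (fun y hy => (hasDerivAt_of_within hd₁' y hy).sub (hasDerivAt_of_within hd₂' y hy))
      (fun y hy => by simp only [Pi.sub_apply]; linear_combination he₁ y hy - he₂ y hy) hKbound
      (by simpa [sub_div] using hs₁.sub hs₂) hx
    simpa [sub_eq_zero] using hu

/-- Uniqueness of solutions to the Riccati and Jacobi equations with the standard
initial behaviour at `0`, on the interval `(0, π/(2√H))`. -/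
theorem riccati_jacobi_uniqueness (H : ℝ) (hH : 0 < H) (R : ℝ)
    (hR : R = Real.pi / (2 * Real.sqrt H))
    (K : ℝ → ℝ) (hKcont : ContinuousOn K (Ioo 0 R))
    (hKbound : ∀ x ∈ Ioo (0:ℝ) R, |K x| ≤ H) :
    (∀ h₁ h₂ h₁' h₂' : ℝ → ℝ,
      (∀ x ∈ Ioo (0:ℝ) R, HasDerivWithinAt h₁ (h₁' x) (Ioo 0 R) x) →
      (∀ x ∈ Ioo (0:ℝ) R, HasDerivWithinAt h₂ (h₂' x) (Ioo 0 R) x) →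
      (∀ x ∈ Ioo (0:ℝ) R, h₁' x + h₁ x ^ 2 + K x = 0) →
      (∀ x ∈ Ioo (0:ℝ) R, h₂' x + h₂ x ^ 2 + K x = 0) →
      (∃ M δ : ℝ, 0 < M ∧ 0 < δ ∧ ∀ x : ℝ, 0 < x → x ≤ δ → |h₁ x - 1 / x| ≤ M * x) →
      (∃ M δ : ℝ, 0 < M ∧ 0 < δ ∧ ∀ x : ℝ, 0 < x → x ≤ δ → |h₂ x - 1 / x| ≤ M * x) →
      ∀ x ∈ Ioo (0:ℝ) R, h₁ x = h₂ x) ∧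
    (∀ G₁ G₂ G₁' G₂' G₁'' G₂'' : ℝ → ℝ,
      (∀ x ∈ Ioo (0:ℝ) R, HasDerivWithinAt G₁ (G₁' x) (Ioo 0 R) x) →
      (∀ x ∈ Ioo (0:ℝ) R, HasDerivWithinAt G₂ (G₂' x) (Ioo 0 R) x) →
      (∀ x ∈ Ioo (0:ℝ) R, HasDerivWithinAt G₁' (G₁'' x) (Ioo 0 R) x) →
      (∀ x ∈ Ioo (0:ℝ) R, HasDerivWithinAt G₂' (G₂'' x) (Ioo 0 R) x) →
      ContinuousOn G₁'' (Ioo 0 R) → ContinuousOn G₂'' (Ioo 0 R) →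
      (∀ x ∈ Ioo (0:ℝ) R, G₁'' x + K x * G₁ x = 0) →
      (∀ x ∈ Ioo (0:ℝ) R, G₂'' x + K x * G₂ x = 0) →
      Filter.Tendsto G₁ (nhdsWithin 0 (Ioi 0)) (nhds 0) →
      Filter.Tendsto G₂ (nhdsWithin 0 (Ioi 0)) (nhds 0) →
      Filter.Tendsto (fun x => G₁ x / x) (nhdsWithin 0 (Ioi 0)) (nhds 1) →
      Filter.Tendsto (fun x => G₂ x / x) (nhdsWithin 0 (Ioi 0)) (nhds 1) →
      ∀ x ∈ Ioo (0:ℝ) R, G₁ x = G₂ x) :=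
  riccati_jacobi_uniqueness_general H R K hKbound
end

section
/- Let H, R > 0 with H·R² ≤ π², let K : (0, R] → ℝ be continuous with |K(x)| ≤ H for all x, and let G : (0, R] → ℝ be a C² function satisfying the Jacobi equation G″(r) + K(r)·G(r) = 0 with G(r) → 0 and G(r)/r → 1 as r → 0⁺. Then sin_H(r) ≤ G(r) ≤ sin_{−H}(r) for all r ∈ (0, R]. Moreover, if R ≤ π/(2√H), then r/2 ≤ G(r) ≤ 2r for all r ∈ (0, R]. -/
open Set

/-- `sin_K`: the solution of the constant-curvature Jacobi equation. -/
noncomputable def sinK (K r : ℝ) : ℝ :=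
  if K < 0 then Real.sinh (Real.sqrt (-K) * r) / Real.sqrt (-K)
  else if K = 0 then r
  else Real.sin (Real.sqrt K * r) / Real.sqrt K

/-!
Sturm comparison with the model solutions `S = sinK κ`, `κ = ±H`, of `S'' + κ S = 0`,
`S(0) = 0`, `S'(0) = 1`. The Wronskian `W = G' S - G S'` satisfies `W' = (κ - K) G S`, so while
`G ≥ 0` it is nondecreasing for `κ = H` and nonincreasing for `κ = -H`; moreover
`(G / S)' = W / S²`. Since `G'` is not known to have a limit at `0`, the sign of `W` is obtained
by contradiction: otherwise `G / S` would blow up like `1 / r`, whereas it tends to `1`. Hence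
`G / S` is monotone with limit `1` at `0⁺`, which gives both bounds. Positivity of `G` on
`(0, R)` comes from the lower comparison applied up to a first zero of `G`. The linear bounds
follow from Jordan's inequality and `sinh x ≤ 2 x` on `[0, π/2]`.
-/

open Filter Topology Real

noncomputable def cosK (κ r : ℝ) : ℝ :=
  if κ < 0 then cosh (√(-κ) * r)
  else if κ = 0 then 1
  else cos (√κ * r)

section SinK

variable {κ r : ℝ}

theorem sinK_of_pos (hκ : 0 < κ) (r : ℝ) : sinK κ r = sin (√κ * r) / √κ := by
  simp [sinK, hκ.not_gt, hκ.ne']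

theorem sinK_of_neg (hκ : κ < 0) (r : ℝ) : sinK κ r = sinh (√(-κ) * r) / √(-κ) := by
  simp [sinK, hκ]

theorem hasDerivAt_sinK (κ r : ℝ) : HasDerivAt (sinK κ) (cosK κ r) r := by
  show HasDerivAt (fun x => sinK κ x) (cosK κ r) r
  rcases lt_trichotomy κ 0 with hκ | rfl | hκ
  · have hc : √(-κ) ≠ 0 := (sqrt_pos.2 (neg_pos.2 hκ)).ne'
    simp only [sinK, cosK, hκ, if_true]
    exact (((hasDerivAt_id' r).const_mul √(-κ)).sinh.div_const √(-κ)).congr_deriv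
      (by field_simp)
  · simpa [sinK, cosK] using hasDerivAt_id' r
  · have hc : √κ ≠ 0 := (sqrt_pos.2 hκ).ne'
    simp only [sinK, cosK, hκ.not_gt, hκ.ne', if_false]
    exact (((hasDerivAt_id' r).const_mul √κ).sin.div_const √κ).congr_deriv (by field_simp)

theorem hasDerivAt_cosK (κ r : ℝ) : HasDerivAt (cosK κ) (-(κ * sinK κ r)) r := by
  show HasDerivAt (fun x => cosK κ x) (-(κ * sinK κ r)) r
  rcases lt_trichotomy κ 0 with hκ | rfl | hκ
  · have hc : 0 < √(-κ) := sqrt_pos.2 (neg_pos.2 hκ)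
    simp only [sinK, cosK, hκ, if_true]
    refine (((hasDerivAt_id' r).const_mul √(-κ)).cosh).congr_deriv ?_
    field_simp
    rw [sq_sqrt (neg_nonneg.2 hκ.le)]
    ring
  · simpa [cosK] using hasDerivAt_const r (1 : ℝ)
  · have hc : 0 < √κ := sqrt_pos.2 hκ
    simp only [sinK, cosK, hκ.not_gt, hκ.ne', if_false]
    refine (((hasDerivAt_id' r).const_mul √κ).cos).congr_deriv ?_
    field_simp
    rw [sq_sqrt hκ.le]
    ring

theorem continuous_sinK (κ : ℝ) : Continuous (sinK κ) :=
  continuous_iff_continuousAt.2 fun r => (hasDerivAt_sinK κ r).continuousAt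

theorem tendsto_sinK_div_self (κ : ℝ) :
    Tendsto (fun r => sinK κ r / r) (𝓝[>] 0) (𝓝 1) := by
  have h := hasDerivAt_iff_tendsto_slope.1 (hasDerivAt_sinK κ 0)
  have h0 : sinK κ 0 = 0 := by simp [sinK]
  have h1 : cosK κ 0 = 1 := by simp [cosK]
  rw [h1] at h
  refine (h.mono_left (nhdsWithin_mono 0 fun x hx => ne_of_gt hx)).congr fun x => ?_
  simp [slope_def_field, h0]

theorem sinK_pos (hr : 0 < r) (hκ : κ * r ^ 2 < π ^ 2) : 0 < sinK κ r := by
  rcases lt_trichotomy κ 0 with hκ' | rfl | hκ'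
  · rw [sinK_of_neg hκ']
    have hc : 0 < √(-κ) := sqrt_pos.2 (neg_pos.2 hκ')
    exact div_pos (sinh_pos_iff.2 (mul_pos hc hr)) hc
  · simpa [sinK] using hr
  · rw [sinK_of_pos hκ']
    have hc : 0 < √κ := sqrt_pos.2 hκ'
    refine div_pos (sin_pos_of_pos_of_lt_pi (mul_pos hc hr) ?_) hc
    have : (√κ * r) ^ 2 < π ^ 2 := by rwa [mul_pow, sq_sqrt hκ'.le]
    exact lt_of_pow_lt_pow_left₀ 2 pi_pos.le this

end SinK

theorem monotoneOn_Ioo_of_hasDerivAt_nonneg {f f' : ℝ → ℝ} {a b : ℝ}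
    (hf : ∀ x ∈ Ioo a b, HasDerivAt f (f' x) x) (hf' : ∀ x ∈ Ioo a b, 0 ≤ f' x) :
    MonotoneOn f (Ioo a b) :=
  monotoneOn_of_hasDerivWithinAt_nonneg (convex_Ioo a b)
    (fun x hx => (hf x hx).continuousAt.continuousWithinAt)
    (fun x hx => (hf x (interior_subset hx)).hasDerivWithinAt)
    (fun x hx => hf' x (interior_subset hx))

theorem antitoneOn_Ioo_of_hasDerivAt_nonpos {f f' : ℝ → ℝ} {a b : ℝ}
    (hf : ∀ x ∈ Ioo a b, HasDerivAt f (f' x) x) (hf' : ∀ x ∈ Ioo a b, f' x ≤ 0) :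
    AntitoneOn f (Ioo a b) :=
  antitoneOn_of_hasDerivWithinAt_nonpos (convex_Ioo a b)
    (fun x hx => (hf x hx).continuousAt.continuousWithinAt)
    (fun x hx => (hf x (interior_subset hx)).hasDerivWithinAt)
    (fun x hx => hf' x (interior_subset hx))

theorem le_of_forall_Ioo_le {f g : ℝ → ℝ} {a b : ℝ} (hab : a < b)
    (hf : ContinuousWithinAt f (Ioo a b) b) (hg : ContinuousWithinAt g (Ioo a b) b)
    (h : ∀ x ∈ Ioo a b, f x ≤ g x) : f b ≤ g b :=
  hf.closure_le (by simp [closure_Ioo hab.ne, hab.le]) hg h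

section Wronskian

variable {f f' s s' : ℝ → ℝ} {b L : ℝ}

/- If the Wronskian `W = f' s - f s'` were `≤ -δ < 0` near `0`, then, as `s x ≤ 2 x` there,
`(f / s)' = W / s² ≤ -δ / (4 x²)`, and `f / s` would blow up like `δ / (4 x)` at `0⁺`. -/
theorem wronskian_nonneg_of_monotoneOn
    (hf : ∀ x ∈ Ioo 0 b, HasDerivAt f (f' x) x) (hs : ∀ x ∈ Ioo 0 b, HasDerivAt s (s' x) x)
    (hs_pos : ∀ x ∈ Ioo 0 b, 0 < s x) (hs_div : Tendsto (fun x => s x / x) (𝓝[>] 0) (𝓝 1))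
    (hq : Tendsto (fun x => f x / s x) (𝓝[>] 0) (𝓝 L))
    (hW : MonotoneOn (fun x => f' x * s x - f x * s' x) (Ioo 0 b)) :
    ∀ x ∈ Ioo 0 b, 0 ≤ f' x * s x - f x * s' x := by
  intro x₀ hx₀
  by_contra! hneg
  set δ := -(f' x₀ * s x₀ - f x₀ * s' x₀) with hδ_def
  have hδ : 0 < δ := by linarith
  have hs_le : ∀ᶠ x in 𝓝[>] 0, s x ≤ 2 * x := by
    filter_upwards [hs_div.eventually (gt_mem_nhds one_lt_two), self_mem_nhdsWithin]
      with x hx hx0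
    exact ((div_lt_iff₀ hx0).1 hx).le
  obtain ⟨ε, hε, hεs⟩ := mem_nhdsGT_iff_exists_Ioo_subset.1 hs_le
  set c := min x₀ ε
  have hc : 0 < c := lt_min hx₀.1 hε
  have hsub : Ioo 0 c ⊆ Ioo 0 b := fun x hx =>
    ⟨hx.1, hx.2.trans_le ((min_le_left _ _).trans hx₀.2.le)⟩
  have hv : AntitoneOn (fun x => f x / s x - δ / 4 * x⁻¹) (Ioo 0 c) := by
    refine antitoneOn_Ioo_of_hasDerivAt_nonpos (fun x hx => ((hf x (hsub hx)).div (hs x (hsub hx))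
      (hs_pos x (hsub hx)).ne').sub ((hasDerivAt_inv hx.1.ne').const_mul (δ / 4))) ?_
    intro x hx
    have hsx := hs_pos x (hsub hx)
    have hs2 : s x ≤ 2 * x := hεs ⟨hx.1, hx.2.trans_le (min_le_right _ _)⟩
    have hWx : f' x * s x - f x * s' x ≤ -δ := by
      have := hW (hsub hx) hx₀ (hx.2.le.trans (min_le_left _ _))
      simp only at this
      linarith
    have h₁ : (f' x * s x - f x * s' x) / s x ^ 2 ≤ -δ / s x ^ 2 :=
      div_le_div_of_nonneg_right hWx (sq_nonneg _)
    have h₂ : δ / 4 * (x ^ 2)⁻¹ ≤ δ / s x ^ 2 := by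
      calc δ / 4 * (x ^ 2)⁻¹ = δ / (2 * x) ^ 2 := by field_simp; ring
        _ ≤ δ / s x ^ 2 :=
          div_le_div_of_nonneg_left hδ.le (by positivity) (pow_le_pow_left₀ hsx.le hs2 2)
    rw [neg_div] at h₁
    linarith
  have hblow : Tendsto (fun x => f x / s x) (𝓝[>] 0) atTop := by
    refine tendsto_atTop_mono' _ ?_ (tendsto_atTop_add_const_left _
      ((fun x => f x / s x - δ / 4 * x⁻¹) (c / 2))
      (tendsto_inv_nhdsGT_zero.const_mul_atTop (by positivity : 0 < δ / 4)))
    filter_upwards [Ioc_mem_nhdsGT (half_pos hc)] with x hx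
    have := hv ⟨hx.1, hx.2.trans_lt (half_lt_self hc)⟩ ⟨half_pos hc, half_lt_self hc⟩ hx.2
    linarith
  exact not_tendsto_nhds_of_tendsto_atTop hblow L hq

theorem le_div_of_monotoneOn_wronskian
    (hf : ∀ x ∈ Ioo 0 b, HasDerivAt f (f' x) x) (hs : ∀ x ∈ Ioo 0 b, HasDerivAt s (s' x) x)
    (hs_pos : ∀ x ∈ Ioo 0 b, 0 < s x) (hs_div : Tendsto (fun x => s x / x) (𝓝[>] 0) (𝓝 1))
    (hq : Tendsto (fun x => f x / s x) (𝓝[>] 0) (𝓝 L))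
    (hW : MonotoneOn (fun x => f' x * s x - f x * s' x) (Ioo 0 b)) :
    ∀ x ∈ Ioo 0 b, L ≤ f x / s x := by
  have hW₀ := wronskian_nonneg_of_monotoneOn hf hs hs_pos hs_div hq hW
  have hmono : MonotoneOn (fun x => f x / s x) (Ioo 0 b) :=
    monotoneOn_Ioo_of_hasDerivAt_nonneg (fun x hx => (hf x hx).div (hs x hx) (hs_pos x hx).ne')
      fun x hx => div_nonneg (hW₀ x hx) (sq_nonneg _)
  intro x hx
  refine le_of_tendsto hq ?_
  filter_upwards [Ioo_mem_nhdsGT hx.1] with y hy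
  exact hmono ⟨hy.1, hy.2.trans hx.2⟩ hx hy.2.le

theorem div_le_of_antitoneOn_wronskian
    (hf : ∀ x ∈ Ioo 0 b, HasDerivAt f (f' x) x) (hs : ∀ x ∈ Ioo 0 b, HasDerivAt s (s' x) x)
    (hs_pos : ∀ x ∈ Ioo 0 b, 0 < s x) (hs_div : Tendsto (fun x => s x / x) (𝓝[>] 0) (𝓝 1))
    (hq : Tendsto (fun x => f x / s x) (𝓝[>] 0) (𝓝 L))
    (hW : AntitoneOn (fun x => f' x * s x - f x * s' x) (Ioo 0 b)) :
    ∀ x ∈ Ioo 0 b, f x / s x ≤ L := by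
  have h := le_div_of_monotoneOn_wronskian (f := -f) (f' := -f') (L := -L)
    (fun x hx => (hf x hx).neg) hs hs_pos hs_div
    (by simpa only [Pi.neg_apply, neg_div] using hq.neg)
    (by convert hW.neg using 1; ext x; simp only [Pi.neg_apply]; ring)
  intro x hx
  simpa only [Pi.neg_apply, neg_div, neg_le_neg_iff] using h x hx

end Wronskian

section Jacobi

variable {κ b : ℝ} {K G G' : ℝ → ℝ}

theorem hasDerivAt_jacobi_wronskian {x : ℝ} (hG : HasDerivAt G (G' x) x)
    (hG' : HasDerivAt G' (-(K x * G x)) x) :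
    HasDerivAt (fun r => G' r * sinK κ r - G r * cosK κ r) ((κ - K x) * G x * sinK κ x) x :=
  ((hG'.mul (hasDerivAt_sinK κ x)).sub (hG.mul (hasDerivAt_cosK κ x))).congr_deriv (by ring)

theorem tendsto_div_sinK (hG1 : Tendsto (fun r => G r / r) (𝓝[>] 0) (𝓝 1)) :
    Tendsto (fun r => G r / sinK κ r) (𝓝[>] 0) (𝓝 1) := by
  have h := hG1.div (tendsto_sinK_div_self κ) one_ne_zero
  rw [div_one] at h
  refine h.congr' ?_
  filter_upwards [self_mem_nhdsWithin] with r hr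
  exact div_div_div_cancel_right₀ (ne_of_gt hr) _ _

variable (hG : ∀ x ∈ Ioo 0 b, HasDerivAt G (G' x) x)
  (hG' : ∀ x ∈ Ioo 0 b, HasDerivAt G' (-(K x * G x)) x)
  (hsin : ∀ x ∈ Ioo 0 b, 0 < sinK κ x) (hG1 : Tendsto (fun r => G r / r) (𝓝[>] 0) (𝓝 1))
include hG hG' hsin hG1

theorem sinK_le_of_jacobi (hG_nonneg : ∀ x ∈ Ioo 0 b, 0 ≤ G x)
    (hK : ∀ x ∈ Ioo 0 b, K x ≤ κ) : ∀ x ∈ Ioo 0 b, sinK κ x ≤ G x := by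
  have hW := monotoneOn_Ioo_of_hasDerivAt_nonneg
    (fun x hx => hasDerivAt_jacobi_wronskian (κ := κ) (hG x hx) (hG' x hx))
    fun x hx => mul_nonneg (mul_nonneg (sub_nonneg.2 (hK x hx)) (hG_nonneg x hx)) (hsin x hx).le
  intro x hx
  have h := le_div_of_monotoneOn_wronskian hG (fun x _ => hasDerivAt_sinK κ x) hsin
    (tendsto_sinK_div_self κ) (tendsto_div_sinK hG1) hW x hx
  rwa [one_le_div (hsin x hx)] at h

theorem le_sinK_of_jacobi (hG_nonneg : ∀ x ∈ Ioo 0 b, 0 ≤ G x)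
    (hK : ∀ x ∈ Ioo 0 b, κ ≤ K x) : ∀ x ∈ Ioo 0 b, G x ≤ sinK κ x := by
  have hW := antitoneOn_Ioo_of_hasDerivAt_nonpos
    (fun x hx => hasDerivAt_jacobi_wronskian (κ := κ) (hG x hx) (hG' x hx))
    fun x hx => mul_nonpos_of_nonpos_of_nonneg
      (mul_nonpos_of_nonpos_of_nonneg (sub_nonpos.2 (hK x hx)) (hG_nonneg x hx)) (hsin x hx).le
  intro x hx
  have h := div_le_of_antitoneOn_wronskian hG (fun x _ => hasDerivAt_sinK κ x) hsin
    (tendsto_sinK_div_self κ) (tendsto_div_sinK hG1) hW x hx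
  rwa [div_le_one (hsin x hx)] at h

theorem pos_of_jacobi (hK : ∀ x ∈ Ioo 0 b, K x ≤ κ) : ∀ x ∈ Ioo 0 b, 0 < G x := by
  intro x₀ hx₀
  by_contra! hG₀
  obtain ⟨ε, hε, hεG⟩ : ∃ ε > 0, Ioo 0 ε ⊆ {x | 0 < G x} := by
    refine mem_nhdsGT_iff_exists_Ioo_subset.1 ?_
    filter_upwards [hG1.eventually (lt_mem_nhds one_pos), self_mem_nhdsWithin] with x hx hx0
    exact (div_pos_iff_of_pos_right hx0).1 hx
  set a := min ε x₀ / 2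
  have ha : 0 < a := half_pos (lt_min hε hx₀.1)
  have haε : a < ε := (half_lt_self (lt_min hε hx₀.1)).trans_le (min_le_left _ _)
  have hGc : ContinuousOn G (Icc a x₀) := fun x hx =>
    (hG x ⟨ha.trans_le hx.1, hx.2.trans_lt hx₀.2⟩).continuousAt.continuousWithinAt
  have hZ : IsCompact (Icc a x₀ ∩ G ⁻¹' Iic 0) := isCompact_Icc.of_isClosed_subset
    (hGc.preimage_isClosed_of_isClosed isClosed_Icc isClosed_Iic) inter_subset_left
  have hax₀ : a ≤ x₀ := (half_le_self (lt_min hε hx₀.1).le).trans (min_le_right _ _)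
  obtain ⟨r₁, ⟨⟨har₁, hr₁x₀⟩, hGr₁⟩, hr₁_least⟩ := hZ.exists_isLeast ⟨x₀, ⟨hax₀, le_rfl⟩, hG₀⟩
  have hr₁ : 0 < r₁ := ha.trans_le har₁
  have hr₁b : r₁ ∈ Ioo 0 b := ⟨hr₁, hr₁x₀.trans_lt hx₀.2⟩
  have hsub : Ioo 0 r₁ ⊆ Ioo 0 b := fun x hx => ⟨hx.1, hx.2.trans hr₁b.2⟩
  have hpos : ∀ x ∈ Ioo 0 r₁, 0 < G x := by
    intro x hx
    by_cases hxa : x < a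
    · exact hεG ⟨hx.1, hxa.trans haε⟩
    · by_contra! hGx
      exact (hr₁_least ⟨⟨not_lt.1 hxa, hx.2.le.trans hr₁x₀⟩, hGx⟩).not_gt hx.2
  have hcomp := sinK_le_of_jacobi (fun x hx => hG x (hsub hx)) (fun x hx => hG' x (hsub hx))
    (fun x hx => hsin x (hsub hx)) hG1 (fun x hx => (hpos x hx).le) (fun x hx => hK x (hsub hx))
  have hle : sinK κ r₁ ≤ G r₁ := le_of_forall_Ioo_le hr₁ (continuous_sinK κ).continuousWithinAt
    (hG r₁ hr₁b).continuousAt.continuousWithinAt hcomp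
  exact (hsin r₁ hr₁b).not_ge (hle.trans hGr₁)

theorem mem_Icc_sinK_of_jacobi (hK : ∀ x ∈ Ioo 0 b, |K x| ≤ κ) :
    ∀ x ∈ Ioo 0 b, G x ∈ Icc (sinK κ x) (sinK (-κ) x) := by
  have hK' : ∀ x ∈ Ioo 0 b, -κ ≤ K x ∧ K x ≤ κ := fun x hx => abs_le.1 (hK x hx)
  have hpos := pos_of_jacobi hG hG' hsin hG1 fun x hx => (hK' x hx).2
  have hsinh : ∀ x ∈ Ioo 0 b, 0 < sinK (-κ) x := fun x hx => sinK_pos hx.1 <| by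
    nlinarith [pi_pos, sq_nonneg x, (abs_nonneg _).trans (hK x hx)]
  intro x hx
  exact ⟨sinK_le_of_jacobi hG hG' hsin hG1 (fun y hy => (hpos y hy).le)
      (fun y hy => (hK' y hy).2) x hx,
    le_sinK_of_jacobi hG hG' hsinh hG1 (fun y hy => (hpos y hy).le)
      (fun y hy => (hK' y hy).1) x hx⟩

end Jacobi

theorem Real.sinh_le_mul_cosh {x : ℝ} (hx : 0 ≤ x) : sinh x ≤ x * cosh x := by
  refine hasSum_le (fun n => ?_) (hasSum_sinh x) ((hasSum_cosh x).mul_left x)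
  rw [pow_succ, mul_comm, mul_div_assoc]
  gcongr
  omega

/- `sinh x = 2 sinh (x/2) cosh (x/2) ≤ x cosh² (x/2) ≤ x exp (x²/4)`, and `π²/16 < log 2`. -/
theorem Real.sinh_le_two_mul {x : ℝ} (hx : 0 ≤ x) (hxπ : x ≤ π / 2) : sinh x ≤ 2 * x := by
  have hcosh : cosh (x / 2) ^ 2 ≤ 2 := by
    have hexp : exp ((x / 2) ^ 2 / 2) ^ 2 ≤ 2 := by
      have hx2 : x ^ 2 ≤ (π / 2) ^ 2 := pow_le_pow_left₀ hx hxπ 2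
      calc exp ((x / 2) ^ 2 / 2) ^ 2 = exp (x ^ 2 / 4) := by rw [← exp_nat_mul]; ring_nf
        _ ≤ exp (log 2) := exp_le_exp.2 (by nlinarith [pi_lt_d2, pi_pos, log_two_gt_d9])
        _ = 2 := exp_log two_pos
    exact (pow_le_pow_left₀ (cosh_pos _).le (cosh_le_exp_half_sq _) 2).trans hexp
  calc sinh x = 2 * sinh (x / 2) * cosh (x / 2) := by rw [← sinh_two_mul]; ring_nf
    _ ≤ 2 * (x / 2 * cosh (x / 2)) * cosh (x / 2) := by
        gcongr
        exact sinh_le_mul_cosh (by positivity)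
    _ = x * cosh (x / 2) ^ 2 := by ring
    _ ≤ x * 2 := by gcongr
    _ = 2 * x := mul_comm _ _

theorem half_le_sinK {κ r : ℝ} (hκ : 0 < κ) (hr : 0 ≤ r) (h : √κ * r ≤ π / 2) :
    r / 2 ≤ sinK κ r := by
  have hc : 0 < √κ := sqrt_pos.2 hκ
  rw [sinK_of_pos hκ, le_div_iff₀ hc]
  calc r / 2 * √κ ≤ 2 / π * (√κ * r) := by
        rw [show 2 / π * (√κ * r) = r / 2 * √κ * (4 / π) by field_simp; ring]
        exact le_mul_of_one_le_right (by positivity) ((one_le_div pi_pos).2 pi_le_four)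
    _ ≤ sin (√κ * r) := mul_le_sin (by positivity) h

theorem sinK_neg_le_two_mul {κ r : ℝ} (hκ : 0 < κ) (hr : 0 ≤ r) (h : √κ * r ≤ π / 2) :
    sinK (-κ) r ≤ 2 * r := by
  have hc : 0 < √κ := sqrt_pos.2 hκ
  rw [sinK_of_neg (neg_lt_zero.2 hκ), neg_neg, div_le_iff₀ hc]
  calc sinh (√κ * r) ≤ 2 * (√κ * r) := sinh_le_two_mul (by positivity) h
    _ = 2 * r * √κ := by ring

theorem jacobi_comparison_general (H R : ℝ) (hH : 0 < H)
    (hHR : H * R ^ 2 ≤ Real.pi ^ 2)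
    (K G G' : ℝ → ℝ)
    (hKb : ∀ x ∈ Ioc (0:ℝ) R, |K x| ≤ H)
    (hG' : ∀ r ∈ Ioc (0:ℝ) R, HasDerivWithinAt G (G' r) (Ioc 0 R) r)
    (hG'' : ∀ r ∈ Ioc (0:ℝ) R, HasDerivWithinAt G' (-(K r * G r)) (Ioc 0 R) r)
    (h1 : Filter.Tendsto (fun r => G r / r) (nhdsWithin 0 (Ioi 0)) (nhds 1)) :
    (∀ r ∈ Ioc (0:ℝ) R, sinK H r ≤ G r ∧ G r ≤ sinK (-H) r) ∧
    (R ≤ Real.pi / (2 * Real.sqrt H) →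
      ∀ r ∈ Ioc (0:ℝ) R, r / 2 ≤ G r ∧ G r ≤ 2 * r) := by
  have hGd : ∀ x ∈ Ioo 0 R, HasDerivAt G (G' x) x := fun x hx =>
    (hG' x (Ioo_subset_Ioc_self hx)).hasDerivAt (Ioc_mem_nhds hx.1 hx.2)
  have hGd' : ∀ x ∈ Ioo 0 R, HasDerivAt G' (-(K x * G x)) x := fun x hx =>
    (hG'' x (Ioo_subset_Ioc_self hx)).hasDerivAt (Ioc_mem_nhds hx.1 hx.2)
  have hsin : ∀ x ∈ Ioo 0 R, 0 < sinK H x := fun x hx => sinK_pos hx.1 <| by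
    nlinarith [mul_lt_mul_of_pos_left (pow_lt_pow_left₀ hx.2 hx.1.le two_ne_zero) hH]
  have hmem := mem_Icc_sinK_of_jacobi hGd hGd' hsin h1 fun x hx =>
    hKb x (Ioo_subset_Ioc_self hx)
  have hbounds : ∀ r ∈ Ioc 0 R, sinK H r ≤ G r ∧ G r ≤ sinK (-H) r := by
    rintro r ⟨hr, hrR⟩
    rcases hrR.lt_or_eq with hrR | rfl
    · exact hmem r ⟨hr, hrR⟩
    have hGc : ContinuousWithinAt G (Ioo 0 r) r :=
      (hG' r ⟨hr, le_rfl⟩).continuousWithinAt.mono Ioo_subset_Ioc_self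
    exact ⟨le_of_forall_Ioo_le hr (continuous_sinK H).continuousWithinAt hGc
        fun x hx => (hmem x hx).1,
      le_of_forall_Ioo_le hr hGc (continuous_sinK (-H)).continuousWithinAt
        fun x hx => (hmem x hx).2⟩
  refine ⟨hbounds, fun hRH r hr => ?_⟩
  have hr' : √H * r ≤ π / 2 := calc
    √H * r ≤ √H * (π / (2 * √H)) := by gcongr; exact hr.2.trans hRH
    _ = π / 2 := by field_simp [(sqrt_pos.2 hH).ne']
  exact ⟨(half_le_sinK hH hr.1.le hr').trans (hbounds r hr).1,
    (hbounds r hr).2.trans (sinK_neg_le_two_mul hH hr.1.le hr')⟩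

/-- Comparison principle for the Jacobi equation (Corollary 2.6 of the paper). -/
theorem jacobi_comparison (H R : ℝ) (hH : 0 < H) (hR : 0 < R)
    (hHR : H * R ^ 2 ≤ Real.pi ^ 2)
    (K G G' : ℝ → ℝ)
    (hKc : ContinuousOn K (Ioc 0 R))
    (hKb : ∀ x ∈ Ioc (0:ℝ) R, |K x| ≤ H)
    (hG' : ∀ r ∈ Ioc (0:ℝ) R, HasDerivWithinAt G (G' r) (Ioc 0 R) r)
    (hG'' : ∀ r ∈ Ioc (0:ℝ) R, HasDerivWithinAt G' (-(K r * G r)) (Ioc 0 R) r)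
    (h0 : Filter.Tendsto G (nhdsWithin 0 (Ioi 0)) (nhds 0))
    (h1 : Filter.Tendsto (fun r => G r / r) (nhdsWithin 0 (Ioi 0)) (nhds 1)) :
    (∀ r ∈ Ioc (0:ℝ) R, sinK H r ≤ G r ∧ G r ≤ sinK (-H) r) ∧
    (R ≤ Real.pi / (2 * Real.sqrt H) →
      ∀ r ∈ Ioc (0:ℝ) R, r / 2 ≤ G r ∧ G r ≤ 2 * r) :=
  jacobi_comparison_general H R hH hHR K G G' hKb hG' hG'' h1
end

section
/- There exists a constant C > 0 depending only on nothing (universal) such that the following holds. Let T₁, T₂ > 0 and 0 < α ≤ 1, let I ⊆ ℝ be an interval with |I| ≤ (T₁/T₂)^{1/α}, and let f be a real-valued function defined on a closed subset S ⊆ I. Suppose that for all distinct x, y, z ∈ S: |f(x) − f(y)| ≤ T₁·|x − y| and |(f(x) − f(y))/(x − y) − (f(y) − f(z))/(y − z)| ≤ T₂·(diam{x, y, z})^α. Then f admits an extension F : I → ℝ with ‖F′‖_∞ ≤ C·T₁ and ‖F′‖_α ≤ C·T₂. -/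
/-!
For `s ∈ S` the divided-difference hypothesis makes the intervals `slope f s t ± T₂ |t - s| ^ α`
(`t ∈ S \ {s}`) and `[-T₁, T₁]` pairwise intersecting, so they have a common point `g s`, and
`(f, g)` is a `C^{1,α}` Whitney jet on `S`. The jet is extended by the cubic Hermite interpolant on
each bounded gap `(p, q)` of `S` and by a tangent line on the unbounded components of `Sᶜ`. On a
gap the interpolant stays close to the Taylor data at both endpoints, within multiples of the
defects `|slope f p q - g p|, |slope f p q - g q| ≤ B (q - p) ^ α`; this yields differentiability
at the points of `S` and the Hölder bound, and `|I| ≤ (T₁ / T₂) ^ (1 / α)` bounds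
`T₂ (q - p) ^ α` by `T₁`, which gives the sup bound.
-/

open Set Filter Topology

theorem Real.rpow_mul_div_le_rpow {α u h : ℝ} (hα : α ≤ 1) (hu : 0 ≤ u) (huh : u ≤ h) :
    h ^ α * (u / h) ≤ u ^ α := by
  rcases hu.eq_or_lt with rfl | hu
  · simpa using Real.rpow_nonneg le_rfl α
  have hh : 0 < h := hu.trans_le huh
  calc h ^ α * (u / h) ≤ h ^ α * (u / h) ^ α := by
        gcongr
        simpa using
          Real.rpow_le_rpow_of_exponent_ge (div_pos hu hh) (div_le_one_of_le₀ huh hh.le) hα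
    _ = u ^ α := by rw [← Real.mul_rpow hh.le (by positivity), mul_div_cancel₀ _ hh.ne']

theorem hasDerivAt_of_abs_sub_le {F : ℝ → ℝ} {x c K α : ℝ} (hα : 0 < α)
    (h : ∀ y, |F y - (F x + c * (y - x))| ≤ K * |y - x| ^ α * |y - x|) : HasDerivAt F c x := by
  have hK : Tendsto (fun y => K * |y - x| ^ α) (𝓝 x) (𝓝 0) := by
    have : Continuous fun y => K * |y - x| ^ α :=
      continuous_const.mul ((continuous_sub_right x).abs.rpow_const fun _ => Or.inr hα.le)
    simpa [Real.zero_rpow hα.ne'] using this.tendsto x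
  rw [hasDerivAt_iff_isLittleO, Asymptotics.isLittleO_iff]
  intro ε hε
  filter_upwards [hK.eventually (gt_mem_nhds hε)] with y hy
  calc ‖F y - F x - (y - x) • c‖ = |F y - (F x + c * (y - x))| := by
        rw [Real.norm_eq_abs, smul_eq_mul]; ring_nf
    _ ≤ K * |y - x| ^ α * |y - x| := h y
    _ ≤ ε * ‖y - x‖ := by rw [Real.norm_eq_abs]; gcongr

section SlopeBounds

variable {S : Set ℝ} {f : ℝ → ℝ} {α T₁ T₂ : ℝ}

theorem abs_slope_le_of_lipschitz
    (hlip : ∀ x ∈ S, ∀ y ∈ S, x ≠ y → |f x - f y| ≤ T₁ * |x - y|) {s t : ℝ} (hs : s ∈ S)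
    (ht : t ∈ S) (hts : t ≠ s) : |slope f s t| ≤ T₁ := by
  rw [slope_def_field, abs_div, div_le_iff₀ (abs_pos.2 (sub_ne_zero.2 hts))]
  exact hlip t ht s hs hts

theorem abs_slope_sub_slope_le (hα0 : 0 ≤ α) (hα1 : α ≤ 1) (hT₂ : 0 ≤ T₂)
    (hsecond : ∀ x ∈ S, ∀ y ∈ S, ∀ z ∈ S, x ≠ y → y ≠ z → x ≠ z →
      |(f x - f y) / (x - y) - (f y - f z) / (y - z)| ≤ T₂ * Metric.diam ({x, y, z} : Set ℝ) ^ α)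
    {s u t : ℝ} (hs : s ∈ S) (hu : u ∈ S) (ht : t ∈ S) (hus : u ≠ s) (hts : t ≠ s) :
    |slope f s u - slope f s t| ≤ T₂ * |u - s| ^ α + T₂ * |t - s| ^ α := by
  rcases eq_or_ne u t with rfl | hut
  · simp only [sub_self, abs_zero]; positivity
  have hdiam : Metric.diam ({u, s, t} : Set ℝ) ≤ |u - s| + |t - s| := by
    simp only [Metric.diam_triple, Real.dist_eq]
    have := abs_sub_le u s t
    rw [abs_sub_comm s t] at *
    refine max_le (max_le ?_ ?_) ?_ <;> linarith [abs_nonneg (u - s), abs_nonneg (t - s)]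
  calc |slope f s u - slope f s t|
      = |(f u - f s) / (u - s) - (f s - f t) / (s - t)| := by
        rw [slope_comm f s t, slope_def_field, slope_def_field]
    _ ≤ T₂ * Metric.diam ({u, s, t} : Set ℝ) ^ α := hsecond u hu s hs t ht hus hts.symm hut
    _ ≤ T₂ * (|u - s| + |t - s|) ^ α := by gcongr
    _ ≤ T₂ * (|u - s| ^ α + |t - s| ^ α) := by
        gcongr; exact Real.rpow_add_le_add_rpow (abs_nonneg _) (abs_nonneg _) hα0 hα1
    _ = _ := mul_add _ _ _

theorem exists_abs_sub_slope_le (hα0 : 0 ≤ α) (hα1 : α ≤ 1) (hT₁ : 0 ≤ T₁) (hT₂ : 0 ≤ T₂)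
    (hlip : ∀ x ∈ S, ∀ y ∈ S, x ≠ y → |f x - f y| ≤ T₁ * |x - y|)
    (hsecond : ∀ x ∈ S, ∀ y ∈ S, ∀ z ∈ S, x ≠ y → y ≠ z → x ≠ z →
      |(f x - f y) / (x - y) - (f y - f z) / (y - z)| ≤ T₂ * Metric.diam ({x, y, z} : Set ℝ) ^ α)
    {s : ℝ} (hs : s ∈ S) :
    ∃ L, |L| ≤ T₁ ∧ ∀ t ∈ S, t ≠ s → |L - slope f s t| ≤ T₂ * |t - s| ^ α := by
  set r : ℝ → ℝ := fun t => T₂ * |t - s| ^ α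
  have hr : ∀ t, 0 ≤ r t := fun t => by positivity
  have hslope : ∀ t ∈ S \ {s}, |slope f s t| ≤ T₁ := fun t ht =>
    abs_slope_le_of_lipschitz hlip hs ht.1 ht.2
  obtain ⟨L, hlo, hhi⟩ := exists_between_of_forall_le
    (s := insert (-T₁) ((fun t => slope f s t - r t) '' (S \ {s})))
    (t := insert T₁ ((fun t => slope f s t + r t) '' (S \ {s})))
    (insert_nonempty _ _) (insert_nonempty _ _) (by
      simp only [forall_mem_insert, forall_mem_image]
      refine ⟨⟨by linarith, fun t ht => ?_⟩, fun u hu => ⟨?_, fun t ht => ?_⟩⟩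
      · linarith [neg_abs_le (slope f s t), hslope t ht, hr t]
      · linarith [le_abs_self (slope f s u), hslope u hu, hr u]
      · linarith [le_abs_self (slope f s u - slope f s t),
          abs_slope_sub_slope_le hα0 hα1 hT₂ hsecond hs hu.1 ht.1 hu.2 ht.2])
  simp only [mem_upperBounds, mem_lowerBounds, forall_mem_insert, forall_mem_image] at hlo hhi
  refine ⟨L, abs_le.2 ⟨hlo.1, hhi.1⟩, fun t ht hts => abs_le.2 ?_⟩
  constructor <;> linarith [hlo.2 ⟨ht, hts⟩, hhi.2 ⟨ht, hts⟩]

end SlopeBounds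

structure IsHolderJet (S : Set ℝ) (f g : ℝ → ℝ) (α B : ℝ) : Prop where
  taylor : ∀ s ∈ S, ∀ t ∈ S, |f t - (f s + g s * (t - s))| ≤ B * |t - s| ^ α * |t - s|
  holder : ∀ s ∈ S, ∀ t ∈ S, |g s - g t| ≤ B * |s - t| ^ α

theorem exists_isHolderJet {S : Set ℝ} {f : ℝ → ℝ} {α T₁ T₂ : ℝ} (hα0 : 0 ≤ α) (hα1 : α ≤ 1)
    (hT₁ : 0 ≤ T₁) (hT₂ : 0 ≤ T₂)
    (hlip : ∀ x ∈ S, ∀ y ∈ S, x ≠ y → |f x - f y| ≤ T₁ * |x - y|)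
    (hsecond : ∀ x ∈ S, ∀ y ∈ S, ∀ z ∈ S, x ≠ y → y ≠ z → x ≠ z →
      |(f x - f y) / (x - y) - (f y - f z) / (y - z)| ≤ T₂ * Metric.diam ({x, y, z} : Set ℝ) ^ α) :
    ∃ g : ℝ → ℝ, (∀ s ∈ S, |g s| ≤ T₁) ∧ IsHolderJet S f g α (2 * T₂) := by
  choose! g hgT₁ hg using fun s (hs : s ∈ S) =>
    exists_abs_sub_slope_le hα0 hα1 hT₁ hT₂ hlip hsecond hs
  refine ⟨g, hgT₁, ⟨fun s hs t ht => ?_, fun s hs t ht => ?_⟩⟩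
  · rcases eq_or_ne t s with rfl | hts
    · simp
    have hslope : f t - (f s + g s * (t - s)) = (slope f s t - g s) * (t - s) := by
      rw [slope_def_field]; field_simp [sub_ne_zero.2 hts]; ring
    rw [hslope, abs_mul, abs_sub_comm]
    have := hg s hs t ht hts
    gcongr
    linarith [show 0 ≤ T₂ * |t - s| ^ α by positivity]
  · rcases eq_or_ne s t with rfl | hst
    · simp only [sub_self, abs_zero]; positivity
    calc |g s - g t| ≤ |g s - slope f s t| + |slope f t s - g t| := by
          rw [slope_comm]; exact abs_sub_le _ _ _
      _ ≤ T₂ * |t - s| ^ α + T₂ * |s - t| ^ α := by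
          rw [abs_sub_comm (slope f t s)]
          exact add_le_add (hg s hs t ht hst.symm) (hg t ht s hs hst)
      _ = 2 * T₂ * |s - t| ^ α := by rw [abs_sub_comm t s]; ring

theorem IsHolderJet.abs_slope_sub_le {S : Set ℝ} {f g : ℝ → ℝ} {α B s t : ℝ}
    (hjet : IsHolderJet S f g α B) (hs : s ∈ S) (ht : t ∈ S) (hst : s ≠ t) :
    |slope f s t - g s| ≤ B * |t - s| ^ α := by
  have hts : 0 < |t - s| := abs_pos.2 (sub_ne_zero.2 hst.symm)
  have hslope : slope f s t - g s = (f t - (f s + g s * (t - s))) / (t - s) := by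
    rw [slope_def_field]; field_simp [sub_ne_zero.2 hst.symm]; ring
  rw [hslope, abs_div, div_le_iff₀ hts]
  exact hjet.taylor s hs t ht

theorem IsHolderJet.abs_sub_taylor_le_of_mem_uIcc {S : Set ℝ} {f g : ℝ → ℝ} {α B x w y r K : ℝ}
    (hjet : IsHolderJet S f g α B) (hB : 0 ≤ B) (hα0 : 0 ≤ α) (hx : x ∈ S) (hw : w ∈ S)
    (hwxy : w ∈ uIcc x y) (hK : 0 ≤ K)
    (hr : |r - (f w + g w * (y - w))| ≤ K * |y - w| ^ α * |y - w|) :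
    |r - (f x + g x * (y - x))| ≤ (K + 2 * B) * |y - x| ^ α * |y - x| := by
  have hwx : |w - x| ≤ |y - x| := abs_sub_left_of_mem_uIcc hwxy
  have hyw : |y - w| ≤ |y - x| := abs_sub_right_of_mem_uIcc hwxy
  have hwxα : |w - x| ^ α ≤ |y - x| ^ α := by gcongr
  have hywα : |y - w| ^ α ≤ |y - x| ^ α := by gcongr
  calc |r - (f x + g x * (y - x))|
      = |(r - (f w + g w * (y - w))) + (f w - (f x + g x * (w - x))) + (g w - g x) * (y - w)| := by
        ring_nf
    _ ≤ |r - (f w + g w * (y - w))| + |f w - (f x + g x * (w - x))| + |g w - g x| * |y - w| := by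
        rw [← abs_mul]; exact abs_add_three _ _ _
    _ ≤ K * |y - w| ^ α * |y - w| + B * |w - x| ^ α * |w - x| + B * |w - x| ^ α * |y - w| := by
        gcongr
        · exact hjet.taylor x hx w hw
        · exact hjet.holder w hw x hx
    _ ≤ K * |y - x| ^ α * |y - x| + B * |y - x| ^ α * |y - x| + B * |y - x| ^ α * |y - x| := by
        gcongr
    _ = (K + 2 * B) * |y - x| ^ α * |y - x| := by ring

/-- The cubic Hermite interpolant of the jet `(f, g)` between `p` and `q`, written through the
defects of `g p` and `g q` from the chord slope. For `p = q` it degenerates (`x / 0 = 0`,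
`slope f p p = 0`) to the tangent line `f p + g p * (x - p)`. -/
noncomputable def hermite (f g : ℝ → ℝ) (p q x : ℝ) : ℝ :=
  let t := (x - p) / (q - p)
  f p + g p * (x - p) + (x - p) * ((slope f p q - g p) * (2 * t - t ^ 2)
    + (slope f p q - g q) * (t - t ^ 2))

noncomputable def hermiteDeriv (f g : ℝ → ℝ) (p q x : ℝ) : ℝ :=
  let t := (x - p) / (q - p)
  g p + (slope f p q - g p) * (4 * t - 3 * t ^ 2) + (slope f p q - g q) * (2 * t - 3 * t ^ 2)

section Hermite

variable {f g : ℝ → ℝ} {p q x y E : ℝ}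

theorem hasDerivAt_hermite : HasDerivAt (hermite f g p q) (hermiteDeriv f g p q x) x := by
  have hx : HasDerivAt (fun y => y - p) 1 x := (hasDerivAt_id x).sub_const p
  have ht : HasDerivAt (fun y => (y - p) / (q - p)) (1 / (q - p)) x := hx.div_const _
  have := ((hx.const_mul (g p)).const_add (f p)).add (hx.mul
    (((ht.const_mul 2).sub (ht.pow 2)).const_mul (slope f p q - g p) |>.add
      ((ht.sub (ht.pow 2)).const_mul (slope f p q - g q))))
  refine this.congr_deriv ?_
  simp only [hermiteDeriv, Pi.add_apply, Pi.sub_apply, Pi.pow_apply, Nat.cast_ofNat]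
  ring

@[simp] theorem hermite_self : hermite f g p p x = f p + g p * (x - p) := by
  simp [hermite]

@[simp] theorem hermiteDeriv_self : hermiteDeriv f g p p x = g p := by
  simp [hermiteDeriv]

theorem abs_mul_add_mul_le {a b c d E : ℝ} (ha : |a| ≤ E) (hb : |b| ≤ E) :
    |a * c + b * d| ≤ E * (|c| + |d|) := by
  calc |a * c + b * d| ≤ |a| * |c| + |b| * |d| := by
        rw [← abs_mul, ← abs_mul]; exact abs_add_le _ _
    _ ≤ E * |c| + E * |d| := by gcongr
    _ = E * (|c| + |d|) := by ring

theorem sub_div_sub_mem_Icc (hpq : p < q) (hx : x ∈ Icc p q) : (x - p) / (q - p) ∈ Icc 0 1 :=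
  ⟨div_nonneg (by linarith [hx.1]) (by linarith),
    div_le_one_of_le₀ (by linarith [hx.2]) (by linarith)⟩

variable (hpq : p < q) (hp : |slope f p q - g p| ≤ E) (hq : |slope f p q - g q| ≤ E)
  (hx : x ∈ Icc p q)
include hpq hp hq hx

theorem abs_hermiteDeriv_sub_left_le :
    |hermiteDeriv f g p q x - g p| ≤ 6 * E * ((x - p) / (q - p)) := by
  obtain ⟨ht0, ht1⟩ := sub_div_sub_mem_Icc hpq hx
  set t := (x - p) / (q - p)
  have hE : 0 ≤ E := (abs_nonneg _).trans hp
  calc |hermiteDeriv f g p q x - g p|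
      = |(slope f p q - g p) * (4 * t - 3 * t ^ 2)
          + (slope f p q - g q) * (2 * t - 3 * t ^ 2)| := by
        simp only [hermiteDeriv, t]; ring_nf
    _ ≤ E * (|4 * t - 3 * t ^ 2| + |2 * t - 3 * t ^ 2|) := abs_mul_add_mul_le hp hq
    _ ≤ E * (4 * t + 2 * t) := by
        gcongr <;> exact abs_le.2 ⟨by nlinarith, by nlinarith⟩
    _ = 6 * E * t := by ring

theorem abs_hermiteDeriv_sub_right_le :
    |hermiteDeriv f g p q x - g q| ≤ 6 * E * ((q - x) / (q - p)) := by
  obtain ⟨ht0, ht1⟩ := sub_div_sub_mem_Icc hpq hx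
  have hu : (q - x) / (q - p) = 1 - (x - p) / (q - p) := by field_simp [(sub_pos.2 hpq).ne']; ring
  rw [hu]
  set t := (x - p) / (q - p)
  have hE : 0 ≤ E := (abs_nonneg _).trans hp
  calc |hermiteDeriv f g p q x - g q|
      = |(slope f p q - g p) * ((3 * t - 1) * (1 - t))
          + (slope f p q - g q) * ((3 * t + 1) * (1 - t))| := by
        simp only [hermiteDeriv, t]; ring_nf
    _ ≤ E * (|(3 * t - 1) * (1 - t)| + |(3 * t + 1) * (1 - t)|) := abs_mul_add_mul_le hp hq
    _ ≤ E * (2 * (1 - t) + 4 * (1 - t)) := by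
        gcongr <;> exact abs_le.2 ⟨by nlinarith, by nlinarith⟩
    _ = 6 * E * (1 - t) := by ring

theorem abs_hermite_sub_left_le :
    |hermite f g p q x - (f p + g p * (x - p))| ≤ 3 * E * ((x - p) / (q - p)) * (x - p) := by
  obtain ⟨ht0, ht1⟩ := sub_div_sub_mem_Icc hpq hx
  have hxp : 0 ≤ x - p := sub_nonneg.2 hx.1
  set t := (x - p) / (q - p)
  have hE : 0 ≤ E := (abs_nonneg _).trans hp
  have hid : hermite f g p q x - (f p + g p * (x - p)) =
      (x - p) * ((slope f p q - g p) * (2 * t - t ^ 2) + (slope f p q - g q) * (t - t ^ 2)) := by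
    simp only [hermite, t]; ring
  rw [hid, abs_mul, abs_of_nonneg hxp]
  calc (x - p) * |(slope f p q - g p) * (2 * t - t ^ 2) + (slope f p q - g q) * (t - t ^ 2)|
      ≤ (x - p) * (E * (|2 * t - t ^ 2| + |t - t ^ 2|)) := by
        gcongr; exact abs_mul_add_mul_le hp hq
    _ ≤ (x - p) * (E * (2 * t + t)) := by
        gcongr <;> exact abs_le.2 ⟨by nlinarith, by nlinarith⟩
    _ = 3 * E * t * (x - p) := by ring

theorem abs_hermite_sub_right_le :
    |hermite f g p q x - (f q + g q * (x - q))| ≤ 3 * E * ((q - x) / (q - p)) * (q - x) := by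
  obtain ⟨ht0, ht1⟩ := sub_div_sub_mem_Icc hpq hx
  have hu : (q - x) / (q - p) = 1 - (x - p) / (q - p) := by field_simp [(sub_pos.2 hpq).ne']; ring
  have hqx : 0 ≤ q - x := sub_nonneg.2 hx.2
  have hid : hermite f g p q x - (f q + g q * (x - q)) = -((q - x) * ((slope f p q - g p)
      * ((x - p) / (q - p) * (1 - (x - p) / (q - p))) + (slope f p q - g q)
      * ((1 + (x - p) / (q - p)) * (1 - (x - p) / (q - p))))) := by
    simp only [hermite, slope_def_field]; field_simp [(sub_pos.2 hpq).ne']; ring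
  rw [hid, hu, abs_neg, abs_mul, abs_of_nonneg hqx]
  set t := (x - p) / (q - p)
  have hE : 0 ≤ E := (abs_nonneg _).trans hp
  calc (q - x) * |(slope f p q - g p) * (t * (1 - t)) + (slope f p q - g q) * ((1 + t) * (1 - t))|
      ≤ (q - x) * (E * (|t * (1 - t)| + |(1 + t) * (1 - t)|)) := by
        gcongr; exact abs_mul_add_mul_le hp hq
    _ ≤ (q - x) * (E * ((1 - t) + 2 * (1 - t))) := by
        gcongr <;> exact abs_le.2 ⟨by nlinarith, by nlinarith⟩
    _ = 3 * E * (1 - t) * (q - x) := by ring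

theorem abs_hermiteDeriv_sub_hermiteDeriv_le (hy : y ∈ Icc p q) :
    |hermiteDeriv f g p q x - hermiteDeriv f g p q y| ≤ 8 * E * (|x - y| / (q - p)) := by
  obtain ⟨ht0, ht1⟩ := sub_div_sub_mem_Icc hpq hx
  obtain ⟨hs0, hs1⟩ := sub_div_sub_mem_Icc hpq hy
  have hd : |x - y| / (q - p) = |(x - p) / (q - p) - (y - p) / (q - p)| := by
    rw [← sub_div, abs_div, abs_of_pos (sub_pos.2 hpq)]; ring_nf
  rw [hd]
  set t := (x - p) / (q - p)
  set s := (y - p) / (q - p)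
  have hE : 0 ≤ E := (abs_nonneg _).trans hp
  calc |hermiteDeriv f g p q x - hermiteDeriv f g p q y|
      = |(slope f p q - g p) * ((4 - 3 * (t + s)) * (t - s))
          + (slope f p q - g q) * ((2 - 3 * (t + s)) * (t - s))| := by
        simp only [hermiteDeriv, t, s]; ring_nf
    _ ≤ E * (|(4 - 3 * (t + s)) * (t - s)| + |(2 - 3 * (t + s)) * (t - s)|) :=
        abs_mul_add_mul_le hp hq
    _ ≤ E * (4 * |t - s| + 4 * |t - s|) := by
        rw [abs_mul, abs_mul]
        gcongr <;> exact abs_le.2 ⟨by linarith, by linarith⟩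
    _ = 8 * E * |t - s| := by ring

end Hermite

open Classical in
/-- The nearest points of `S` to the left and to the right of `x`. Left of `S` both are `sInf S`,
right of `S` both are `sSup S`, so that `whitneyExtension` is a tangent line there. -/
noncomputable def leftAnchor (S : Set ℝ) (x : ℝ) : ℝ :=
  if (S ∩ Iic x).Nonempty then sSup (S ∩ Iic x) else sInf S

open Classical in
noncomputable def rightAnchor (S : Set ℝ) (x : ℝ) : ℝ :=
  if (S ∩ Ici x).Nonempty then sInf (S ∩ Ici x) else sSup S

section Anchors

variable {S : Set ℝ} {s x y : ℝ}

theorem leftAnchor_mem_Icc (hs : s ∈ S) (hsx : s ≤ x) : leftAnchor S x ∈ Icc s x := by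
  have hne : (S ∩ Iic x).Nonempty := ⟨s, hs, hsx⟩
  rw [leftAnchor, if_pos hne]
  exact ⟨le_csSup ⟨x, fun _ h => h.2⟩ ⟨hs, hsx⟩, csSup_le hne fun _ h => h.2⟩

theorem rightAnchor_mem_Icc (hs : s ∈ S) (hxs : x ≤ s) : rightAnchor S x ∈ Icc x s := by
  have hne : (S ∩ Ici x).Nonempty := ⟨s, hs, hxs⟩
  rw [rightAnchor, if_pos hne]
  exact ⟨le_csInf hne fun _ h => h.2, csInf_le ⟨x, fun _ h => h.2⟩ ⟨hs, hxs⟩⟩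

theorem leftAnchor_of_mem (hx : x ∈ S) : leftAnchor S x = x := by
  simpa using leftAnchor_mem_Icc hx le_rfl

theorem rightAnchor_of_mem (hx : x ∈ S) : rightAnchor S x = x := by
  simpa using rightAnchor_mem_Icc hx le_rfl

theorem leftAnchor_mem (hS : IsClosed S) (hne : S.Nonempty) (x : ℝ) : leftAnchor S x ∈ S := by
  unfold leftAnchor
  split_ifs with h
  · exact ((hS.inter isClosed_Iic).csSup_mem h ⟨x, fun _ h => h.2⟩).1
  · exact hS.csInf_mem hne ⟨x, fun s hs => le_of_not_ge fun hsx => h ⟨s, hs, hsx⟩⟩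

theorem rightAnchor_mem (hS : IsClosed S) (hne : S.Nonempty) (x : ℝ) : rightAnchor S x ∈ S := by
  unfold rightAnchor
  split_ifs with h
  · exact ((hS.inter isClosed_Ici).csInf_mem h ⟨x, fun _ h => h.2⟩).1
  · exact hS.csSup_mem hne ⟨x, fun s hs => le_of_not_ge fun hsx => h ⟨s, hs, hsx⟩⟩

theorem leftAnchor_eq_rightAnchor_or :
    leftAnchor S x = rightAnchor S x ∨
      leftAnchor S x < rightAnchor S x ∧ x ∈ Icc (leftAnchor S x) (rightAnchor S x) := by
  by_cases hl : (S ∩ Iic x).Nonempty <;> by_cases hr : (S ∩ Ici x).Nonempty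
  · obtain ⟨s, hs, hsx⟩ := hl
    obtain ⟨t, ht, hxt⟩ := hr
    have hx : x ∈ Icc (leftAnchor S x) (rightAnchor S x) :=
      ⟨(leftAnchor_mem_Icc hs hsx).2, (rightAnchor_mem_Icc ht hxt).1⟩
    rcases (hx.1.trans hx.2).eq_or_lt with h | h
    exacts [Or.inl h, Or.inr ⟨h, hx⟩]
  · have : S ∩ Iic x = S :=
      inter_eq_left.2 fun s hs => mem_Iic.2 (le_of_not_ge fun hxs => hr ⟨s, hs, hxs⟩)
    exact Or.inl (by rw [leftAnchor, rightAnchor, if_pos hl, if_neg hr, this])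
  · have : S ∩ Ici x = S :=
      inter_eq_left.2 fun s hs => mem_Ici.2 (le_of_not_ge fun hsx => hl ⟨s, hs, hsx⟩)
    exact Or.inl (by rw [leftAnchor, rightAnchor, if_neg hl, if_pos hr, this])
  · have : S = ∅ := eq_empty_of_forall_notMem fun s hs => (le_total s x).elim
      (fun hsx => hl ⟨s, hs, hsx⟩) (fun hxs => hr ⟨s, hs, hxs⟩)
    simp [leftAnchor, rightAnchor, this]

theorem inter_Iic_subset_of_disjoint (h : Disjoint (uIcc x y) S) : S ∩ Iic x ⊆ S ∩ Iic y :=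
  fun _ ⟨hs, hsx⟩ => ⟨hs, le_of_not_gt fun hys =>
    h.notMem_of_mem_right hs (mem_uIcc.2 (Or.inr ⟨hys.le, hsx⟩))⟩

theorem inter_Ici_subset_of_disjoint (h : Disjoint (uIcc x y) S) : S ∩ Ici x ⊆ S ∩ Ici y :=
  fun _ ⟨hs, hxs⟩ => ⟨hs, le_of_not_gt fun hsy =>
    h.notMem_of_mem_right hs (mem_uIcc.2 (Or.inl ⟨hxs, hsy.le⟩))⟩

theorem leftAnchor_eq_of_disjoint (h : Disjoint (uIcc x y) S) :
    leftAnchor S x = leftAnchor S y := by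
  have h' : Disjoint (uIcc y x) S := uIcc_comm x y ▸ h
  rw [leftAnchor, leftAnchor,
    (inter_Iic_subset_of_disjoint h).antisymm (inter_Iic_subset_of_disjoint h')]

theorem rightAnchor_eq_of_disjoint (h : Disjoint (uIcc x y) S) :
    rightAnchor S x = rightAnchor S y := by
  have h' : Disjoint (uIcc y x) S := uIcc_comm x y ▸ h
  rw [rightAnchor, rightAnchor,
    (inter_Ici_subset_of_disjoint h).antisymm (inter_Ici_subset_of_disjoint h')]

theorem eventually_disjoint_uIcc (hS : IsClosed S) (hx : x ∉ S) :
    ∀ᶠ y in 𝓝 x, Disjoint (uIcc x y) S := by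
  obtain ⟨ε, hε, hball⟩ := Metric.isOpen_iff.1 hS.isOpen_compl x hx
  filter_upwards [Metric.ball_mem_nhds x hε] with y hy
  refine subset_compl_iff_disjoint_right.1 (Subset.trans ?_ hball)
  rw [Real.ball_eq_Ioo] at hy ⊢
  exact ordConnected_Ioo.uIcc_subset (by constructor <;> linarith) hy

end Anchors

noncomputable def whitneyExtension (S : Set ℝ) (f g : ℝ → ℝ) (x : ℝ) : ℝ :=
  hermite f g (leftAnchor S x) (rightAnchor S x) x

noncomputable def whitneyExtensionDeriv (S : Set ℝ) (f g : ℝ → ℝ) (x : ℝ) : ℝ :=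
  hermiteDeriv f g (leftAnchor S x) (rightAnchor S x) x

section Extension

variable {S : Set ℝ} {f g : ℝ → ℝ} {α B x y : ℝ}

theorem whitneyExtension_of_mem (hx : x ∈ S) : whitneyExtension S f g x = f x := by
  simp [whitneyExtension, leftAnchor_of_mem hx, rightAnchor_of_mem hx]

theorem whitneyExtensionDeriv_of_mem (hx : x ∈ S) : whitneyExtensionDeriv S f g x = g x := by
  simp [whitneyExtensionDeriv, leftAnchor_of_mem hx, rightAnchor_of_mem hx]

variable (hS : IsClosed S) (hjet : IsHolderJet S f g α B) (hB : 0 ≤ B) (hα1 : α ≤ 1)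
include hS hjet

theorem IsHolderJet.abs_slope_sub_anchor_le (h : leftAnchor S x < rightAnchor S x) :
    |slope f (leftAnchor S x) (rightAnchor S x) - g (leftAnchor S x)| ≤
        B * (rightAnchor S x - leftAnchor S x) ^ α ∧
      |slope f (leftAnchor S x) (rightAnchor S x) - g (rightAnchor S x)| ≤
        B * (rightAnchor S x - leftAnchor S x) ^ α := by
  have hne : S.Nonempty :=
    nonempty_iff_ne_empty.2 fun hempty => h.ne (by simp [leftAnchor, rightAnchor, hempty])
  have ha := leftAnchor_mem hS hne x
  have hb := rightAnchor_mem hS hne x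
  constructor
  · simpa [abs_of_pos (sub_pos.2 h)] using hjet.abs_slope_sub_le ha hb h.ne
  · simpa [slope_comm f (leftAnchor S x), abs_of_neg (sub_neg.2 h)] using
      hjet.abs_slope_sub_le hb ha h.ne'

include hB hα1

theorem abs_whitneyExtensionDeriv_sub_leftAnchor_le :
    |whitneyExtensionDeriv S f g x - g (leftAnchor S x)| ≤ 6 * B * |x - leftAnchor S x| ^ α := by
  rcases leftAnchor_eq_rightAnchor_or (S := S) (x := x) with h | ⟨hlt, hx⟩
  · simp only [whitneyExtensionDeriv, h, hermiteDeriv_self, sub_self, abs_zero]; positivity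
  obtain ⟨ha, hb⟩ := hjet.abs_slope_sub_anchor_le hS hlt
  set a := leftAnchor S x
  set b := rightAnchor S x
  rw [abs_of_nonneg (sub_nonneg.2 hx.1)]
  calc |whitneyExtensionDeriv S f g x - g a| ≤ 6 * (B * (b - a) ^ α) * ((x - a) / (b - a)) :=
        abs_hermiteDeriv_sub_left_le hlt ha hb hx
    _ = 6 * B * ((b - a) ^ α * ((x - a) / (b - a))) := by ring
    _ ≤ 6 * B * (x - a) ^ α := by
        gcongr; exact Real.rpow_mul_div_le_rpow hα1 (sub_nonneg.2 hx.1) (by linarith [hx.2])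

theorem abs_whitneyExtensionDeriv_sub_rightAnchor_le :
    |whitneyExtensionDeriv S f g x - g (rightAnchor S x)| ≤ 6 * B * |rightAnchor S x - x| ^ α := by
  rcases leftAnchor_eq_rightAnchor_or (S := S) (x := x) with h | ⟨hlt, hx⟩
  · simp only [whitneyExtensionDeriv, h, hermiteDeriv_self, sub_self, abs_zero]; positivity
  obtain ⟨ha, hb⟩ := hjet.abs_slope_sub_anchor_le hS hlt
  set a := leftAnchor S x
  set b := rightAnchor S x
  rw [abs_of_nonneg (sub_nonneg.2 hx.2)]
  calc |whitneyExtensionDeriv S f g x - g b| ≤ 6 * (B * (b - a) ^ α) * ((b - x) / (b - a)) :=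
        abs_hermiteDeriv_sub_right_le hlt ha hb hx
    _ = 6 * B * ((b - a) ^ α * ((b - x) / (b - a))) := by ring
    _ ≤ 6 * B * (b - x) ^ α := by
        gcongr; exact Real.rpow_mul_div_le_rpow hα1 (sub_nonneg.2 hx.2) (by linarith [hx.1])

theorem abs_whitneyExtension_sub_taylor_leftAnchor_le :
    |whitneyExtension S f g x - (f (leftAnchor S x) + g (leftAnchor S x) * (x - leftAnchor S x))|
      ≤ 3 * B * |x - leftAnchor S x| ^ α * |x - leftAnchor S x| := by
  rcases leftAnchor_eq_rightAnchor_or (S := S) (x := x) with h | ⟨hlt, hx⟩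
  · simp only [whitneyExtension, h, hermite_self, sub_self, abs_zero]; positivity
  obtain ⟨ha, hb⟩ := hjet.abs_slope_sub_anchor_le hS hlt
  set a := leftAnchor S x
  set b := rightAnchor S x
  rw [abs_of_nonneg (sub_nonneg.2 hx.1)]
  calc |whitneyExtension S f g x - (f a + g a * (x - a))|
      ≤ 3 * (B * (b - a) ^ α) * ((x - a) / (b - a)) * (x - a) :=
        abs_hermite_sub_left_le hlt ha hb hx
    _ = 3 * B * ((b - a) ^ α * ((x - a) / (b - a))) * (x - a) := by ring
    _ ≤ 3 * B * (x - a) ^ α * (x - a) := by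
        gcongr
        · linarith [hx.1]
        · exact Real.rpow_mul_div_le_rpow hα1 (sub_nonneg.2 hx.1) (by linarith [hx.2])

theorem abs_whitneyExtension_sub_taylor_rightAnchor_le :
    |whitneyExtension S f g x - (f (rightAnchor S x) + g (rightAnchor S x) * (x - rightAnchor S x))|
      ≤ 3 * B * |x - rightAnchor S x| ^ α * |x - rightAnchor S x| := by
  rcases leftAnchor_eq_rightAnchor_or (S := S) (x := x) with h | ⟨hlt, hx⟩
  · simp only [whitneyExtension, ← h, hermite_self, sub_self, abs_zero]; positivity
  obtain ⟨ha, hb⟩ := hjet.abs_slope_sub_anchor_le hS hlt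
  set a := leftAnchor S x
  set b := rightAnchor S x
  rw [abs_sub_comm x b, abs_of_nonneg (sub_nonneg.2 hx.2)]
  calc |whitneyExtension S f g x - (f b + g b * (x - b))|
      ≤ 3 * (B * (b - a) ^ α) * ((b - x) / (b - a)) * (b - x) :=
        abs_hermite_sub_right_le hlt ha hb hx
    _ = 3 * B * ((b - a) ^ α * ((b - x) / (b - a))) * (b - x) := by ring
    _ ≤ 3 * B * (b - x) ^ α * (b - x) := by
        gcongr
        · linarith [hx.2]
        · exact Real.rpow_mul_div_le_rpow hα1 (sub_nonneg.2 hx.2) (by linarith [hx.1])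

theorem abs_whitneyExtension_sub_taylor_le (hα0 : 0 ≤ α) (hx : x ∈ S) (y : ℝ) :
    |whitneyExtension S f g y - (f x + g x * (y - x))| ≤ 5 * B * |y - x| ^ α * |y - x| := by
  have hne : S.Nonempty := ⟨x, hx⟩
  rcases le_total x y with hxy | hyx
  · have := hjet.abs_sub_taylor_le_of_mem_uIcc hB hα0 hx (leftAnchor_mem hS hne y)
      (Icc_subset_uIcc (leftAnchor_mem_Icc hx hxy)) (by positivity)
      (abs_whitneyExtension_sub_taylor_leftAnchor_le hS hjet hB hα1)
    linarith
  · have := hjet.abs_sub_taylor_le_of_mem_uIcc hB hα0 hx (rightAnchor_mem hS hne _)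
      (Icc_subset_uIcc' (rightAnchor_mem_Icc hx hyx)) (by positivity)
      (abs_whitneyExtension_sub_taylor_rightAnchor_le hS hjet hB hα1)
    linarith

theorem hasDerivAt_whitneyExtension (hα0 : 0 < α) (x : ℝ) :
    HasDerivAt (whitneyExtension S f g) (whitneyExtensionDeriv S f g x) x := by
  by_cases hx : x ∈ S
  · rw [whitneyExtensionDeriv_of_mem hx]
    refine hasDerivAt_of_abs_sub_le (K := 5 * B) hα0 fun y => ?_
    rw [whitneyExtension_of_mem hx]
    exact abs_whitneyExtension_sub_taylor_le hS hjet hB hα1 hα0.le hx y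
  · have hev : whitneyExtension S f g =ᶠ[𝓝 x] hermite f g (leftAnchor S x) (rightAnchor S x) := by
      filter_upwards [eventually_disjoint_uIcc hS hx] with y hy
      rw [whitneyExtension, leftAnchor_eq_of_disjoint hy, rightAnchor_eq_of_disjoint hy]
    exact hasDerivAt_hermite.congr_of_eventuallyEq hev

theorem abs_whitneyExtensionDeriv_le (hα0 : 0 ≤ α) (hne : S.Nonempty) {A D : ℝ}
    (hA : ∀ s ∈ S, |g s| ≤ A) (hD : ∀ s ∈ S, ∀ t ∈ S, |s - t| ≤ D) (x : ℝ) :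
    |whitneyExtensionDeriv S f g x| ≤ A + 6 * B * D ^ α := by
  have ha := leftAnchor_mem hS hne x
  have hD0 : 0 ≤ D := by simpa using hD _ ha _ ha
  rcases leftAnchor_eq_rightAnchor_or (S := S) (x := x) with h | ⟨hlt, hx⟩
  · rw [whitneyExtensionDeriv, h, hermiteDeriv_self]
    linarith [hA _ (rightAnchor_mem hS hne x), show 0 ≤ 6 * B * D ^ α by positivity]
  have hxa : |x - leftAnchor S x| ≤ D := by
    refine le_trans ?_ (hD _ (rightAnchor_mem hS hne x) _ ha)
    rw [abs_of_nonneg (sub_nonneg.2 hx.1), abs_of_nonneg (by linarith [hx.2])]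
    linarith [hx.2]
  calc |whitneyExtensionDeriv S f g x|
      ≤ |g (leftAnchor S x)| + |whitneyExtensionDeriv S f g x - g (leftAnchor S x)| :=
        by linarith [abs_sub_abs_le_abs_sub (whitneyExtensionDeriv S f g x) (g (leftAnchor S x))]
    _ ≤ A + 6 * B * |x - leftAnchor S x| ^ α :=
        add_le_add (hA _ ha) (abs_whitneyExtensionDeriv_sub_leftAnchor_le hS hjet hB hα1)
    _ ≤ A + 6 * B * D ^ α := by gcongr

theorem abs_whitneyExtensionDeriv_sub_le_of_disjoint (hxy : x ≤ y) (h : Disjoint (Icc x y) S) :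
    |whitneyExtensionDeriv S f g x - whitneyExtensionDeriv S f g y| ≤ 8 * B * |x - y| ^ α := by
  rw [← uIcc_of_le hxy] at h
  have hy := leftAnchor_eq_rightAnchor_or (S := S) (x := y)
  simp only [whitneyExtensionDeriv, ← leftAnchor_eq_of_disjoint h,
    ← rightAnchor_eq_of_disjoint h] at hy ⊢
  rcases leftAnchor_eq_rightAnchor_or (S := S) (x := x) with hab | ⟨hlt, hx⟩
  · simp only [hab, hermiteDeriv_self, sub_self, abs_zero]; positivity
  obtain ⟨ha, hb⟩ := hjet.abs_slope_sub_anchor_le hS hlt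
  set a := leftAnchor S x
  set b := rightAnchor S x
  have hy : y ∈ Icc a b := hy.resolve_left hlt.ne |>.2
  calc |hermiteDeriv f g a b x - hermiteDeriv f g a b y|
      ≤ 8 * (B * (b - a) ^ α) * (|x - y| / (b - a)) :=
        abs_hermiteDeriv_sub_hermiteDeriv_le hlt ha hb hx hy
    _ = 8 * B * ((b - a) ^ α * (|x - y| / (b - a))) := by ring
    _ ≤ 8 * B * |x - y| ^ α := by
        gcongr
        refine Real.rpow_mul_div_le_rpow hα1 (abs_nonneg _) (abs_sub_le_iff.2 ⟨?_, ?_⟩) <;>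
          linarith [hx.1, hx.2, hy.1, hy.2]

theorem abs_whitneyExtensionDeriv_sub_le_of_mem (hα0 : 0 ≤ α) {s : ℝ} (hs : s ∈ S) (hxs : x ≤ s)
    (hsy : s ≤ y) :
    |whitneyExtensionDeriv S f g x - whitneyExtensionDeriv S f g y| ≤ 13 * B * |x - y| ^ α := by
  have hb := rightAnchor_mem_Icc hs hxs
  have ha := leftAnchor_mem_Icc hs hsy
  have hIcc : ∀ u ∈ Icc x y, ∀ v ∈ Icc x y, |u - v| ^ α ≤ |x - y| ^ α := fun u hu v hv => by
    refine Real.rpow_le_rpow (abs_nonneg _) ?_ hα0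
    rw [abs_sub_comm x y, abs_of_nonneg (sub_nonneg.2 (hu.1.trans hu.2))]
    exact abs_sub_le_iff.2 ⟨by linarith [hu.2, hv.1], by linarith [hu.1, hv.2]⟩
  have hbxy : rightAnchor S x ∈ Icc x y := ⟨hb.1, hb.2.trans hsy⟩
  have haxy : leftAnchor S y ∈ Icc x y := ⟨hxs.trans ha.1, ha.2⟩
  calc |whitneyExtensionDeriv S f g x - whitneyExtensionDeriv S f g y|
      ≤ |whitneyExtensionDeriv S f g x - g (rightAnchor S x)|
        + |g (rightAnchor S x) - g (leftAnchor S y)|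
        + |whitneyExtensionDeriv S f g y - g (leftAnchor S y)| := by
        rw [abs_sub_comm (whitneyExtensionDeriv S f g y)]
        linarith [abs_sub_le (whitneyExtensionDeriv S f g x) (g (rightAnchor S x))
          (whitneyExtensionDeriv S f g y), abs_sub_le (g (rightAnchor S x)) (g (leftAnchor S y))
          (whitneyExtensionDeriv S f g y)]
    _ ≤ 6 * B * |rightAnchor S x - x| ^ α + B * |rightAnchor S x - leftAnchor S y| ^ α
        + 6 * B * |y - leftAnchor S y| ^ α := by
        gcongr
        · exact abs_whitneyExtensionDeriv_sub_rightAnchor_le hS hjet hB hα1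
        · exact hjet.holder _ (rightAnchor_mem hS ⟨s, hs⟩ x) _ (leftAnchor_mem hS ⟨s, hs⟩ y)
        · exact abs_whitneyExtensionDeriv_sub_leftAnchor_le hS hjet hB hα1
    _ ≤ 6 * B * |x - y| ^ α + B * |x - y| ^ α + 6 * B * |x - y| ^ α := by
        gcongr 6 * B * ?_ + B * ?_ + 6 * B * ?_
        · exact hIcc _ hbxy _ (left_mem_Icc.2 (hxs.trans hsy))
        · exact hIcc _ hbxy _ haxy
        · exact hIcc _ (right_mem_Icc.2 (hxs.trans hsy)) _ haxy
    _ = 13 * B * |x - y| ^ α := by ring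

theorem abs_whitneyExtensionDeriv_sub_le (hα0 : 0 ≤ α) (x y : ℝ) :
    |whitneyExtensionDeriv S f g x - whitneyExtensionDeriv S f g y| ≤ 13 * B * |x - y| ^ α := by
  wlog hxy : x ≤ y generalizing x y
  · rw [abs_sub_comm, abs_sub_comm x]; exact this y x (le_of_not_ge hxy)
  by_cases h : Disjoint (Icc x y) S
  · calc _ ≤ 8 * B * |x - y| ^ α :=
          abs_whitneyExtensionDeriv_sub_le_of_disjoint hS hjet hB hα1 hxy h
      _ ≤ 13 * B * |x - y| ^ α := by gcongr; norm_num
  · obtain ⟨s, ⟨hxs, hsy⟩, hs⟩ := not_disjoint_iff.1 h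
    exact abs_whitneyExtensionDeriv_sub_le_of_mem hS hjet hB hα1 hα0 hs hxs hsy

end Extension

/-- Whitney-type extension with `C^{1,α}` control (Corollary 2.15 of the paper). -/
theorem whitney_extension :
    ∃ C : ℝ, 0 < C ∧
      ∀ (T₁ T₂ α : ℝ) (I S : Set ℝ) (f : ℝ → ℝ),
        0 < T₁ → 0 < T₂ → 0 < α → α ≤ 1 →
        I.OrdConnected →
        EMetric.diam I ≤ ENNReal.ofReal ((T₁ / T₂) ^ (1 / α)) →
        IsClosed S → S ⊆ I →
        (∀ x ∈ S, ∀ y ∈ S, x ≠ y → |f x - f y| ≤ T₁ * |x - y|) →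
        (∀ x ∈ S, ∀ y ∈ S, ∀ z ∈ S, x ≠ y → y ≠ z → x ≠ z →
          |(f x - f y) / (x - y) - (f y - f z) / (y - z)| ≤
            T₂ * Metric.diam ({x, y, z} : Set ℝ) ^ α) →
        ∃ F F' : ℝ → ℝ,
          (∀ x ∈ I, HasDerivWithinAt F (F' x) I x) ∧
          (∀ x ∈ S, F x = f x) ∧
          (∀ x ∈ I, |F' x| ≤ C * T₁) ∧
          (∀ x ∈ I, ∀ y ∈ I, |F' x - F' y| ≤ C * T₂ * |x - y| ^ α) := by
  refine ⟨26, by norm_num, fun T₁ T₂ α I S f hT₁ hT₂ hα0 hα1 _ hdiam hS hSI hlip hsecond => ?_⟩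
  rcases S.eq_empty_or_nonempty with rfl | hne
  · refine ⟨0, 0, fun x _ => (hasDerivAt_const x 0).hasDerivWithinAt, by simp, fun _ _ => ?_,
      fun _ _ _ _ => ?_⟩ <;> simp only [Pi.zero_apply, sub_zero, abs_zero] <;> positivity
  obtain ⟨g, hgT₁, hjet⟩ := exists_isHolderJet hα0.le hα1 hT₁.le hT₂.le hlip hsecond
  have hD : ∀ s ∈ S, ∀ t ∈ S, |s - t| ≤ (T₁ / T₂) ^ (1 / α) := fun s hs t ht => by
    have := (Metric.edist_le_ediam_of_mem (hSI hs) (hSI ht)).trans hdiam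
    rwa [edist_dist, ENNReal.ofReal_le_ofReal_iff (by positivity), Real.dist_eq] at this
  have hDα : ((T₁ / T₂) ^ (1 / α)) ^ α = T₁ / T₂ := by
    rw [one_div, Real.rpow_inv_rpow (by positivity) hα0.ne']
  have hB : 0 ≤ 2 * T₂ := by positivity
  refine ⟨whitneyExtension S f g, whitneyExtensionDeriv S f g,
    fun x _ => (hasDerivAt_whitneyExtension hS hjet hB hα1 hα0 x).hasDerivWithinAt,
    fun x hx => whitneyExtension_of_mem hx, fun x _ => ?_, fun x _ y _ => ?_⟩
  · calc |whitneyExtensionDeriv S f g x| ≤ T₁ + 6 * (2 * T₂) * ((T₁ / T₂) ^ (1 / α)) ^ α :=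
          abs_whitneyExtensionDeriv_le hS hjet hB hα1 hα0.le hne hgT₁ hD x
      _ = 13 * T₁ := by rw [hDα]; field_simp; ring
      _ ≤ 26 * T₁ := by linarith
  · calc |whitneyExtensionDeriv S f g x - whitneyExtensionDeriv S f g y|
        ≤ 13 * (2 * T₂) * |x - y| ^ α :=
          abs_whitneyExtensionDeriv_sub_le hS hjet hB hα1 hα0.le x y
      _ = 26 * T₂ * |x - y| ^ α := by ring
end

section
/- Let R₀ > 0, let G : [R₀, ∞) × ℝ → (0, ∞) be a continuous function such that r ↦ G(r, θ) is nondecreasing for every θ, and let ρ, φ : [0, 1] → ℝ be C¹ functions with ρ(s) ≥ R₀ for all s. Define Len(γ) := ∫₀¹ √(ρ′(s)² + G(ρ(s), φ(s))²·φ′(s)²) ds and Len(γ₀) := ∫₀¹ G(R₀, φ(s))·|φ′(s)| ds. If Len(γ) > 0, then Len(γ) ≥ Len(γ₀) + (max ρ − min ρ)² / (2·Len(γ)). -/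
/-!
Write `a = |ρ'|`, `b = G(ρ, φ)|φ'|` and `f = √(a² + b²)`. Monotonicity of `G` in `r` gives
`G(R₀, φ)|φ'| ≤ b`, and for every real `t` the pointwise bound `b + t a - t² f / 2 ≤ f` holds,
because `2f (f - b - t a + t² f / 2) = (f - b)² + (a - t f)²`. Integrating over `[0, 1]` and
choosing `t = V / Len` with `V = ∫ |ρ'|` yields `Len₀ + V² / (2 Len) ≤ Len`, and
`max ρ - min ρ ≤ V` by the fundamental theorem of calculus.
-/

open Set intervalIntegral MeasureTheory

theorem add_mul_sub_le_sqrt_sq_add_sq {a b c : ℝ} (hcb : c ≤ b) (t : ℝ) :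
    c + t * a - t ^ 2 / 2 * √(a ^ 2 + b ^ 2) ≤ √(a ^ 2 + b ^ 2) := by
  set f := √(a ^ 2 + b ^ 2)
  have hf0 : 0 ≤ f := Real.sqrt_nonneg _
  have hf2 : f ^ 2 = a ^ 2 + b ^ 2 := Real.sq_sqrt (by positivity)
  rcases hf0.eq_or_lt with hf | hf
  · have ha : a = 0 := by nlinarith
    have hb : b = 0 := by nlinarith
    rw [← hf, ha]
    linarith
  · nlinarith [sq_nonneg (a - t * f), sq_nonneg (f - b), mul_nonneg hf.le (sub_nonneg.2 hcb)]

theorem add_sq_div_le_of_forall_add_mul_sub_le {L₀ V L : ℝ} (hL : 0 < L)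
    (h : ∀ t : ℝ, L₀ + t * V - t ^ 2 / 2 * L ≤ L) : L₀ + V ^ 2 / (2 * L) ≤ L := by
  have hV := h (V / L)
  have e : V / L * V - (V / L) ^ 2 / 2 * L = V ^ 2 / (2 * L) := by
    field_simp; ring
  linarith

theorem integral_add_sq_div_le_integral_sqrt {a b c : ℝ → ℝ} {p q : ℝ} (hpq : p ≤ q)
    (hcb : ∀ x ∈ Icc p q, c x ≤ b x) (ha : IntervalIntegrable a volume p q)
    (hc : IntervalIntegrable c volume p q)
    (hf : IntervalIntegrable (fun x => √(a x ^ 2 + b x ^ 2)) volume p q)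
    (hpos : 0 < ∫ x in p..q, √(a x ^ 2 + b x ^ 2)) :
    (∫ x in p..q, c x) + (∫ x in p..q, |a x|) ^ 2 / (2 * ∫ x in p..q, √(a x ^ 2 + b x ^ 2))
      ≤ ∫ x in p..q, √(a x ^ 2 + b x ^ 2) := by
  refine add_sq_div_le_of_forall_add_mul_sub_le hpos fun t => ?_
  have hca := hc.add (ha.abs.const_mul t)
  have hmono := integral_mono_on hpq (hca.sub (hf.const_mul (t ^ 2 / 2))) hf fun x hx => by
    simpa only [sq_abs] using add_mul_sub_le_sqrt_sq_add_sq (a := |a x|) (hcb x hx) t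
  rwa [integral_sub hca (hf.const_mul _), integral_add hc (ha.abs.const_mul t),
    intervalIntegral.integral_const_mul, intervalIntegral.integral_const_mul] at hmono

theorem abs_sub_le_integral_abs_deriv {f f' : ℝ → ℝ} {u v : ℝ} (huv : u ≤ v)
    (hf : ∀ x ∈ Icc u v, HasDerivWithinAt f (f' x) (Icc u v) x)
    (hf' : ContinuousOn f' (Icc u v)) : |f v - f u| ≤ ∫ x in u..v, |f' x| := by
  have hftc : ∫ x in u..v, f' x = f v - f u :=
    integral_eq_sub_of_hasDeriv_right_of_le huv
      (fun x hx => (hf x hx).continuousWithinAt)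
      (fun x hx => ((hf x (Ioo_subset_Icc_self hx)).hasDerivAt
        (Icc_mem_nhds hx.1 hx.2)).hasDerivWithinAt)
      (hf'.intervalIntegrable_of_Icc huv)
  exact hftc ▸ abs_integral_le_integral_abs huv

theorem sSup_sub_sInf_le {S : Set ℝ} (hS : S.Nonempty) {C : ℝ}
    (h : ∀ x ∈ S, ∀ y ∈ S, x - y ≤ C) : sSup S - sInf S ≤ C := by
  have : sSup S ≤ C + sInf S := csSup_le hS fun x hx =>
    sub_le_iff_le_add'.1 (le_csInf hS fun y hy => by linarith [h x hx y hy])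
  linarith

theorem sSup_image_sub_sInf_image_le_integral_abs_deriv {f f' : ℝ → ℝ} {a b : ℝ}
    (hab : a ≤ b) (hf : ∀ x ∈ Icc a b, HasDerivWithinAt f (f' x) (Icc a b) x)
    (hf' : ContinuousOn f' (Icc a b)) :
    sSup (f '' Icc a b) - sInf (f '' Icc a b) ≤ ∫ x in a..b, |f' x| := by
  have hle : ∀ u ∈ Icc a b, ∀ v ∈ Icc a b, u ≤ v → |f v - f u| ≤ ∫ x in a..b, |f' x| := by
    intro u hu v hv huv
    have hsub : Icc u v ⊆ Icc a b := Icc_subset_Icc hu.1 hv.2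
    calc |f v - f u| ≤ ∫ x in u..v, |f' x| :=
          abs_sub_le_integral_abs_deriv huv (fun x hx => (hf x (hsub hx)).mono hsub)
            (hf'.mono hsub)
      _ ≤ ∫ x in a..b, |f' x| :=
          integral_mono_interval hu.1 huv hv.2 (ae_of_all _ fun x => abs_nonneg _)
            (hf'.abs.intervalIntegrable_of_Icc hab)
  refine sSup_sub_sInf_le ((nonempty_Icc.2 hab).image f) ?_
  rintro _ ⟨v, hv, rfl⟩ _ ⟨u, hu, rfl⟩
  rcases le_total u v with huv | hvu
  · exact (le_abs_self _).trans (hle u hu v hv huv)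
  · exact (le_abs_self _).trans (abs_sub_comm (f v) (f u) ▸ hle v hv u hu hvu)

theorem length_estimate_general (R₀ : ℝ) (G : ℝ → ℝ → ℝ)
    (hGcont : ContinuousOn (fun p : ℝ × ℝ => G p.1 p.2) (Ici R₀ ×ˢ univ))
    (hGmono : ∀ θ r₁ r₂ : ℝ, R₀ ≤ r₁ → r₁ ≤ r₂ → G r₁ θ ≤ G r₂ θ)
    (ρ φ ρ' φ' : ℝ → ℝ)
    (hρ : ∀ s ∈ Icc (0:ℝ) 1, HasDerivWithinAt ρ (ρ' s) (Icc 0 1) s)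
    (hφ : ∀ s ∈ Icc (0:ℝ) 1, HasDerivWithinAt φ (φ' s) (Icc 0 1) s)
    (hρ'c : ContinuousOn ρ' (Icc 0 1)) (hφ'c : ContinuousOn φ' (Icc 0 1))
    (hρR₀ : ∀ s ∈ Icc (0:ℝ) 1, R₀ ≤ ρ s)
    (Len Len₀ : ℝ)
    (hLen : Len = ∫ s in (0:ℝ)..1, Real.sqrt (ρ' s ^ 2 + G (ρ s) (φ s) ^ 2 * φ' s ^ 2))
    (hLen₀ : Len₀ = ∫ s in (0:ℝ)..1, G R₀ (φ s) * |φ' s|)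
    (hpos : 0 < Len) :
    Len₀ + (sSup (ρ '' Icc 0 1) - sInf (ρ '' Icc 0 1)) ^ 2 / (2 * Len) ≤ Len := by
  have hρc : ContinuousOn ρ (Icc 0 1) := fun s hs => (hρ s hs).continuousWithinAt
  have hφc : ContinuousOn φ (Icc 0 1) := fun s hs => (hφ s hs).continuousWithinAt
  have hGγ : ContinuousOn (fun s => G (ρ s) (φ s) * |φ' s|) (Icc 0 1) :=
    (hGcont.comp (hρc.prodMk hφc) fun s hs => ⟨hρR₀ s hs, mem_univ _⟩).mul hφ'c.abs
  have hGγ₀ : ContinuousOn (fun s => G R₀ (φ s) * |φ' s|) (Icc 0 1) :=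
    (hGcont.comp (continuousOn_const.prodMk hφc) fun _ _ => ⟨self_mem_Ici, mem_univ _⟩).mul hφ'c.abs
  have hsq : ∀ s, ρ' s ^ 2 + (G (ρ s) (φ s) * |φ' s|) ^ 2 =
      ρ' s ^ 2 + G (ρ s) (φ s) ^ 2 * φ' s ^ 2 := fun s => by rw [mul_pow, sq_abs]
  have hcore := integral_add_sq_div_le_integral_sqrt zero_le_one
    (fun s hs => mul_le_mul_of_nonneg_right (hGmono _ _ _ le_rfl (hρR₀ s hs)) (abs_nonneg _))
    (hρ'c.intervalIntegrable_of_Icc zero_le_one) (hGγ₀.intervalIntegrable_of_Icc zero_le_one)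
    (((hρ'c.pow 2).add (hGγ.pow 2)).sqrt.intervalIntegrable_of_Icc zero_le_one)
    (by simpa only [hsq, ← hLen] using hpos)
  simp only [hsq, ← hLen, ← hLen₀] at hcore
  have hK : IsCompact (ρ '' Icc 0 1) := isCompact_Icc.image_of_continuousOn hρc
  have hosc := sSup_image_sub_sInf_image_le_integral_abs_deriv zero_le_one hρ hρ'c
  have hosc₀ := sub_nonneg.2 (Real.sInf_le_sSup _ hK.bddBelow hK.bddAbove)
  calc _ ≤ Len₀ + (∫ s in (0:ℝ)..1, |ρ' s|) ^ 2 / (2 * Len) := by gcongr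
    _ ≤ Len := hcore

/-- The length estimate from the proof of strong convexity (Lemma 2.8 of the paper):
the length of a curve `γ = (ρ, φ)` (in polar coordinates for the metric
`dr² + G² dθ²`) staying outside the disc of radius `R₀` is at least the length of its
radial projection to the circle `r = R₀` plus `(max ρ - min ρ)²/(2 Len γ)`. -/
theorem length_estimate (R₀ : ℝ) (hR₀ : 0 < R₀) (G : ℝ → ℝ → ℝ)
    (hGcont : ContinuousOn (fun p : ℝ × ℝ => G p.1 p.2) (Ici R₀ ×ˢ univ))
    (hGpos : ∀ r θ : ℝ, R₀ ≤ r → 0 < G r θ)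
    (hGmono : ∀ θ r₁ r₂ : ℝ, R₀ ≤ r₁ → r₁ ≤ r₂ → G r₁ θ ≤ G r₂ θ)
    (ρ φ ρ' φ' : ℝ → ℝ)
    (hρ : ∀ s ∈ Icc (0:ℝ) 1, HasDerivWithinAt ρ (ρ' s) (Icc 0 1) s)
    (hφ : ∀ s ∈ Icc (0:ℝ) 1, HasDerivWithinAt φ (φ' s) (Icc 0 1) s)
    (hρ'c : ContinuousOn ρ' (Icc 0 1)) (hφ'c : ContinuousOn φ' (Icc 0 1))
    (hρR₀ : ∀ s ∈ Icc (0:ℝ) 1, R₀ ≤ ρ s)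
    (Len Len₀ : ℝ)
    (hLen : Len = ∫ s in (0:ℝ)..1, Real.sqrt (ρ' s ^ 2 + G (ρ s) (φ s) ^ 2 * φ' s ^ 2))
    (hLen₀ : Len₀ = ∫ s in (0:ℝ)..1, G R₀ (φ s) * |φ' s|)
    (hpos : 0 < Len) :
    Len₀ + (sSup (ρ '' Icc 0 1) - sInf (ρ '' Icc 0 1)) ^ 2 / (2 * Len) ≤ Len :=
  length_estimate_general R₀ G hGcont hGmono ρ φ ρ' φ' hρ hφ hρ'c hφ'c hρR₀ Len Len₀ hLen hLen₀ hpos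
end

section
/- Let H, R > 0 with H·R² ≤ π²/16, let I ⊆ ℝ be an interval, and let ρ : I → (0, R] be a C² function with |ρ′(t)| < 1 for all t ∈ I. Suppose there is a function u : I → ℝ such that cot_H(ρ(t)) ≤ u(t) ≤ cot_{−H}(ρ(t)) and ρ″(t) = u(t)·(1 − ρ′(t)²) for all t ∈ I. Then 1/2 ≤ ρ(t)·ρ″(t)/(1 − ρ′(t)²) ≤ 2 for all t ∈ I; in particular ρ″ > 0 on I. -/
open Set

/-- `cot_K`: the solution of the constant-curvature Riccati equation. -/
noncomputable def cotK (K r : ℝ) : ℝ :=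
  if K < 0 then Real.sqrt (-K) * (Real.cosh (Real.sqrt (-K) * r) / Real.sinh (Real.sqrt (-K) * r))
  else if K = 0 then 1 / r
  else Real.sqrt K * (Real.cos (Real.sqrt K * r) / Real.sin (Real.sqrt K * r))

set_option maxHeartbeats 1000000 in
/-- Two-sided bound on `ρ ρ'' / (1 - ρ'²)` (Lemma 4.1 of the paper). -/
theorem rho_convexity (H R : ℝ) (hH : 0 < H) (hR : 0 < R)
    (hHR : H * R ^ 2 ≤ Real.pi ^ 2 / 16)
    (I : Set ℝ) (hI : I.OrdConnected)
    (ρ ρ' ρ'' u : ℝ → ℝ)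
    (hρrange : ∀ t ∈ I, 0 < ρ t ∧ ρ t ≤ R)
    (hρ' : ∀ t ∈ I, HasDerivWithinAt ρ (ρ' t) I t)
    (hρ'' : ∀ t ∈ I, HasDerivWithinAt ρ' (ρ'' t) I t)
    (hρ''c : ContinuousOn ρ'' I)
    (hρ'lt : ∀ t ∈ I, |ρ' t| < 1)
    (hu : ∀ t ∈ I, cotK H (ρ t) ≤ u t ∧ u t ≤ cotK (-H) (ρ t))
    (heq : ∀ t ∈ I, ρ'' t = u t * (1 - ρ' t ^ 2)) :
    ∀ t ∈ I, 1 / 2 ≤ ρ t * ρ'' t / (1 - ρ' t ^ 2) ∧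
      ρ t * ρ'' t / (1 - ρ' t ^ 2) ≤ 2 ∧ 0 < ρ'' t := by
  intro t ht
  obtain ⟨hρpos, hρle⟩ := hρrange t ht
  obtain ⟨hul, huu⟩ := hu t ht
  have h1 : ρ' t ^ 2 < 1 := by
    have h := hρ'lt t ht
    nlinarith [sq_abs (ρ' t), abs_nonneg (ρ' t)]
  have hden : 0 < 1 - ρ' t ^ 2 := by linarith
  set s := Real.sqrt H * ρ t with hs
  have hHs : 0 < Real.sqrt H := Real.sqrt_pos.2 hH
  have hspos : 0 < s := mul_pos hHs hρpos
  have hsle : s ≤ Real.pi / 4 := by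
    have hpi : 0 < Real.pi / 4 := by positivity
    have h2 : s ^ 2 ≤ (Real.pi / 4) ^ 2 := by
      have hsq : s ^ 2 = H * ρ t ^ 2 := by
        rw [hs, mul_pow, Real.sq_sqrt hH.le]
      rw [hsq]
      calc H * ρ t ^ 2 ≤ H * R ^ 2 :=
            mul_le_mul_of_nonneg_left (by nlinarith) hH.le
        _ ≤ Real.pi ^ 2 / 16 := hHR
        _ = (Real.pi / 4) ^ 2 := by ring
    nlinarith
  have hsle1 : s ≤ 1 := le_trans hsle (by linarith [Real.pi_le_four])
  have hsltpi : s < Real.pi := by linarith [Real.pi_pos]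
  have hsinpos : 0 < Real.sin s := Real.sin_pos_of_pos_of_lt_pi hspos hsltpi
  have hcospos : 0 < Real.cos s :=
    Real.cos_pos_of_mem_Ioo ⟨by linarith [Real.pi_pos], by linarith [Real.pi_pos]⟩
  have hsinle : Real.sin s ≤ s := Real.sin_le hspos.le
  have hcos_half : 1 / 2 ≤ Real.cos s := by
    have hmono : Real.cos (Real.pi / 4) ≤ Real.cos s :=
      Real.cos_le_cos_of_nonneg_of_le_pi hspos.le (by linarith [Real.pi_pos]) hsle
    rw [Real.cos_pi_div_four] at hmono
    nlinarith [Real.sq_sqrt (by norm_num : (2:ℝ) ≥ 0).le, Real.sqrt_nonneg 2,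
      Real.sq_sqrt (by norm_num : (0:ℝ) ≤ 2)]
  have hcot : cotK H (ρ t) = Real.sqrt H * (Real.cos s / Real.sin s) := by
    unfold cotK
    rw [if_neg (not_lt.2 hH.le), if_neg hH.ne']
  have hcoth : cotK (-H) (ρ t) = Real.sqrt H * (Real.cosh s / Real.sinh s) := by
    unfold cotK
    rw [if_pos (by linarith : -H < 0), neg_neg]
  have hsinhpos : 0 < Real.sinh s := Real.sinh_pos_iff.2 hspos
  have hsinhge : s ≤ Real.sinh s := Real.self_le_sinh_iff.2 hspos.le
  have hcoshpos : 0 < Real.cosh s := Real.cosh_pos s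
  have hcosh2 : Real.cosh s ≤ 2 := by
    rw [Real.cosh_eq]
    have h3 : Real.exp s ≤ Real.exp 1 := Real.exp_le_exp.2 hsle1
    have h4 : Real.exp (-s) ≤ Real.exp 0 := Real.exp_le_exp.2 (by linarith)
    rw [Real.exp_zero] at h4
    nlinarith [Real.exp_one_lt_d9]
  -- ρ u bounds
  have hρcot : ρ t * cotK H (ρ t) = s * Real.cos s / Real.sin s := by
    rw [hcot, hs]; ring
  have hρcoth : ρ t * cotK (-H) (ρ t) = s * Real.cosh s / Real.sinh s := by
    rw [hcoth, hs]; ring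
  have hlow : 1 / 2 ≤ ρ t * u t := by
    have h5 : Real.cos s ≤ s * Real.cos s / Real.sin s := by
      rw [le_div_iff₀ hsinpos]
      nlinarith [mul_le_mul_of_nonneg_left hsinle hcospos.le]
    have h6 : ρ t * cotK H (ρ t) ≤ ρ t * u t :=
      mul_le_mul_of_nonneg_left hul hρpos.le
    rw [hρcot] at h6
    linarith
  have hhigh : ρ t * u t ≤ 2 := by
    have h5 : s * Real.cosh s / Real.sinh s ≤ Real.cosh s := by
      rw [div_le_iff₀ hsinhpos]
      have := mul_le_mul_of_nonneg_left hsinhge hcoshpos.le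
      linarith
    have h6 : ρ t * u t ≤ ρ t * cotK (-H) (ρ t) :=
      mul_le_mul_of_nonneg_left huu hρpos.le
    rw [hρcoth] at h6
    linarith
  have hupos : 0 < u t := by
    have : 0 < Real.sqrt H * (Real.cos s / Real.sin s) := by positivity
    rw [← hcot] at this
    linarith
  have hval : ρ t * ρ'' t / (1 - ρ' t ^ 2) = ρ t * u t := by
    rw [heq t ht]
    field_simp
  rw [hval, heq t ht]
  exact ⟨hlow, hhigh, mul_pos hupos hden⟩
end

section
/- Let H, R > 0 with H·R² ≤ π²/4, let K : (0, R] → ℝ be continuous with |K(x)| ≤ H for all x, and let h : (0, R] → ℝ be a differentiable solution of the Riccati equation h′(x) + h(x)² + K(x) = 0 with h(x) = 1/x + O(x) as x → 0⁺. Let κ ∈ ℝ with κ·R² < π² be such that cot_κ(R) = h(R). Then there exists x ∈ (0, R] with K(x) = κ. -/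
/-!
Let `g = cot_κ`, so that `g' + g² + κ = 0` and `g(x) = 1/x + O(x)` at `0⁺`. If `K` never took
the value `κ` it would stay on one side of it, say `K < κ`. Then `v = h - g` solves the linear
equation `v' = (κ - K) - (h + g) v`, where the forcing term `κ - K` is positive, `v(0⁺) = 0`, and
`h + g ≥ 0` near `0` since both `h` and `g` blow up like `1/x`. Such a `v` is positive at `R`: if
`v(R) ≤ 0`, then, as `v` can only cross zero upwards, `v < 0` on `(0, R)`; near `0` this makes
`v' > 0`, so `v` increases from its limit `0`, which is absurd. Hence `h(R) > cot_κ(R)`, and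
symmetrically `h(R) < cot_κ(R)` when `K > κ`, contradicting `cot_κ(R) = h(R)`.
-/

open Set

open Real Filter Topology

lemma IsPreconnected.forall_lt_or_forall_gt {X α : Type*} [TopologicalSpace X] [LinearOrder α]
    [TopologicalSpace α] [OrderClosedTopology α] {S : Set X} (hS : IsPreconnected S) {f : X → α}
    (hf : ContinuousOn f S) {c : α} (hc : ∀ x ∈ S, f x ≠ c) :
    (∀ x ∈ S, f x < c) ∨ (∀ x ∈ S, c < f x) := by
  by_contra! h
  obtain ⟨⟨x, hx, hxc⟩, y, hy, hyc⟩ := h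
  obtain ⟨z, hz, hzc⟩ := hS.intermediate_value hy hx hf ⟨hyc, hxc⟩
  exact hc z hz hzc

lemma neg_of_hasDerivWithinAt_pos_of_eq_zero {v v' : ℝ → ℝ} {a b : ℝ} (hab : a < b)
    (hv : ∀ x ∈ Icc a b, HasDerivWithinAt v (v' x) (Icc a b) x)
    (hv' : ∀ x ∈ Icc a b, v x = 0 → 0 < v' x) (hb : v b ≤ 0) : v a < 0 := by
  by_contra! ha
  have hbmem : b ∈ Icc a b := right_mem_Icc.2 hab.le
  have hnonneg : ∀ x ∈ Icc a b, 0 ≤ v x := fun x hx => by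
    have := image_le_of_deriv_right_lt_deriv_boundary (f := fun x => -v x) (B := fun _ => 0)
      (fun x hx => (hv x hx).continuousWithinAt.neg)
      (fun x hx => ((hv x (Ico_subset_Icc_self hx)).mono_of_mem_nhdsWithin
        (Icc_mem_nhdsGE_of_mem hx)).neg)
      (by simpa using ha) (fun _ => hasDerivAt_const _ _)
      (fun x hx hx0 => neg_lt_zero.2 (hv' x (Ico_subset_Icc_self hx) (neg_eq_zero.1 hx0))) hx
    simpa using this
  have hvb : v b = 0 := le_antisymm hb (hnonneg b hbmem)
  have hmin : IsMinOn v (Icc a b) b := fun x hx => hvb ▸ hnonneg x hx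
  have := hmin.localize.hasFDerivWithinAt_nonneg (hv b hbmem)
    (sub_mem_posTangentConeAt_of_segment_subset (by rw [segment_symm, segment_eq_Icc hab.le]))
  rw [ContinuousLinearMap.toSpanSingleton_apply, smul_eq_mul] at this
  nlinarith [hv' b hbmem hvb]

theorem pos_of_hasDerivWithinAt_eq_sub_mul {v p q : ℝ → ℝ} {R : ℝ} (hR : 0 < R)
    (hv : ∀ x ∈ Ioc 0 R, HasDerivWithinAt v (q x - p x * v x) (Ioc 0 R) x)
    (hq : ∀ x ∈ Ioc 0 R, 0 < q x) (hp : ∀ᶠ x in 𝓝[>] 0, 0 ≤ p x)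
    (hv0 : Tendsto v (𝓝[>] 0) (𝓝 0)) : 0 < v R := by
  by_contra! hvR
  have hneg : ∀ x ∈ Ioo 0 R, v x < 0 := fun x hx => by
    have hsub : Icc x R ⊆ Ioc 0 R := Icc_subset_Ioc hx.1 le_rfl
    refine neg_of_hasDerivWithinAt_pos_of_eq_zero hx.2 (fun y hy => (hv y (hsub hy)).mono hsub)
      (fun y hy hy0 => ?_) hvR
    simpa [hy0] using hq y (hsub hy)
  obtain ⟨u, hu, hpu⟩ := mem_nhdsGT_iff_exists_Ioc_subset.1 hp
  let a := min u (R / 2)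
  have ha : 0 < a := lt_min hu (half_pos hR)
  have haR : a < R := (min_le_right _ _).trans_lt (half_lt_self hR)
  have hsub : Ioc 0 a ⊆ Ioc 0 R := Ioc_subset_Ioc_right haR.le
  have hmono : MonotoneOn v (Ioc 0 a) := by
    refine monotoneOn_of_hasDerivWithinAt_nonneg (convex_Ioc 0 a)
      (fun x hx => (hv x (hsub hx)).continuousWithinAt.mono hsub)
      (fun x hx => (hv x (hsub (interior_subset hx))).mono (interior_subset.trans hsub))
      (fun x hx => ?_)
    rw [interior_Ioc] at hx
    have hpx : 0 ≤ p x := hpu ⟨hx.1, hx.2.le.trans (min_le_left _ _)⟩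
    nlinarith [hq x (hsub (Ioo_subset_Ioc_self hx)), hneg x ⟨hx.1, hx.2.trans haR⟩]
  have hva : 0 ≤ v a := le_of_tendsto hv0 <| by
    filter_upwards [Ioc_mem_nhdsGT ha] with x hx using hmono hx ⟨ha, le_rfl⟩ hx.2
  exact (hneg a ⟨ha, haR⟩).not_ge hva

lemma tendsto_sub_inv_of_abs_le {f : ℝ → ℝ} {M : ℝ}
    (hf : ∀ᶠ x in 𝓝[>] 0, |f x - x⁻¹| ≤ M * x) :
    Tendsto (fun x => f x - x⁻¹) (𝓝[>] 0) (𝓝 0) := by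
  refine squeeze_zero_norm' (by simpa only [Real.norm_eq_abs] using hf) ?_
  simpa using ((continuous_const_mul M).tendsto 0).mono_left nhdsWithin_le_nhds

lemma tendsto_atTop_of_tendsto_sub_inv_s9 {f : ℝ → ℝ}
    (hf : Tendsto (fun x => f x - x⁻¹) (𝓝[>] 0) (𝓝 0)) : Tendsto f (𝓝[>] 0) atTop := by
  simpa using hf.add_atTop tendsto_inv_nhdsGT_zero

theorem riccati_lt_of_lt {R : ℝ} (hR : 0 < R) {u w U W : ℝ → ℝ}
    (hu : ∀ x ∈ Ioc 0 R, HasDerivWithinAt u (-(u x ^ 2 + U x)) (Ioc 0 R) x)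
    (hw : ∀ x ∈ Ioc 0 R, HasDerivWithinAt w (-(w x ^ 2 + W x)) (Ioc 0 R) x)
    (hUW : ∀ x ∈ Ioc 0 R, U x < W x)
    (hu0 : Tendsto (fun x => u x - x⁻¹) (𝓝[>] 0) (𝓝 0))
    (hw0 : Tendsto (fun x => w x - x⁻¹) (𝓝[>] 0) (𝓝 0)) : w R < u R := by
  have hp : ∀ᶠ x in 𝓝[>] 0, 0 ≤ u x + w x := by
    filter_upwards [(tendsto_atTop_of_tendsto_sub_inv_s9 hu0).eventually_ge_atTop 0,
      (tendsto_atTop_of_tendsto_sub_inv_s9 hw0).eventually_ge_atTop 0] with x hux hwx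
    exact add_nonneg hux hwx
  refine sub_pos.1 <| pos_of_hasDerivWithinAt_eq_sub_mul (v := fun x => u x - w x)
    (p := fun x => u x + w x) hR
    (fun x hx => ((hu x hx).sub (hw x hx)).congr_deriv (by ring))
    (fun x hx => sub_pos.2 (hUW x hx)) hp ?_
  simpa using hu0.sub hw0

lemma abs_mul_cos_sub_sin_le {t : ℝ} (ht : 0 ≤ t) (ht' : t ≤ π / 2) :
    |t * cos t - sin t| ≤ t ^ 2 * sin t := by
  have hderiv : ∀ y ∈ Icc 0 t,
      HasDerivWithinAt (fun y => y * cos y - sin y) (-(y * sin y)) (Icc 0 t) y := fun y _ =>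
    (((hasDerivAt_id' y).mul (hasDerivAt_cos y)).sub
      (hasDerivAt_sin y)).hasDerivWithinAt.congr_deriv (by ring)
  have hbound : ∀ y ∈ Ico 0 t, ‖-(y * sin y)‖ ≤ t * sin t := fun y hy => by
    have hsin : 0 ≤ sin y := sin_nonneg_of_nonneg_of_le_pi hy.1 (by linarith [hy.2, pi_pos])
    rw [norm_neg, Real.norm_of_nonneg (mul_nonneg hy.1 hsin)]
    refine mul_le_mul hy.2.le ?_ hsin ht
    exact sin_le_sin_of_le_of_le_pi_div_two (by linarith [hy.1, pi_pos]) ht' hy.2.le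
  have := norm_image_sub_le_of_norm_deriv_le_segment' hderiv hbound t ⟨ht, le_rfl⟩
  simp only [zero_mul, cos_zero, sin_zero, sub_zero, Real.norm_eq_abs] at this
  linarith

lemma abs_mul_cosh_sub_sinh_le {t : ℝ} (ht : 0 ≤ t) :
    |t * cosh t - sinh t| ≤ t ^ 2 * sinh t := by
  have hderiv : ∀ y ∈ Icc 0 t,
      HasDerivWithinAt (fun y => y * cosh y - sinh y) (y * sinh y) (Icc 0 t) y := fun y _ =>
    (((hasDerivAt_id' y).mul (hasDerivAt_cosh y)).sub
      (hasDerivAt_sinh y)).hasDerivWithinAt.congr_deriv (by ring)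
  have hbound : ∀ y ∈ Ico 0 t, ‖y * sinh y‖ ≤ t * sinh t := fun y hy => by
    have hsinh : 0 ≤ sinh y := sinh_nonneg_iff.2 hy.1
    rw [Real.norm_of_nonneg (mul_nonneg hy.1 hsinh)]
    exact mul_le_mul hy.2.le (sinh_le_sinh.2 hy.2.le) hsinh ht
  have := norm_image_sub_le_of_norm_deriv_le_segment' hderiv hbound t ⟨ht, le_rfl⟩
  simp only [zero_mul, cosh_zero, sinh_zero, sub_zero, Real.norm_eq_abs] at this
  linarith

/-- With `(c, d, σ) = (cos, sin, 1)` or `(cosh, sinh, -1)` this is the Riccati equation of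
`cot_κ`, `κ = σ s²`. -/
lemma hasDerivAt_mul_div_comp_mul {c d : ℝ → ℝ} {σ s x : ℝ}
    (hc : HasDerivAt c (-(σ * d (s * x))) (s * x)) (hd : HasDerivAt d (c (s * x)) (s * x))
    (hd0 : d (s * x) ≠ 0) :
    HasDerivAt (fun r => s * (c (s * r) / d (s * r)))
      (-((s * (c (s * x) / d (s * x))) ^ 2 + σ * s ^ 2)) x := by
  have hlin : HasDerivAt (fun r => s * r) s x := by simpa using (hasDerivAt_id x).const_mul s
  refine (((hc.comp x hlin).div (hd.comp x hlin) hd0).const_mul s).congr_deriv ?_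
  simp only [Function.comp_apply]
  field_simp
  ring

lemma cotK_of_neg {κ : ℝ} (hκ : κ < 0) :
    cotK κ = fun r => √(-κ) * (cosh (√(-κ) * r) / sinh (√(-κ) * r)) := by
  funext r; simp [cotK, hκ]

lemma cotK_zero : cotK 0 = fun r => 1 / r := by
  funext r; simp [cotK]

lemma cotK_of_pos {κ : ℝ} (hκ : 0 < κ) :
    cotK κ = fun r => √κ * (cos (√κ * r) / sin (√κ * r)) := by
  funext r; simp [cotK, hκ.not_gt, hκ.ne']

lemma hasDerivAt_cotK {κ x : ℝ} (hx : 0 < x) (hκx : κ * x ^ 2 < π ^ 2) :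
    HasDerivAt (cotK κ) (-(cotK κ x ^ 2 + κ)) x := by
  rcases lt_trichotomy κ 0 with hκ | rfl | hκ
  · have hs : 0 < √(-κ) := sqrt_pos.2 (neg_pos.2 hκ)
    have := hasDerivAt_mul_div_comp_mul (σ := -1) ((hasDerivAt_cosh _).congr_deriv (by ring))
      (hasDerivAt_sinh _) (sinh_pos_iff.2 (mul_pos hs hx)).ne'
    rw [cotK_of_neg hκ]
    convert this using 3
    rw [sq_sqrt (neg_pos.2 hκ).le]; ring
  · rw [cotK_zero]
    simpa [one_div] using hasDerivAt_inv hx.ne'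
  · have hs : 0 < √κ := sqrt_pos.2 hκ
    have hsx : √κ * x < π := by
      refine abs_lt_of_sq_lt_sq' ?_ pi_pos.le |>.2
      rwa [mul_pow, sq_sqrt hκ.le]
    have := hasDerivAt_mul_div_comp_mul (σ := 1) ((hasDerivAt_cos _).congr_deriv (by ring))
      (hasDerivAt_sin _) (sin_pos_of_pos_of_lt_pi (mul_pos hs hx) hsx).ne'
    rw [cotK_of_pos hκ]
    convert this using 3
    rw [one_mul, sq_sqrt hκ.le]

lemma abs_mul_div_sub_inv_le {s x c d : ℝ} (hx : 0 < x) (hd : 0 < d)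
    (h : |s * x * c - d| ≤ (s * x) ^ 2 * d) : |s * (c / d) - x⁻¹| ≤ s ^ 2 * x := by
  have hxd : 0 < x * d := mul_pos hx hd
  rw [show s * (c / d) - x⁻¹ = (s * x * c - d) / (x * d) by field_simp, abs_div,
    abs_of_pos hxd, div_le_iff₀ hxd]
  linarith

lemma abs_cotK_sub_inv_le {κ x : ℝ} (hx : 0 < x) (hκx : κ * x ^ 2 ≤ π ^ 2 / 4) :
    |cotK κ x - x⁻¹| ≤ |κ| * x := by
  rcases lt_trichotomy κ 0 with hκ | rfl | hκ
  · have hs : 0 < √(-κ) := sqrt_pos.2 (neg_pos.2 hκ)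
    have hsx : 0 < √(-κ) * x := mul_pos hs hx
    have := abs_mul_div_sub_inv_le hx (sinh_pos_iff.2 hsx) (abs_mul_cosh_sub_sinh_le hsx.le)
    rw [sq_sqrt (neg_pos.2 hκ).le] at this
    rw [cotK_of_neg hκ, abs_of_neg hκ]
    exact this
  · simp [cotK_zero]
  · have hs : 0 < √κ := sqrt_pos.2 hκ
    have hsx : √κ * x ≤ π / 2 := by
      refine abs_le_of_sq_le_sq' ?_ (by positivity) |>.2
      rw [mul_pow, sq_sqrt hκ.le, div_pow]; linarith
    have := abs_mul_div_sub_inv_le hx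
      (sin_pos_of_pos_of_lt_pi (mul_pos hs hx) (by linarith [pi_pos]))
      (abs_mul_cos_sub_sin_le (mul_pos hs hx).le hsx)
    rw [sq_sqrt hκ.le] at this
    rw [cotK_of_pos hκ, abs_of_pos hκ]
    exact this

lemma tendsto_cotK_sub_inv (κ : ℝ) : Tendsto (fun x => cotK κ x - x⁻¹) (𝓝[>] 0) (𝓝 0) := by
  have hsmall : ∀ᶠ x in 𝓝[>] (0 : ℝ), κ * x ^ 2 ≤ π ^ 2 / 4 := by
    have : Tendsto (fun x : ℝ => κ * x ^ 2) (𝓝 0) (𝓝 0) :=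
      Continuous.tendsto' (by fun_prop) 0 0 (by simp)
    exact (this.eventually (ge_mem_nhds (by positivity))).filter_mono nhdsWithin_le_nhds
  refine tendsto_sub_inv_of_abs_le (M := |κ|) ?_
  filter_upwards [hsmall, self_mem_nhdsWithin] with x hκx hx
  exact abs_cotK_sub_inv_le hx hκx

theorem curvature_ivt_general (R : ℝ) (hR : 0 < R)
    (K h h' : ℝ → ℝ)
    (hKc : ContinuousOn K (Ioc 0 R))
    (hd : ∀ x ∈ Ioc (0:ℝ) R, HasDerivWithinAt h (h' x) (Ioc 0 R) x)
    (heq : ∀ x ∈ Ioc (0:ℝ) R, h' x + h x ^ 2 + K x = 0)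
    (hinit : ∃ M δ : ℝ, 0 < M ∧ 0 < δ ∧ ∀ x : ℝ, 0 < x → x ≤ δ → |h x - 1 / x| ≤ M * x)
    (κ : ℝ) (hκ : κ * R ^ 2 < Real.pi ^ 2) (hκeq : cotK κ R = h R) :
    ∃ x ∈ Ioc (0:ℝ) R, K x = κ := by
  by_contra! hK
  have hh : ∀ x ∈ Ioc 0 R, HasDerivWithinAt h (-(h x ^ 2 + K x)) (Ioc 0 R) x := fun x hx =>
    (hd x hx).congr_deriv (by linarith [heq x hx])
  have hκx : ∀ x ∈ Ioc 0 R, κ * x ^ 2 < π ^ 2 := fun x hx => by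
    rcases le_or_gt κ 0 with hκ0 | hκ0
    · nlinarith [pi_pos, sq_nonneg x]
    · exact (mul_le_mul_of_nonneg_left (pow_le_pow_left₀ hx.1.le hx.2 2) hκ0.le).trans_lt hκ
  have hg : ∀ x ∈ Ioc 0 R, HasDerivWithinAt (cotK κ) (-(cotK κ x ^ 2 + κ)) (Ioc 0 R) x :=
    fun x hx => (hasDerivAt_cotK hx.1 (hκx x hx)).hasDerivWithinAt
  obtain ⟨M, δ, -, hδ, hM⟩ := hinit
  have hh0 : Tendsto (fun x => h x - x⁻¹) (𝓝[>] 0) (𝓝 0) := by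
    refine tendsto_sub_inv_of_abs_le (M := M) ?_
    filter_upwards [Ioc_mem_nhdsGT hδ] with x hx
    simpa using hM x hx.1 hx.2
  rcases isPreconnected_Ioc.forall_lt_or_forall_gt hKc hK with hlt | hgt
  · exact (riccati_lt_of_lt hR hh hg hlt hh0 (tendsto_cotK_sub_inv κ)).ne hκeq
  · exact (riccati_lt_of_lt (U := fun _ => κ) hR hg hh hgt (tendsto_cotK_sub_inv κ) hh0).ne' hκeq

/-- The intermediate-value property of the curvature along a radial geodesic
(Lemma 4.4 of the paper): if `cot_κ(R) = h(R)` then `K` attains the value `κ`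
somewhere on `(0, R]`. -/
theorem curvature_ivt (H R : ℝ) (hH : 0 < H) (hR : 0 < R)
    (hHR : H * R ^ 2 ≤ Real.pi ^ 2 / 4)
    (K h h' : ℝ → ℝ)
    (hKc : ContinuousOn K (Ioc 0 R))
    (hKb : ∀ x ∈ Ioc (0:ℝ) R, |K x| ≤ H)
    (hd : ∀ x ∈ Ioc (0:ℝ) R, HasDerivWithinAt h (h' x) (Ioc 0 R) x)
    (heq : ∀ x ∈ Ioc (0:ℝ) R, h' x + h x ^ 2 + K x = 0)
    (hinit : ∃ M δ : ℝ, 0 < M ∧ 0 < δ ∧ ∀ x : ℝ, 0 < x → x ≤ δ → |h x - 1 / x| ≤ M * x)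
    (κ : ℝ) (hκ : κ * R ^ 2 < Real.pi ^ 2) (hκeq : cotK κ R = h R) :
    ∃ x ∈ Ioc (0:ℝ) R, K x = κ :=
  curvature_ivt_general R hR K h h' hKc hd heq hinit κ hκ hκeq
end

section
/- There exists a universal constant C > 0 with the following property. Let 0 < α ≤ 1, 0 < m ≤ R and A > 0, let I ⊆ ℝ be an interval of length |I| ≤ 2R, and let u : I → ℝ satisfy ‖u‖_∞ ≤ A/m and ‖u‖_α ≤ A·m^{−1−α}. Let ρ : I → ℝ be a C² function with |ρ′(t)| ≤ 1 and ρ″(t) = u(t)·(1 − ρ′(t)²) for all t ∈ I. Then ‖ρ″‖_∞ ≤ A/m and ‖ρ″‖_α ≤ C·A·(1 + A)·m^{−1−α}·(1 + R/m). -/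
open Set

/-- The `C^{2,α}` estimate for solutions of `ρ'' = u (1 - ρ'²)`
(part 2 of Lemma 2.13 of the paper, in abstract form). -/
theorem rho_second_derivative_estimate :
    ∃ C : ℝ, 0 < C ∧
      ∀ (α m R A : ℝ) (I : Set ℝ) (u ρ ρ' ρ'' : ℝ → ℝ),
        0 < α → α ≤ 1 → 0 < m → m ≤ R → 0 < A →
        I.OrdConnected →
        (∀ s ∈ I, ∀ t ∈ I, |s - t| ≤ 2 * R) →
        (∀ t ∈ I, |u t| ≤ A / m) →
        (∀ s ∈ I, ∀ t ∈ I, |u s - u t| ≤ A * m ^ (-1 - α) * |s - t| ^ α) →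
        (∀ t ∈ I, HasDerivWithinAt ρ (ρ' t) I t) →
        (∀ t ∈ I, HasDerivWithinAt ρ' (ρ'' t) I t) →
        ContinuousOn ρ'' I →
        (∀ t ∈ I, |ρ' t| ≤ 1) →
        (∀ t ∈ I, ρ'' t = u t * (1 - ρ' t ^ 2)) →
        (∀ t ∈ I, |ρ'' t| ≤ A / m) ∧
        (∀ s ∈ I, ∀ t ∈ I,
          |ρ'' s - ρ'' t| ≤
            C * A * (1 + A) * m ^ (-1 - α) * (1 + R / m) * |s - t| ^ α) := by
  refine ⟨4, by norm_num, ?_⟩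
  intro α m R A I u ρ ρ' ρ'' hα hα1 hm hmR hA hord hdiam hu huH hρd hρ'd hcont hρ'le heq
  have hmne : m ≠ 0 := hm.ne'
  -- pointwise bound on ρ''
  have hbound : ∀ t ∈ I, |ρ'' t| ≤ A / m := by
    intro t ht
    rw [heq t ht, abs_mul]
    have h1 : |1 - ρ' t ^ 2| ≤ 1 := by
      have := hρ'le t ht
      have h2 : ρ' t ^ 2 ≤ 1 := by nlinarith [abs_nonneg (ρ' t), sq_abs (ρ' t)]
      rw [abs_le]; constructor <;> nlinarith [sq_nonneg (ρ' t)]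
    calc |u t| * |1 - ρ' t ^ 2| ≤ (A / m) * 1 :=
          mul_le_mul (hu t ht) h1 (abs_nonneg _) (by positivity)
      _ = A / m := mul_one _
  refine ⟨hbound, ?_⟩
  intro s hs t ht
  have hconv : Convex ℝ I := convex_iff_ordConnected.2 hord
  rcases eq_or_ne s t with rfl | hst
  · simp [Real.zero_rpow hα.ne', abs_nonneg]
  have hd : (0 : ℝ) < |s - t| := by
    rw [abs_pos]; exact sub_ne_zero_of_ne hst
  -- Lipschitz bound on ρ'
  have hρ'lip : |ρ' s - ρ' t| ≤ (A / m) * |s - t| := by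
    have := Convex.norm_image_sub_le_of_norm_hasDerivWithin_le hρ'd
      (fun x hx => by simpa using hbound x hx) hconv ht hs
    simpa [Real.norm_eq_abs] using this
  set P := m ^ (-1 - α : ℝ) with hP
  set Q := |s - t| ^ α with hQ
  have hPpos : 0 < P := Real.rpow_pos_of_pos hm _
  have hQpos : 0 < Q := Real.rpow_pos_of_pos hd _
  -- key: |s - t| ≤ 2 * R * m ^ (-α) * Q
  have hkey : |s - t| ≤ 2 * R * m ^ (-α : ℝ) * Q := by
    have h2R : (0 : ℝ) < 2 * R := by linarith
    have h1 : |s - t| = Q * |s - t| ^ (1 - α : ℝ) := by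
      rw [hQ, ← Real.rpow_add hd]; norm_num
    have h2 : |s - t| ^ (1 - α : ℝ) ≤ (2 * R) ^ (1 - α : ℝ) :=
      Real.rpow_le_rpow hd.le (hdiam s hs t ht) (by linarith)
    have h3 : (2 * R) ^ (1 - α : ℝ) ≤ 2 * R * m ^ (-α : ℝ) := by
      have : (2 * R) ^ (1 - α : ℝ) = (2 * R) * (2 * R) ^ (-α : ℝ) := by
        rw [show (1 - α : ℝ) = 1 + -α by ring, Real.rpow_add h2R, Real.rpow_one]
      rw [this]
      have h4 : (2 * R) ^ (-α : ℝ) ≤ m ^ (-α : ℝ) :=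
        Real.rpow_le_rpow_of_nonpos hm (by linarith) (by linarith)
      exact mul_le_mul_of_nonneg_left h4 h2R.le
    calc |s - t| = Q * |s - t| ^ (1 - α : ℝ) := h1
      _ ≤ Q * (2 * R) ^ (1 - α : ℝ) := mul_le_mul_of_nonneg_left h2 hQpos.le
      _ ≤ Q * (2 * R * m ^ (-α : ℝ)) := mul_le_mul_of_nonneg_left h3 hQpos.le
      _ = 2 * R * m ^ (-α : ℝ) * Q := by ring
  -- decompose the difference
  have hsq : ∀ x ∈ I, ρ' x ^ 2 ≤ 1 := by
    intro x hx
    have := hρ'le x hx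
    nlinarith [sq_abs (ρ' x), abs_nonneg (ρ' x)]
  have hdecomp : ρ'' s - ρ'' t
      = (u s - u t) * (1 - ρ' s ^ 2) + u t * ((ρ' t + ρ' s) * (ρ' t - ρ' s)) := by
    rw [heq s hs, heq t ht]; ring
  have hterm1 : |(u s - u t) * (1 - ρ' s ^ 2)| ≤ A * P * Q := by
    rw [abs_mul]
    have h1 : |1 - ρ' s ^ 2| ≤ 1 := by
      rw [abs_le]; constructor <;> nlinarith [sq_nonneg (ρ' s), hsq s hs]
    calc |u s - u t| * |1 - ρ' s ^ 2| ≤ (A * P * Q) * 1 :=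
          mul_le_mul (huH s hs t ht) h1 (abs_nonneg _) (by positivity)
      _ = A * P * Q := mul_one _
  have hterm2 : |u t * ((ρ' t + ρ' s) * (ρ' t - ρ' s))|
      ≤ (A / m) * (2 * ((A / m) * |s - t|)) := by
    rw [abs_mul, abs_mul]
    have h1 : |ρ' t + ρ' s| ≤ 2 := by
      calc |ρ' t + ρ' s| ≤ |ρ' t| + |ρ' s| := abs_add_le _ _
        _ ≤ 2 := by have := hρ'le t ht; have := hρ'le s hs; linarith
    have h2 : |ρ' t - ρ' s| ≤ (A / m) * |s - t| := by
      rw [abs_sub_comm]; exact hρ'lip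
    have h3 : |ρ' t + ρ' s| * |ρ' t - ρ' s| ≤ 2 * ((A / m) * |s - t|) :=
      mul_le_mul h1 h2 (abs_nonneg _) (by norm_num)
    exact mul_le_mul (hu t ht) h3 (by positivity) (by positivity)
  -- combine
  have hPm : P = m ^ (-α : ℝ) / m := by
    rw [hP, show (-1 - α : ℝ) = -α + -1 by ring, Real.rpow_add hm, Real.rpow_neg_one]
    ring
  have hterm2' : (A / m) * (2 * ((A / m) * |s - t|)) ≤ 4 * A ^ 2 * (R / m) * P * Q := by
    have h1 : (A / m) * (2 * ((A / m) * |s - t|))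
        ≤ (A / m) * (2 * ((A / m) * (2 * R * m ^ (-α : ℝ) * Q))) := by
      have : (A / m) * |s - t| ≤ (A / m) * (2 * R * m ^ (-α : ℝ) * Q) :=
        mul_le_mul_of_nonneg_left hkey (by positivity)
      nlinarith [div_pos hA hm, this]
    have h2 : (A / m) * (2 * ((A / m) * (2 * R * m ^ (-α : ℝ) * Q)))
        = 4 * A ^ 2 * (R / m) * P * Q := by
      rw [hPm]; field_simp; ring
    linarith
  calc |ρ'' s - ρ'' t|
      ≤ |(u s - u t) * (1 - ρ' s ^ 2)| + |u t * ((ρ' t + ρ' s) * (ρ' t - ρ' s))| := by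
        rw [hdecomp]; exact abs_add_le _ _
    _ ≤ A * P * Q + 4 * A ^ 2 * (R / m) * P * Q := by linarith [hterm2.trans hterm2']
    _ ≤ 4 * A * (1 + A) * P * (1 + R / m) * Q := by
        have hr : 0 < R / m := div_pos (by linarith) hm
        nlinarith [mul_pos hPpos hQpos, mul_pos hA hr,
          mul_pos (mul_pos hA hA) (mul_pos hPpos hQpos),
          mul_pos (mul_pos hA hr) (mul_pos hPpos hQpos)]
end

section
/- Let H, R > 0 with H·R² ≤ π²/4 and ε > 0. Let K₁, K₂ : (0, R] → ℝ be continuous with |K_i(x)| ≤ H and |K₁(x) − K₂(x)| ≤ ε for all x. For i = 1, 2 let G_i : (0, R] → ℝ be a C² solution of G_i″ + K_i·G_i = 0 with G_i(r) → 0 and G_i(r)/r → 1 as r → 0⁺. Then G₁ and G₂ are positive on (0, R] and |log(G₁(r)/G₂(r))| ≤ C·ε·r² for all r ∈ (0, R], where C is a universal constant. -/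
/-!
Write `q = G / t`. The function `V = t G' - G` has `V' = -t K G` and tends to `0` at `0⁺`
because `G'` stays bounded, so `|V| ≤ H M t³ / 3` with `M = sup |q|`; since `q' = V / t²`, this
gives `|q - 1| ≤ H M t² / 6 ≤ 5 M / 12`, as `H R² ≤ π² / 4 < 5 / 2`. Hence `M ≤ 12 / 7` and
`2 / 7 ≤ q ≤ 12 / 7`. For two solutions the Wronskian `W = G₁ G₂' - G₁' G₂` tends to `0` and
`W' = (K₁ - K₂) G₁ G₂ = O(ε t²)`, so `W = O(ε t³)`; then
`(log G₁ - log G₂)' = -W / (G₁ G₂) = O(ε t)` integrates to `O(ε r²)`.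
-/

open Set Filter Topology

lemma abs_sub_le_of_abs_deriv_le_mul_pow {F F' : ℝ → ℝ} {s r c : ℝ} {n : ℕ} (hsr : s ≤ r)
    (hF : ContinuousOn F (Icc s r)) (hF' : ∀ t ∈ Ico s r, HasDerivAt F (F' t) t)
    (hle : ∀ t ∈ Ico s r, |F' t| ≤ c * t ^ n) :
    |F r - F s| ≤ c * (r ^ (n + 1) - s ^ (n + 1)) / (n + 1) := by
  have hB : ∀ t, HasDerivAt (fun t => c * (t ^ (n + 1) - s ^ (n + 1)) / (n + 1)) (c * t ^ n) t := by
    intro t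
    refine ((((hasDerivAt_pow (n + 1) t).sub_const (s ^ (n + 1))).const_mul c).div_const
      ((n : ℝ) + 1)).congr_deriv ?_
    rw [Nat.add_sub_cancel]
    push_cast
    field_simp
  have := image_norm_le_of_norm_deriv_right_le_deriv_boundary (f := fun t => F t - F s)
    (hF.sub continuousOn_const) (fun t ht => ((hF' t ht).sub_const (F s)).hasDerivWithinAt)
    (by simp) hB hle (right_mem_Icc.2 hsr)
  simpa using this

lemma abs_sub_le_of_tendsto_of_abs_deriv_le_mul_pow {F F' : ℝ → ℝ} {r c a : ℝ} {n : ℕ}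
    (hF : ContinuousOn F (Ioc 0 r)) (hF' : ∀ t ∈ Ioo 0 r, HasDerivAt F (F' t) t)
    (hle : ∀ t ∈ Ioo 0 r, |F' t| ≤ c * t ^ n) (hlim : Tendsto F (𝓝[>] 0) (𝓝 a)) (hr : 0 < r) :
    |F r - a| ≤ c * r ^ (n + 1) / (n + 1) := by
  have hbound : ∀ s ∈ Ioo 0 r, |F r - F s| ≤ c * (r ^ (n + 1) - s ^ (n + 1)) / (n + 1) :=
    fun s hs => abs_sub_le_of_abs_deriv_le_mul_pow hs.2.le
      (hF.mono (Icc_subset_Ioc_iff hs.2.le |>.2 ⟨hs.1, le_rfl⟩))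
      (fun t ht => hF' t ⟨hs.1.trans_le ht.1, ht.2⟩) (fun t ht => hle t ⟨hs.1.trans_le ht.1, ht.2⟩)
  have hrhs : Tendsto (fun s : ℝ => c * (r ^ (n + 1) - s ^ (n + 1)) / (n + 1)) (𝓝[>] 0)
      (𝓝 (c * r ^ (n + 1) / (n + 1))) := by
    have : Continuous (fun s : ℝ => c * (r ^ (n + 1) - s ^ (n + 1)) / (n + 1)) := by fun_prop
    simpa using (this.tendsto 0).mono_left nhdsWithin_le_nhds
  refine le_of_tendsto_of_tendsto ((tendsto_const_nhds.sub hlim).abs) hrhs ?_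
  filter_upwards [Ioo_mem_nhdsGT hr] using hbound

lemma bddAbove_image_Ioc_of_tendsto {f : ℝ → ℝ} {a b l : ℝ} (hf : ContinuousOn f (Ioc a b))
    (hl : Tendsto f (𝓝[>] a) (𝓝 l)) : BddAbove (f '' Ioc a b) := by
  classical
  have hcont : ContinuousOn (Function.update f a l) (Icc a b) := by
    rw [continuousOn_update_iff, Icc_sdiff_left]
    exact ⟨hf, fun _ => hl.mono_left (nhdsWithin_mono _ Ioc_subset_Ioi_self)⟩
  refine (isCompact_Icc.bddAbove_image hcont).mono ?_
  rintro _ ⟨t, ht, rfl⟩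
  exact ⟨t, Ioc_subset_Icc_self ht, Function.update_of_ne ht.1.ne' _ _⟩

lemma abs_mul_apply_le {K G : ℝ → ℝ} {R H M : ℝ} (hK : ∀ x ∈ Ioc 0 R, |K x| ≤ H)
    (hM : ∀ t ∈ Ioc 0 R, |G t| ≤ M * t) {t : ℝ} (ht : t ∈ Ioc 0 R) :
    |K t * G t| ≤ H * M * t := by
  rw [abs_mul, mul_assoc]
  exact mul_le_mul (hK t ht) (hM t ht) (abs_nonneg _) ((abs_nonneg _).trans (hK t ht))

structure IsJacobiSolution (K G G' : ℝ → ℝ) (R : ℝ) : Prop where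
  hasDerivWithinAt : ∀ x ∈ Ioc 0 R, HasDerivWithinAt G (G' x) (Ioc 0 R) x
  hasDerivWithinAt_deriv : ∀ x ∈ Ioc 0 R, HasDerivWithinAt G' (-(K x * G x)) (Ioc 0 R) x

namespace IsJacobiSolution

variable {K G G' : ℝ → ℝ} {R H M : ℝ}

lemma hasDerivAt (h : IsJacobiSolution K G G' R) {t : ℝ} (ht : t ∈ Ioo 0 R) :
    HasDerivAt G (G' t) t :=
  (h.hasDerivWithinAt t (Ioo_subset_Ioc_self ht)).hasDerivAt (Ioc_mem_nhds ht.1 ht.2)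

lemma hasDerivAt_deriv (h : IsJacobiSolution K G G' R) {t : ℝ} (ht : t ∈ Ioo 0 R) :
    HasDerivAt G' (-(K t * G t)) t :=
  (h.hasDerivWithinAt_deriv t (Ioo_subset_Ioc_self ht)).hasDerivAt (Ioc_mem_nhds ht.1 ht.2)

lemma continuousOn (h : IsJacobiSolution K G G' R) : ContinuousOn G (Ioc 0 R) :=
  fun x hx => (h.hasDerivWithinAt x hx).continuousWithinAt

lemma continuousOn_deriv (h : IsJacobiSolution K G G' R) : ContinuousOn G' (Ioc 0 R) :=
  fun x hx => (h.hasDerivWithinAt_deriv x hx).continuousWithinAt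

lemma abs_deriv_le (h : IsJacobiSolution K G G' R) (hK : ∀ x ∈ Ioc 0 R, |K x| ≤ H)
    (hM : ∀ t ∈ Ioc 0 R, |G t| ≤ M * t) {t : ℝ} (ht : t ∈ Ioc 0 R) :
    |G' t| ≤ |G' R| + H * M * R ^ 2 / 2 := by
  have hHM : 0 ≤ H * M := by
    have := (abs_nonneg _).trans (abs_mul_apply_le hK hM ht)
    exact nonneg_of_mul_nonneg_left this ht.1
  have hsub : Icc t R ⊆ Ioc 0 R := Icc_subset_Ioc_iff ht.2 |>.2 ⟨ht.1, le_rfl⟩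
  have hIco : ∀ x ∈ Ico t R, x ∈ Ioo 0 R := fun x hx => ⟨ht.1.trans_le hx.1, hx.2⟩
  have := abs_sub_le_of_abs_deriv_le_mul_pow (n := 1) ht.2 (h.continuousOn_deriv.mono hsub)
    (fun x hx => h.hasDerivAt_deriv (hIco x hx))
    (fun x hx => by simpa using abs_mul_apply_le hK hM (hsub (Ico_subset_Icc_self hx)))
  have := abs_sub_abs_le_abs_sub (G' t) (G' R)
  rw [abs_sub_comm] at this
  nlinarith [sq_nonneg t]

lemma tendsto_mul_deriv (h : IsJacobiSolution K G G' R) (hK : ∀ x ∈ Ioc 0 R, |K x| ≤ H)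
    (hM : ∀ t ∈ Ioc 0 R, |G t| ≤ M * t) (hR : 0 < R) :
    Tendsto (fun t => t * G' t) (𝓝[>] 0) (𝓝 0) := by
  set C := |G' R| + H * M * R ^ 2 / 2
  refine squeeze_zero_norm' ?_ (tendsto_nhdsWithin_of_tendsto_nhds
    (((continuous_id.mul continuous_const).tendsto' 0 0 (zero_mul C))))
  filter_upwards [Ioc_mem_nhdsGT hR] with t ht
  rw [Real.norm_eq_abs, abs_mul, abs_of_pos ht.1]
  exact mul_le_mul_of_nonneg_left (h.abs_deriv_le hK hM ht) ht.1.le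

lemma abs_mul_deriv_sub_le (h : IsJacobiSolution K G G' R) (hK : ∀ x ∈ Ioc 0 R, |K x| ≤ H)
    (hM : ∀ t ∈ Ioc 0 R, |G t| ≤ M * t) (h0 : Tendsto G (𝓝[>] 0) (𝓝 0)) {r : ℝ}
    (hr : r ∈ Ioc 0 R) : |r * G' r - G r| ≤ H * M * r ^ 3 / 3 := by
  have hR : 0 < R := hr.1.trans_le hr.2
  have hIoo : ∀ t ∈ Ioo 0 r, t ∈ Ioo 0 R := fun t ht => ⟨ht.1, ht.2.trans_le hr.2⟩
  have hlim : Tendsto (fun t => t * G' t - G t) (𝓝[>] 0) (𝓝 0) := by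
    simpa using (h.tendsto_mul_deriv hK hM hR).sub h0
  have := abs_sub_le_of_tendsto_of_abs_deriv_le_mul_pow (n := 2) (F' := fun t => t * -(K t * G t))
    ((continuousOn_id.mul h.continuousOn_deriv).sub h.continuousOn |>.mono
      (Ioc_subset_Ioc_right hr.2))
    (fun t ht => by
      refine (((hasDerivAt_id t).mul (h.hasDerivAt_deriv (hIoo t ht))).sub
        (h.hasDerivAt (hIoo t ht))).congr_deriv ?_
      simp only [id]; ring)
    (fun t ht => by
      rw [abs_mul, abs_neg, abs_of_pos ht.1]
      have := abs_mul_apply_le hK hM (Ioo_subset_Ioc_self (hIoo t ht))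
      nlinarith [ht.1])
    hlim hr.1
  norm_num at this
  linarith

lemma abs_div_sub_one_le (h : IsJacobiSolution K G G' R) (hK : ∀ x ∈ Ioc 0 R, |K x| ≤ H)
    (hM : ∀ t ∈ Ioc 0 R, |G t| ≤ M * t) (h0 : Tendsto G (𝓝[>] 0) (𝓝 0))
    (h1 : Tendsto (fun r => G r / r) (𝓝[>] 0) (𝓝 1)) {r : ℝ} (hr : r ∈ Ioc 0 R) :
    |G r / r - 1| ≤ H * M * r ^ 2 / 6 := by
  have hIoo : ∀ t ∈ Ioo 0 r, t ∈ Ioo 0 R := fun t ht => ⟨ht.1, ht.2.trans_le hr.2⟩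
  have := abs_sub_le_of_tendsto_of_abs_deriv_le_mul_pow (n := 1) (c := H * M / 3)
    (F' := fun t => (t * G' t - G t) / t ^ 2)
    (h.continuousOn.div continuousOn_id (fun t ht => ht.1.ne') |>.mono
      (Ioc_subset_Ioc_right hr.2))
    (fun t ht => by
      refine ((h.hasDerivAt (hIoo t ht)).div (hasDerivAt_id t) ht.1.ne').congr_deriv ?_
      simp only [id]; ring)
    (fun t ht => by
      have := h.abs_mul_deriv_sub_le hK hM h0 (Ioo_subset_Ioc_self (hIoo t ht))
      rw [abs_div, abs_of_pos (pow_pos ht.1 2), div_le_iff₀ (pow_pos ht.1 2)]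
      linarith)
    h1 hr.1
  norm_num at this
  linarith

lemma apply_mem_Icc (h : IsJacobiSolution K G G' R) (hK : ∀ x ∈ Ioc 0 R, |K x| ≤ H)
    (hHR : H * R ^ 2 ≤ Real.pi ^ 2 / 4) (h0 : Tendsto G (𝓝[>] 0) (𝓝 0))
    (h1 : Tendsto (fun r => G r / r) (𝓝[>] 0) (𝓝 1)) :
    ∀ r ∈ Ioc 0 R, G r ∈ Icc (2 / 7 * r) (12 / 7 * r) := by
  intro r hr
  set S := (fun t => |G t / t|) '' Ioc 0 R
  have hS : BddAbove S := bddAbove_image_Ioc_of_tendsto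
    (h.continuousOn.div continuousOn_id fun t ht => ht.1.ne').abs (by simpa using h1.abs)
  set M := sSup S
  have hle : ∀ t ∈ Ioc 0 R, |G t / t| ≤ M := fun t ht => le_csSup hS (mem_image_of_mem _ ht)
  have hM : ∀ t ∈ Ioc 0 R, |G t| ≤ M * t := fun t ht => by
    have := hle t ht
    rwa [abs_div, abs_of_pos ht.1, div_le_iff₀ ht.1] at this
  have hclose : ∀ t ∈ Ioc 0 R, |G t / t - 1| ≤ 5 / 12 * M := fun t ht => by
    have hH : 0 ≤ H := (abs_nonneg _).trans (hK t ht)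
    have hHt : H * t ^ 2 ≤ H * R ^ 2 :=
      mul_le_mul_of_nonneg_left (pow_le_pow_left₀ ht.1.le ht.2 2) hH
    have hpi : Real.pi ^ 2 < 3.15 ^ 2 := pow_lt_pow_left₀ Real.pi_lt_d2 Real.pi_pos.le two_ne_zero
    have hM0 : 0 ≤ M := (abs_nonneg _).trans (hle t ht)
    have := h.abs_div_sub_one_le hK hM h0 h1 ht
    nlinarith
  have hM' : M ≤ 12 / 7 := by
    have : M ≤ 1 + 5 / 12 * M := csSup_le ⟨_, mem_image_of_mem _ hr⟩ <| by
      rintro _ ⟨t, ht, rfl⟩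
      linarith [hclose t ht, abs_sub_abs_le_abs_sub (G t / t) 1, abs_one (α := ℝ)]
    linarith
  obtain ⟨hlo, hhi⟩ := abs_le.1 ((hclose r hr).trans (show 5 / 12 * M ≤ 5 / 7 by linarith))
  constructor
  · rw [← le_div_iff₀ hr.1]; linarith
  · rw [← div_le_iff₀ hr.1]; linarith

end IsJacobiSolution

lemma abs_le_mul_of_mem_Icc {x t m M : ℝ} (hm : 0 ≤ m) (ht : 0 ≤ t) (hx : x ∈ Icc (m * t) (M * t)) :
    |x| ≤ M * t :=
  abs_le.2 ⟨by nlinarith [hx.1, hx.2, mul_nonneg hm ht], hx.2⟩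

def wronskian (G₁ G₁' G₂ G₂' : ℝ → ℝ) (t : ℝ) : ℝ := G₁ t * G₂' t - G₁' t * G₂ t

lemma tendsto_wronskian_zero {G₁ G₁' G₂ G₂' : ℝ → ℝ}
    (h1₁ : Tendsto (fun r => G₁ r / r) (𝓝[>] 0) (𝓝 1))
    (h1₂ : Tendsto (fun r => G₂ r / r) (𝓝[>] 0) (𝓝 1))
    (hd₁ : Tendsto (fun t => t * G₁' t) (𝓝[>] 0) (𝓝 0))
    (hd₂ : Tendsto (fun t => t * G₂' t) (𝓝[>] 0) (𝓝 0)) :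
    Tendsto (wronskian G₁ G₁' G₂ G₂') (𝓝[>] 0) (𝓝 0) := by
  have := (h1₁.mul hd₂).sub (hd₁.mul h1₂)
  rw [mul_zero, zero_mul, sub_zero] at this
  refine this.congr' ?_
  filter_upwards [self_mem_nhdsWithin] with t (ht : 0 < t)
  simp only [wronskian]
  field_simp

lemma abs_div_sub_div_le_of_abs_wronskian_le {G₁ G₁' G₂ G₂' : ℝ → ℝ} {t c m₁ m₂ : ℝ}
    (ht : 0 < t) (hm₁ : 0 < m₁) (hm₂ : 0 < m₂) (hb₁ : m₁ * t ≤ G₁ t) (hb₂ : m₂ * t ≤ G₂ t)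
    (hW : |wronskian G₁ G₁' G₂ G₂' t| ≤ c * t ^ 3) :
    |G₁' t / G₁ t - G₂' t / G₂ t| ≤ c / (m₁ * m₂) * t := by
  have hpos₁ : 0 < G₁ t := (mul_pos hm₁ ht).trans_le hb₁
  have hpos₂ : 0 < G₂ t := (mul_pos hm₂ ht).trans_le hb₂
  have hprod : m₁ * m₂ * t ^ 2 ≤ G₁ t * G₂ t := by
    nlinarith [mul_pos hm₁ ht, mul_pos hm₂ ht]
  have hc : 0 ≤ c := nonneg_of_mul_nonneg_left ((abs_nonneg _).trans hW) (pow_pos ht 3)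
  have hlogDeriv : G₁' t / G₁ t - G₂' t / G₂ t = -wronskian G₁ G₁' G₂ G₂' t / (G₁ t * G₂ t) := by
    unfold wronskian
    field_simp
    ring
  rw [hlogDeriv, abs_div, abs_neg, abs_of_pos (mul_pos hpos₁ hpos₂),
    div_le_iff₀ (mul_pos hpos₁ hpos₂)]
  calc |wronskian G₁ G₁' G₂ G₂' t| ≤ c / (m₁ * m₂) * t * (m₁ * m₂ * t ^ 2) := by
        rwa [show c / (m₁ * m₂) * t * (m₁ * m₂ * t ^ 2) = c * t ^ 3 by field_simp]
    _ ≤ c / (m₁ * m₂) * t * (G₁ t * G₂ t) :=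
        mul_le_mul_of_nonneg_left hprod (by positivity)

namespace IsJacobiSolution

variable {K₁ K₂ G₁ G₂ G₁' G₂' : ℝ → ℝ} {R ε m₁ m₂ M₁ M₂ : ℝ}

lemma hasDerivAt_wronskian (h₁ : IsJacobiSolution K₁ G₁ G₁' R)
    (h₂ : IsJacobiSolution K₂ G₂ G₂' R) {t : ℝ} (ht : t ∈ Ioo 0 R) :
    HasDerivAt (wronskian G₁ G₁' G₂ G₂') ((K₁ t - K₂ t) * (G₁ t * G₂ t)) t :=
  (((h₁.hasDerivAt ht).mul (h₂.hasDerivAt_deriv ht)).sub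
    ((h₁.hasDerivAt_deriv ht).mul (h₂.hasDerivAt ht))).congr_deriv (by ring)

lemma abs_wronskian_le (h₁ : IsJacobiSolution K₁ G₁ G₁' R) (h₂ : IsJacobiSolution K₂ G₂ G₂' R)
    (hK : ∀ x ∈ Ioc 0 R, |K₁ x - K₂ x| ≤ ε) (hm₁ : 0 ≤ m₁) (hm₂ : 0 ≤ m₂)
    (hb₁ : ∀ t ∈ Ioc 0 R, G₁ t ∈ Icc (m₁ * t) (M₁ * t))
    (hb₂ : ∀ t ∈ Ioc 0 R, G₂ t ∈ Icc (m₂ * t) (M₂ * t))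
    (hW : Tendsto (wronskian G₁ G₁' G₂ G₂') (𝓝[>] 0) (𝓝 0)) :
    ∀ r ∈ Ioc 0 R, |wronskian G₁ G₁' G₂ G₂' r| ≤ ε * M₁ * M₂ / 3 * r ^ 3 := by
  intro r hr
  have hIoo : ∀ t ∈ Ioo 0 r, t ∈ Ioo 0 R := fun t ht => ⟨ht.1, ht.2.trans_le hr.2⟩
  have := abs_sub_le_of_tendsto_of_abs_deriv_le_mul_pow (n := 2) (c := ε * M₁ * M₂)
    (((h₁.continuousOn.mul h₂.continuousOn_deriv).sub
      (h₁.continuousOn_deriv.mul h₂.continuousOn)).mono (Ioc_subset_Ioc_right hr.2))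
    (fun t ht => h₁.hasDerivAt_wronskian h₂ (hIoo t ht))
    (fun t ht => by
      have ht' := Ioo_subset_Ioc_self (hIoo t ht)
      have hG₁ := abs_le_mul_of_mem_Icc hm₁ ht.1.le (hb₁ t ht')
      have hG₂ := abs_le_mul_of_mem_Icc hm₂ ht.1.le (hb₂ t ht')
      rw [abs_mul, abs_mul]
      calc |K₁ t - K₂ t| * (|G₁ t| * |G₂ t|) ≤ ε * (M₁ * t * (M₂ * t)) :=
            mul_le_mul (hK t ht') (mul_le_mul hG₁ hG₂ (abs_nonneg _)
              ((abs_nonneg _).trans hG₁)) (by positivity) ((abs_nonneg _).trans (hK t ht'))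
        _ = ε * M₁ * M₂ * t ^ 2 := by ring)
    hW hr.1
  norm_num at this
  unfold wronskian
  linarith

lemma abs_log_sub_log_le (h₁ : IsJacobiSolution K₁ G₁ G₁' R) (h₂ : IsJacobiSolution K₂ G₂ G₂' R)
    {c : ℝ} (hW : ∀ t ∈ Ioc 0 R, |wronskian G₁ G₁' G₂ G₂' t| ≤ c * t ^ 3)
    (hm₁ : 0 < m₁) (hm₂ : 0 < m₂)
    (hb₁ : ∀ t ∈ Ioc 0 R, m₁ * t ≤ G₁ t) (hb₂ : ∀ t ∈ Ioc 0 R, m₂ * t ≤ G₂ t)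
    (h1₁ : Tendsto (fun r => G₁ r / r) (𝓝[>] 0) (𝓝 1))
    (h1₂ : Tendsto (fun r => G₂ r / r) (𝓝[>] 0) (𝓝 1)) {r : ℝ} (hr : r ∈ Ioc 0 R) :
    |Real.log (G₁ r) - Real.log (G₂ r)| ≤ c / (m₁ * m₂) * r ^ 2 / 2 := by
  have hIoo : ∀ t ∈ Ioo 0 r, t ∈ Ioo 0 R := fun t ht => ⟨ht.1, ht.2.trans_le hr.2⟩
  have hpos₁ : ∀ t ∈ Ioc 0 R, 0 < G₁ t := fun t ht => (mul_pos hm₁ ht.1).trans_le (hb₁ t ht)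
  have hpos₂ : ∀ t ∈ Ioc 0 R, 0 < G₂ t := fun t ht => (mul_pos hm₂ ht.1).trans_le (hb₂ t ht)
  have hlim : Tendsto (fun t => Real.log (G₁ t) - Real.log (G₂ t)) (𝓝[>] 0) (𝓝 0) := by
    have hlog := (Real.continuousAt_log one_ne_zero).tendsto
    rw [Real.log_one] at hlog
    have := (hlog.comp h1₁).sub (hlog.comp h1₂)
    rw [sub_zero] at this
    refine this.congr' ?_
    filter_upwards [Ioc_mem_nhdsGT (hr.1.trans_le hr.2)] with t ht
    simp only [Function.comp, Real.log_div (hpos₁ t ht).ne' ht.1.ne',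
      Real.log_div (hpos₂ t ht).ne' ht.1.ne']
    ring
  have := abs_sub_le_of_tendsto_of_abs_deriv_le_mul_pow (n := 1) (c := c / (m₁ * m₂))
    (F' := fun t => G₁' t / G₁ t - G₂' t / G₂ t)
    (((h₁.continuousOn.log fun t ht => (hpos₁ t ht).ne').sub
      (h₂.continuousOn.log fun t ht => (hpos₂ t ht).ne')).mono (Ioc_subset_Ioc_right hr.2))
    (fun t ht =>
      have ht' := Ioo_subset_Ioc_self (hIoo t ht)
      ((h₁.hasDerivAt (hIoo t ht)).log (hpos₁ t ht').ne').sub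
        ((h₂.hasDerivAt (hIoo t ht)).log (hpos₂ t ht').ne'))
    (fun t ht => by
      have ht' := Ioo_subset_Ioc_self (hIoo t ht)
      rw [pow_one]
      exact abs_div_sub_div_le_of_abs_wronskian_le ht.1 hm₁ hm₂ (hb₁ t ht') (hb₂ t ht')
        (hW t ht'))
    hlim hr.1
  norm_num at this
  exact this

end IsJacobiSolution

/-- Stability of the Jacobi equation: solutions with nearby coefficients have
logarithmically close values (from the proof of Theorem B, Section 3 of the paper). -/
theorem jacobi_stability :
    ∃ C : ℝ, 0 < C ∧
      ∀ (H R ε : ℝ) (K₁ K₂ G₁ G₂ G₁' G₂' : ℝ → ℝ),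
        0 < H → 0 < R → 0 < ε → H * R ^ 2 ≤ Real.pi ^ 2 / 4 →
        ContinuousOn K₁ (Ioc 0 R) → ContinuousOn K₂ (Ioc 0 R) →
        (∀ x ∈ Ioc (0:ℝ) R, |K₁ x| ≤ H ∧ |K₂ x| ≤ H ∧ |K₁ x - K₂ x| ≤ ε) →
        (∀ x ∈ Ioc (0:ℝ) R, HasDerivWithinAt G₁ (G₁' x) (Ioc 0 R) x) →
        (∀ x ∈ Ioc (0:ℝ) R, HasDerivWithinAt G₁' (-(K₁ x * G₁ x)) (Ioc 0 R) x) →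
        (∀ x ∈ Ioc (0:ℝ) R, HasDerivWithinAt G₂ (G₂' x) (Ioc 0 R) x) →
        (∀ x ∈ Ioc (0:ℝ) R, HasDerivWithinAt G₂' (-(K₂ x * G₂ x)) (Ioc 0 R) x) →
        Filter.Tendsto G₁ (nhdsWithin 0 (Ioi 0)) (nhds 0) →
        Filter.Tendsto G₂ (nhdsWithin 0 (Ioi 0)) (nhds 0) →
        Filter.Tendsto (fun r => G₁ r / r) (nhdsWithin 0 (Ioi 0)) (nhds 1) →
        Filter.Tendsto (fun r => G₂ r / r) (nhdsWithin 0 (Ioi 0)) (nhds 1) →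
        ∀ r ∈ Ioc (0:ℝ) R,
          0 < G₁ r ∧ 0 < G₂ r ∧ |Real.log (G₁ r / G₂ r)| ≤ C * ε * r ^ 2 := by
  refine ⟨6, by norm_num, ?_⟩
  intro H R ε K₁ K₂ G₁ G₂ G₁' G₂' _ hR _ hHR _ _ hK hG₁ hG₁' hG₂ hG₂' h0₁ h0₂ h1₁ h1₂ r hr
  have s₁ : IsJacobiSolution K₁ G₁ G₁' R := ⟨hG₁, hG₁'⟩
  have s₂ : IsJacobiSolution K₂ G₂ G₂' R := ⟨hG₂, hG₂'⟩
  have hb₁ := s₁.apply_mem_Icc (fun x hx => (hK x hx).1) hHR h0₁ h1₁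
  have hb₂ := s₂.apply_mem_Icc (fun x hx => (hK x hx).2.1) hHR h0₂ h1₂
  have hW₀ := tendsto_wronskian_zero h1₁ h1₂
    (s₁.tendsto_mul_deriv (fun x hx => (hK x hx).1)
      (fun t ht => abs_le_mul_of_mem_Icc (by norm_num) ht.1.le (hb₁ t ht)) hR)
    (s₂.tendsto_mul_deriv (fun x hx => (hK x hx).2.1)
      (fun t ht => abs_le_mul_of_mem_Icc (by norm_num) ht.1.le (hb₂ t ht)) hR)
  have hW := s₁.abs_wronskian_le s₂ (fun x hx => (hK x hx).2.2) (by norm_num) (by norm_num)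
    hb₁ hb₂ hW₀
  have hpos₁ : 0 < G₁ r := by linarith [(hb₁ r hr).1, hr.1]
  have hpos₂ : 0 < G₂ r := by linarith [(hb₂ r hr).1, hr.1]
  refine ⟨hpos₁, hpos₂, ?_⟩
  rw [Real.log_div hpos₁.ne' hpos₂.ne']
  calc _ ≤ _ := s₁.abs_log_sub_log_le s₂ hW (by norm_num) (by norm_num)
        (fun t ht => (hb₁ t ht).1) (fun t ht => (hb₂ t ht).1) h1₁ h1₂ hr
    _ = 6 * ε * r ^ 2 := by ring
end

section
/- Let H, r₀ > 0 with H·r₀² ≤ π²/4, let K : (0, r₀] → [−H, H] be continuous, and let G : (0, r₀] → ℝ be a C² solution of G″ + K·G = 0 with G(r) → 0 and G(r)/r → 1 as r → 0⁺. Then G′(r₀) ≥ cos(√H·r₀), and consequently ∫₀^{r₀} K(r)·G(r) dr = 1 − G′(r₀) ≤ 1 − cos(√H·r₀). -/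
/-!
Near `0` the equation gives `|G''| = |K G| = O(1)`, so `G'(r) - G(r)/r = O(r)`; hence
`G'(0⁺) = 1`, and the integral identity is the fundamental theorem of calculus for `G'`.

For the bound, compare `G` with the solution `sn(r) = sin(√H r)/√H` of `y'' + H y = 0`. The
Wronskian `W = G' sn - G sn'` vanishes at `0⁺` and has `W' = (H - K) G sn ≥ 0` as long as
`G ≥ 0`; then `(G / sn)' = W / sn² ≥ 0` and `G/sn → 1` give `G ≥ sn > 0`, which keeps `G`
positive on all of `(0, r₀]` because `√H r₀ ≤ π/2`. At `r₀`, `G' sn ≥ G sn' ≥ sn sn'`, and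
`sn' = cos(√H ·)`.
-/

open Set Filter Topology MeasureTheory

-- `sn κ` and `cs κ` solve `y'' + κ y = 0` with `(y, y')(0) = (0, 1)` and `(1, 0)` respectively.
noncomputable def sn (κ r : ℝ) : ℝ := Real.sin (√κ * r) / √κ

noncomputable def cs (κ r : ℝ) : ℝ := Real.cos (√κ * r)

section Model

variable {κ r : ℝ}

lemma hasDerivAt_sn (hκ : 0 < κ) (r : ℝ) : HasDerivAt (sn κ) (cs κ r) r := by
  have hs : √κ ≠ 0 := (Real.sqrt_pos.2 hκ).ne'
  refine (((Real.hasDerivAt_sin (√κ * r)).comp r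
    ((hasDerivAt_id r).const_mul √κ)).div_const √κ).congr_deriv ?_
  unfold cs
  field_simp

lemma hasDerivAt_cs (hκ : 0 < κ) (r : ℝ) : HasDerivAt (cs κ) (-(κ * sn κ r)) r := by
  have hs : √κ ≠ 0 := (Real.sqrt_pos.2 hκ).ne'
  refine ((Real.hasDerivAt_cos (√κ * r)).comp r ((hasDerivAt_id r).const_mul √κ)).congr_deriv ?_
  unfold sn
  field_simp
  rw [Real.sq_sqrt hκ.le, mul_comm]

lemma continuous_sn (hκ : 0 < κ) : Continuous (sn κ) :=
  continuous_iff_continuousAt.2 fun r => (hasDerivAt_sn hκ r).continuousAt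

lemma continuous_cs : Continuous (cs κ) := by
  unfold cs; fun_prop

lemma sn_pos (hκ : 0 < κ) (hr : 0 < r) (hrπ : √κ * r < Real.pi) : 0 < sn κ r :=
  div_pos (Real.sin_pos_of_pos_of_lt_pi (mul_pos (Real.sqrt_pos.2 hκ) hr) hrπ)
    (Real.sqrt_pos.2 hκ)

lemma cs_nonneg (hr : 0 ≤ r) (hrπ : √κ * r ≤ Real.pi / 2) : 0 ≤ cs κ r :=
  Real.cos_nonneg_of_mem_Icc ⟨by linarith [Real.pi_pos, mul_nonneg (Real.sqrt_nonneg κ) hr], hrπ⟩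

lemma tendsto_sn_div_self (hκ : 0 < κ) : Tendsto (fun r => sn κ r / r) (𝓝[>] 0) (𝓝 1) := by
  simpa [sn, cs, div_eq_inv_mul] using (hasDerivAt_sn hκ 0).tendsto_slope_zero_right

end Model

section Interval

variable {f f' : ℝ → ℝ} {a b : ℝ}

lemma exists_bound_of_continuousOn_Ioc {l : ℝ} (hf : ContinuousOn f (Ioc a b))
    (hlim : Tendsto f (𝓝[>] a) (𝓝 l)) : ∃ C, ∀ x ∈ Ioc a b, |f x| ≤ C := by
  obtain ⟨u, hau, hnear⟩ := (mem_nhdsGT_iff_exists_Ioo_subset).1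
    (hlim.abs.eventually (gt_mem_nhds (lt_add_one |l|)))
  obtain ⟨C, hC⟩ := isCompact_Icc.exists_bound_of_continuousOn
    (hf.mono fun x hx => ⟨hau.trans_le hx.1, hx.2⟩ : ContinuousOn f (Icc u b))
  refine ⟨max C (|l| + 1), fun x hx => ?_⟩
  rcases lt_or_ge x u with hxu | hxu
  · exact (hnear ⟨hx.1, hxu⟩).le.trans (le_max_right _ _)
  · exact (hC x ⟨hxu, hx.2⟩).trans (le_max_left _ _)

lemma intervalIntegrable_of_continuousOn_Ioc {C : ℝ} (hab : a ≤ b)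
    (hf : ContinuousOn f (Ioc a b)) (hC : ∀ x ∈ Ioc a b, |f x| ≤ C) :
    IntervalIntegrable f volume a b := by
  rw [intervalIntegrable_iff_integrableOn_Ioc_of_le hab]
  exact (integrable_const C).mono' (hf.aestronglyMeasurable measurableSet_Ioc)
    ((ae_restrict_iff' measurableSet_Ioc).2 (ae_of_all _ hC))

lemma le_of_tendsto_of_hasDerivAt_nonneg {l : ℝ} (hf : ContinuousOn f (Ioc a b))
    (hf' : ∀ x ∈ Ioo a b, HasDerivAt f (f' x) x) (hf'₀ : ∀ x ∈ Ioo a b, 0 ≤ f' x)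
    (hlim : Tendsto f (𝓝[>] a) (𝓝 l)) {x : ℝ} (hx : x ∈ Ioc a b) : l ≤ f x := by
  have hmono : MonotoneOn f (Ioc a b) :=
    monotoneOn_of_hasDerivWithinAt_nonneg (convex_Ioc a b) hf
      (by simpa using fun y hy => (hf' y hy).hasDerivWithinAt) (by simpa using hf'₀)
  refine le_of_tendsto hlim ?_
  filter_upwards [Ioo_mem_nhdsGT hx.1] with y hy
  exact hmono ⟨hy.1, hy.2.le.trans hx.2⟩ hx hy.2.le

lemma pos_of_forall_Ioo_pos (hf : ContinuousOn f (Ioc a b)) (hnear : ∀ᶠ x in 𝓝[>] a, 0 < f x)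
    (hstep : ∀ ρ ∈ Ioc a b, (∀ x ∈ Ioo a ρ, 0 < f x) → 0 < f ρ) {x : ℝ} (hx : x ∈ Ioc a b) :
    0 < f x := by
  obtain ⟨u, hau, hu⟩ := (mem_nhdsGT_iff_exists_Ioo_subset).1 hnear
  by_contra! hfx
  have hxu : u ≤ x := not_lt.1 fun h => (hu ⟨hx.1, h⟩ : 0 < f x).not_ge hfx
  set Z := Icc u b ∩ f ⁻¹' Iic 0
  have hZ : IsCompact Z := isCompact_Icc.of_isClosed_subset
    ((hf.mono fun y hy => ⟨hau.trans_le hy.1, hy.2⟩).preimage_isClosed_of_isClosed isClosed_Icc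
      isClosed_Iic) inter_subset_left
  obtain ⟨z, ⟨hzZ, hfz⟩, hzmin⟩ := hZ.exists_isLeast ⟨x, ⟨hxu, hx.2⟩, hfx⟩
  refine (hstep z ⟨hau.trans_le hzZ.1, hzZ.2⟩ fun y hy => ?_).not_ge hfz
  rcases lt_or_ge y u with hyu | hyu
  · exact hu ⟨hy.1, hyu⟩
  · by_contra! hfy
    exact (hzmin ⟨⟨hyu, hy.2.le.trans hzZ.2⟩, hfy⟩).not_gt hy.2

lemma integral_eq_sub_of_tendsto_nhdsGT {l C : ℝ} (hab : a < b)
    (hf : ∀ x ∈ Ioc a b, HasDerivWithinAt f (f' x) (Ioc a b) x)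
    (hf'c : ContinuousOn f' (Ioc a b)) (hC : ∀ x ∈ Ioc a b, |f' x| ≤ C)
    (hlim : Tendsto f (𝓝[>] a) (𝓝 l)) : ∫ x in a..b, f' x = f b - l := by
  refine intervalIntegral.integral_eq_sub_of_hasDerivAt_of_tendsto hab
    (fun x hx => (hf x ⟨hx.1, hx.2.le⟩).hasDerivAt (Ioc_mem_nhds hx.1 hx.2))
    (intervalIntegrable_of_continuousOn_Ioc hab.le hf'c hC) hlim ?_
  exact ((hf b ⟨hab, le_rfl⟩).continuousWithinAt.mono Ioo_subset_Ioc_self).tendsto.mono_left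
    (le_of_eq (nhdsWithin_Ioo_eq_nhdsLT hab).symm)

end Interval

section SecondOrder

variable {f f' f'' : ℝ → ℝ} {b C : ℝ}

lemma abs_sub_mul_deriv_le (hf : ∀ x ∈ Ioc 0 b, HasDerivWithinAt f (f' x) (Ioc 0 b) x)
    (hf' : ∀ x ∈ Ioc 0 b, HasDerivWithinAt f' (f'' x) (Ioc 0 b) x)
    (hC : ∀ x ∈ Ioc 0 b, |f'' x| ≤ C) (h0 : Tendsto f (𝓝[>] 0) (𝓝 0)) {r : ℝ}
    (hr : r ∈ Ioc 0 b) : |f r - r * f' r| ≤ C * r ^ 2 := by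
  have hsub : Ioc 0 r ⊆ Ioc 0 b := Ioc_subset_Ioc_right hr.2
  have hlip : ∀ t ∈ Ioc 0 r, ‖f' t - f' r‖ ≤ C * r := fun t ht => by
    have := (convex_Ioc 0 b).norm_image_sub_le_of_norm_hasDerivWithin_le hf' hC hr (hsub ht)
    have hC0 : 0 ≤ C := (abs_nonneg _).trans (hC r hr)
    rw [Real.norm_eq_abs (t - r), abs_sub_comm, abs_of_nonneg (sub_nonneg.2 ht.2)] at this
    exact this.trans (by nlinarith [ht.1])
  have hg : ∀ t ∈ Ioc 0 r, HasDerivWithinAt (fun t => f t - t * f' r) (f' t - f' r) (Ioc 0 r) t :=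
    fun t ht =>
      (((hf t (hsub ht)).mono hsub).sub ((hasDerivWithinAt_id t _).mul_const (f' r))).congr_deriv
        (by ring)
  have hev : ∀ᶠ ε in 𝓝[>] 0, |f r - r * f' r - (f ε - ε * f' r)| ≤ C * r ^ 2 := by
    filter_upwards [Ioo_mem_nhdsGT hr.1] with ε hε
    have := (convex_Ioc 0 r).norm_image_sub_le_of_norm_hasDerivWithin_le hg hlip
      ⟨hε.1, hε.2.le⟩ ⟨hr.1, le_rfl⟩
    rw [Real.norm_eq_abs (r - ε), abs_of_pos (sub_pos.2 hε.2)] at this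
    rw [← Real.norm_eq_abs]
    exact this.trans (by nlinarith [hε.1, (norm_nonneg _).trans (hlip r ⟨hr.1, le_rfl⟩)])
  refine le_of_tendsto ?_ hev
  simpa using (tendsto_const_nhds.sub (h0.sub (tendsto_nhdsWithin_of_tendsto_nhds
    (tendsto_id.mul_const (f' r))))).abs

lemma tendsto_deriv_of_tendsto_div_self {L : ℝ} (hb : 0 < b)
    (hf : ∀ x ∈ Ioc 0 b, HasDerivWithinAt f (f' x) (Ioc 0 b) x)
    (hf' : ∀ x ∈ Ioc 0 b, HasDerivWithinAt f' (f'' x) (Ioc 0 b) x)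
    (hC : ∀ x ∈ Ioc 0 b, |f'' x| ≤ C) (h0 : Tendsto f (𝓝[>] 0) (𝓝 0))
    (h1 : Tendsto (fun r => f r / r) (𝓝[>] 0) (𝓝 L)) : Tendsto f' (𝓝[>] 0) (𝓝 L) := by
  have hclose : Tendsto (fun r => f' r - f r / r) (𝓝[>] 0) (𝓝 0) := by
    refine squeeze_zero_norm' ?_ (tendsto_nhdsWithin_of_tendsto_nhds
      (by simpa using (tendsto_id (x := 𝓝 (0 : ℝ))).const_mul C))
    filter_upwards [Ioo_mem_nhdsGT hb] with r hr
    have hr0 := hr.1.ne'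
    have := abs_sub_mul_deriv_le hf hf' hC h0 ⟨hr.1, hr.2.le⟩
    rw [Real.norm_eq_abs, show f' r - f r / r = -((f r - r * f' r) / r) by field_simp; ring,
      abs_neg, abs_div, abs_of_pos hr.1, div_le_iff₀ hr.1]
    simpa [pow_two, mul_assoc] using this
  simpa using hclose.add h1

end SecondOrder

section Comparison

variable {κ b L : ℝ} {K G G' : ℝ → ℝ}

lemma jacobi_wronskian_nonneg (hκ : 0 < κ) {ρ : ℝ} (hρ : ρ ∈ Ioc 0 b)
    (hρπ : √κ * ρ ≤ Real.pi)
    (hG : ∀ r ∈ Ioc 0 b, HasDerivWithinAt G (G' r) (Ioc 0 b) r)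
    (hG' : ∀ r ∈ Ioc 0 b, HasDerivWithinAt G' (-(K r * G r)) (Ioc 0 b) r)
    (hK : ∀ r ∈ Ioc 0 b, K r ≤ κ) (hpos : ∀ r ∈ Ioo 0 ρ, 0 ≤ G r)
    (h0 : Tendsto G (𝓝[>] 0) (𝓝 0)) (hL : Tendsto G' (𝓝[>] 0) (𝓝 L)) :
    0 ≤ G' ρ * sn κ ρ - G ρ * cs κ ρ := by
  have hsub : Ioc 0 ρ ⊆ Ioc 0 b := Ioc_subset_Ioc_right hρ.2
  have hnhds : ∀ r ∈ Ioo 0 ρ, Ioc 0 b ∈ 𝓝 r := fun r hr => Ioc_mem_nhds hr.1 (hr.2.trans_le hρ.2)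
  refine le_of_tendsto_of_hasDerivAt_nonneg (f := fun r => G' r * sn κ r - G r * cs κ r)
    (f' := fun r => (κ - K r) * (G r * sn κ r))
    ?_ (fun r hr => ?_) (fun r hr => ?_) ?_ ⟨hρ.1, le_rfl⟩
  · have hGc : ContinuousOn G (Ioc 0 b) := fun r hr => (hG r hr).continuousWithinAt
    have hG'c : ContinuousOn G' (Ioc 0 b) := fun r hr => (hG' r hr).continuousWithinAt
    exact ((hG'c.mono hsub).mul (continuous_sn hκ).continuousOn).sub
      ((hGc.mono hsub).mul continuous_cs.continuousOn)
  · refine (((hG' r (hsub (Ioo_subset_Ioc_self hr))).hasDerivAt (hnhds r hr)).mul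
      (hasDerivAt_sn hκ r)).sub
      (((hG r (hsub (Ioo_subset_Ioc_self hr))).hasDerivAt (hnhds r hr)).mul
      (hasDerivAt_cs hκ r)) |>.congr_deriv ?_
    ring
  · exact mul_nonneg (sub_nonneg.2 (hK r (hsub (Ioo_subset_Ioc_self hr))))
      (mul_nonneg (hpos r hr) (sn_pos hκ hr.1
        ((mul_lt_mul_of_pos_left hr.2 (Real.sqrt_pos.2 hκ)).trans_le hρπ)).le)
  · simpa [sn, cs] using (hL.mul ((continuous_sn hκ).tendsto 0 |>.mono_left nhdsWithin_le_nhds)).sub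
      (h0.mul (continuous_cs.tendsto 0 |>.mono_left nhdsWithin_le_nhds))

lemma sn_le_of_jacobi (hκ : 0 < κ) {ρ : ℝ} (hρ : ρ ∈ Ioc 0 b) (hρπ : √κ * ρ < Real.pi)
    (hG : ∀ r ∈ Ioc 0 b, HasDerivWithinAt G (G' r) (Ioc 0 b) r)
    (hG' : ∀ r ∈ Ioc 0 b, HasDerivWithinAt G' (-(K r * G r)) (Ioc 0 b) r)
    (hK : ∀ r ∈ Ioc 0 b, K r ≤ κ) (hpos : ∀ r ∈ Ioo 0 ρ, 0 ≤ G r)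
    (h0 : Tendsto G (𝓝[>] 0) (𝓝 0)) (hL : Tendsto G' (𝓝[>] 0) (𝓝 L))
    (h1 : Tendsto (fun r => G r / r) (𝓝[>] 0) (𝓝 1)) : sn κ ρ ≤ G ρ := by
  have hsub : Ioc 0 ρ ⊆ Ioc 0 b := Ioc_subset_Ioc_right hρ.2
  have hπ : ∀ r ∈ Ioc 0 ρ, √κ * r < Real.pi := fun r hr =>
    (mul_le_mul_of_nonneg_left hr.2 (Real.sqrt_nonneg κ)).trans_lt hρπ
  have hsn : ∀ r ∈ Ioc 0 ρ, 0 < sn κ r := fun r hr => sn_pos hκ hr.1 (hπ r hr)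
  have hGc : ContinuousOn G (Ioc 0 b) := fun r hr => (hG r hr).continuousWithinAt
  -- `G / sn` is nondecreasing, since its derivative is the Wronskian divided by `sn ^ 2`
  have hquot : 1 ≤ G ρ / sn κ ρ := by
    refine le_of_tendsto_of_hasDerivAt_nonneg (f := fun r => G r / sn κ r)
      ((hGc.mono hsub).div (continuous_sn hκ).continuousOn fun r hr => (hsn r hr).ne')
      (fun r hr => ((hG r (hsub (Ioo_subset_Ioc_self hr))).hasDerivAt
        (Ioc_mem_nhds hr.1 (hr.2.trans_le hρ.2))).div (hasDerivAt_sn hκ r)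
        (hsn r (Ioo_subset_Ioc_self hr)).ne')
      (fun r hr => div_nonneg (jacobi_wronskian_nonneg hκ (hsub (Ioo_subset_Ioc_self hr))
        (hπ r (Ioo_subset_Ioc_self hr)).le hG hG' hK (fun t ht => hpos t ⟨ht.1, ht.2.trans hr.2⟩)
        h0 hL) (sq_nonneg _)) ?_ ⟨hρ.1, le_rfl⟩
    have hlim := h1.div (tendsto_sn_div_self hκ) one_ne_zero
    rw [div_one] at hlim
    refine hlim.congr' ?_
    filter_upwards [self_mem_nhdsWithin] with r (hr : 0 < r)
    exact div_div_div_cancel_right₀ hr.ne' _ _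
  exact (one_le_div (hsn ρ ⟨hρ.1, le_rfl⟩)).1 hquot

lemma pos_of_jacobi_s13 (hκ : 0 < κ) (hbπ : √κ * b < Real.pi)
    (hG : ∀ r ∈ Ioc 0 b, HasDerivWithinAt G (G' r) (Ioc 0 b) r)
    (hG' : ∀ r ∈ Ioc 0 b, HasDerivWithinAt G' (-(K r * G r)) (Ioc 0 b) r)
    (hK : ∀ r ∈ Ioc 0 b, K r ≤ κ) (h0 : Tendsto G (𝓝[>] 0) (𝓝 0))
    (hL : Tendsto G' (𝓝[>] 0) (𝓝 L)) (h1 : Tendsto (fun r => G r / r) (𝓝[>] 0) (𝓝 1))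
    {r : ℝ} (hr : r ∈ Ioc 0 b) : 0 < G r := by
  refine pos_of_forall_Ioo_pos (fun r hr => (hG r hr).continuousWithinAt) ?_ (fun ρ hρ hpos => ?_) hr
  · filter_upwards [h1.eventually (lt_mem_nhds one_pos), self_mem_nhdsWithin] with r hGr hr
    exact (div_pos_iff_of_pos_right hr).1 hGr
  · have hρπ : √κ * ρ < Real.pi :=
      (mul_le_mul_of_nonneg_left hρ.2 (Real.sqrt_nonneg κ)).trans_lt hbπ
    exact (sn_pos hκ hρ.1 hρπ).trans_le
      (sn_le_of_jacobi hκ hρ hρπ hG hG' hK (fun r hr => (hpos r hr).le) h0 hL h1)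

lemma cs_le_deriv_of_jacobi (hκ : 0 < κ) (hb : 0 < b) (hbπ : √κ * b ≤ Real.pi / 2)
    (hG : ∀ r ∈ Ioc 0 b, HasDerivWithinAt G (G' r) (Ioc 0 b) r)
    (hG' : ∀ r ∈ Ioc 0 b, HasDerivWithinAt G' (-(K r * G r)) (Ioc 0 b) r)
    (hK : ∀ r ∈ Ioc 0 b, K r ≤ κ) (h0 : Tendsto G (𝓝[>] 0) (𝓝 0))
    (hL : Tendsto G' (𝓝[>] 0) (𝓝 L)) (h1 : Tendsto (fun r => G r / r) (𝓝[>] 0) (𝓝 1)) :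
    cs κ b ≤ G' b := by
  have hbπ' : √κ * b < Real.pi := hbπ.trans_lt (by linarith [Real.pi_pos])
  have hpos : ∀ r ∈ Ioo 0 b, 0 ≤ G r := fun r hr =>
    (pos_of_jacobi_s13 hκ hbπ' hG hG' hK h0 hL h1 (Ioo_subset_Ioc_self hr)).le
  have hW := jacobi_wronskian_nonneg hκ ⟨hb, le_rfl⟩ hbπ'.le hG hG' hK hpos h0 hL
  have hsnG := sn_le_of_jacobi hκ ⟨hb, le_rfl⟩ hbπ' hG hG' hK hpos h0 hL h1
  have hcs := cs_nonneg (κ := κ) hb.le hbπ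
  -- `G' sn ≥ G cs ≥ sn cs`, and `sn > 0`
  exact le_of_mul_le_mul_right (by nlinarith [mul_nonneg (sub_nonneg.2 hsnG) hcs])
    (sn_pos hκ hb hbπ')

end Comparison

lemma sqrt_mul_le_pi_div_two {H r : ℝ} (hH : 0 ≤ H) (hr : 0 ≤ r)
    (hHr : H * r ^ 2 ≤ Real.pi ^ 2 / 4) : √H * r ≤ Real.pi / 2 := by
  refine (pow_le_pow_iff_left₀ (by positivity) (by positivity) two_ne_zero).1 ?_
  rw [mul_pow, Real.sq_sqrt hH]
  linarith

/-- The Gauss–Bonnet-type estimate from the proof of Lemma 4.8 of the paper: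
`G'(r₀) ≥ cos(√H r₀)` and `∫₀^{r₀} K G = 1 - G'(r₀) ≤ 1 - cos(√H r₀)`. -/
theorem jacobi_derivative_bound (H r₀ : ℝ) (hH : 0 < H) (hr₀ : 0 < r₀)
    (hHr : H * r₀ ^ 2 ≤ Real.pi ^ 2 / 4)
    (K G G' : ℝ → ℝ)
    (hKc : ContinuousOn K (Ioc 0 r₀))
    (hKb : ∀ r ∈ Ioc (0:ℝ) r₀, |K r| ≤ H)
    (hG' : ∀ r ∈ Ioc (0:ℝ) r₀, HasDerivWithinAt G (G' r) (Ioc 0 r₀) r)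
    (hG'' : ∀ r ∈ Ioc (0:ℝ) r₀, HasDerivWithinAt G' (-(K r * G r)) (Ioc 0 r₀) r)
    (h0 : Filter.Tendsto G (nhdsWithin 0 (Ioi 0)) (nhds 0))
    (h1 : Filter.Tendsto (fun r => G r / r) (nhdsWithin 0 (Ioi 0)) (nhds 1)) :
    Real.cos (Real.sqrt H * r₀) ≤ G' r₀ ∧
    (∫ r in (0:ℝ)..r₀, K r * G r) = 1 - G' r₀ ∧
    (∫ r in (0:ℝ)..r₀, K r * G r) ≤ 1 - Real.cos (Real.sqrt H * r₀) := by
  have hGc : ContinuousOn G (Ioc 0 r₀) := fun r hr => (hG' r hr).continuousWithinAt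
  obtain ⟨C, hC⟩ := exists_bound_of_continuousOn_Ioc hGc h0
  have hKG : ∀ r ∈ Ioc 0 r₀, |-(K r * G r)| ≤ H * C := fun r hr => by
    rw [abs_neg, abs_mul]
    exact mul_le_mul (hKb r hr) (hC r hr) (abs_nonneg _) hH.le
  have hlim : Tendsto G' (𝓝[>] 0) (𝓝 1) := tendsto_deriv_of_tendsto_div_self hr₀ hG' hG'' hKG h0 h1
  have hint : ∫ r in (0:ℝ)..r₀, K r * G r = 1 - G' r₀ := by
    have := integral_eq_sub_of_tendsto_nhdsGT hr₀ hG'' (hKc.mul hGc).neg hKG hlim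
    rw [intervalIntegral.integral_neg] at this
    linarith
  have hcos : Real.cos (√H * r₀) ≤ G' r₀ :=
    cs_le_deriv_of_jacobi hH hr₀ (sqrt_mul_le_pi_div_two hH.le hr₀.le hHr) hG' hG''
      (fun r hr => (abs_le.1 (hKb r hr)).2) h0 hlim h1
  exact ⟨hcos, hint, by linarith⟩
end
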